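/- arXiv:1310.7207 — 8 statements merged into one kernel-verified Lean document; each statement's English description precedes it below -/
import Mathlib

section
/- Let S be a t-semiarc in a projective plane of order q with t ≤ q - 2, and suppose S is contained in the union of two lines ℓ and ℓ'. Then the intersection point ℓ ∩ ℓ' is not in S, and |ℓ ∩ S| = |ℓ' ∩ S| = q - t. -/
open Configuration
open scoped Classical

section Aux
variable {P L : Type*} [Membership P L] [Fintype P] [Fintype L]
  [Configuration.ProjectivePlane P L]

open Configuration.ProjectivePlane Configuration.HasPoints Configuration.HasLines
  Configuration.Nondegenerate

lemma line_ncard (q : ℕ) (hq : Configuration.ProjectivePlane.order P L = q) (l : L) :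
    ({x : P | x ∈ l}).ncard = q + 1 := by
  have h := pointCount_eq P l
  rw [hq] at h
  rw [← h, pointCount, ← Nat.card_coe_set_eq]
  rfl

lemma point_ncard (q : ℕ) (hq : Configuration.ProjectivePlane.order P L = q) (p : P) :
    ({l : L | p ∈ l}).ncard = q + 1 := by
  have h := lineCount_eq L p
  rw [hq] at h
  rw [← h, lineCount, ← Nat.card_coe_set_eq]
  rfl

lemma tangent_count (q : ℕ) (hq : Configuration.ProjectivePlane.order P L = q)
    (S : Set P) (ℓ ℓ' : L) (hne : ℓ ≠ ℓ')
    (hsub : S ⊆ {x : P | x ∈ ℓ} ∪ {x : P | x ∈ ℓ'})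
    (c : P) (hcl : c ∈ ℓ) (hcl' : c ∈ ℓ') (hcS : c ∉ S)
    (p : P) (hpS : p ∈ S) (hpl : p ∈ ℓ) (hpl' : p ∉ ℓ') :
    {l : L | {x : P | x ∈ l} ∩ S = {p}}.ncard
      = (if {x : P | x ∈ ℓ} ∩ S = {p} then 1 else 0)
        + (q - ({x : P | x ∈ ℓ'} ∩ S).ncard) := by
  classical
  set D : Set P := {x : P | x ∈ ℓ' ∧ x ≠ c ∧ x ∉ S} with hD
  have hpx : ∀ x ∈ D, p ≠ x := fun x hx h => hpl' (h ▸ hx.1)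
  set g : P → L := fun x => if h : p ≠ x then Configuration.HasLines.mkLine h else ℓ with hg
  have hgmem : ∀ x ∈ D, p ∈ g x ∧ x ∈ g x := by
    intro x hx
    simp only [hg, dif_pos (hpx x hx)]
    exact Configuration.HasLines.mkLine_ax (hpx x hx)
  -- g x ≠ ℓ and g x ≠ ℓ' for x ∈ D
  have hgne : ∀ x ∈ D, g x ≠ ℓ := by
    intro x hx h
    have hxl : x ∈ ℓ := h ▸ (hgmem x hx).2
    rcases eq_or_eq hxl hcl hx.1 hcl' with h' | h'
    · exact hx.2.1 h'
    · exact hne h'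
  have hgne' : ∀ x ∈ D, g x ≠ ℓ' := by
    intro x hx h
    exact hpl' (h ▸ (hgmem x hx).1)
  -- tangency of g x
  have hgtan : ∀ x ∈ D, {y : P | y ∈ g x} ∩ S = {p} := by
    intro x hx
    apply Set.eq_singleton_iff_unique_mem.mpr
    refine ⟨⟨(hgmem x hx).1, hpS⟩, ?_⟩
    rintro y ⟨hyl0, hyS⟩
    have hyl : y ∈ g x := hyl0
    rcases hsub hyS with hy | hy
    · have hy' : y ∈ ℓ := hy
      rcases eq_or_eq (p₁ := y) (p₂ := p) hyl (hgmem x hx).1 hy' hpl with h | h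
      · exact h
      · exact absurd h (hgne x hx)
    · have hy' : y ∈ ℓ' := hy
      rcases eq_or_eq (p₁ := y) (p₂ := x) hyl (hgmem x hx).2 hy' hx.1 with h | h
      · exact absurd (h ▸ hyS) hx.2.2
      · exact absurd h (hgne' x hx)
  have hinj : Set.InjOn g D := by
    intro x hx x' hx' h
    rcases eq_or_eq (p₁ := x) (p₂ := x') (hgmem x hx).2 (h ▸ (hgmem x' hx').2) hx.1 hx'.1
      with h' | h'
    · exact h'
    · exact absurd h' (hgne' x hx)
  -- main set equality
  have hset : {l : L | {x : P | x ∈ l} ∩ S = {p}}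
      = (if {x : P | x ∈ ℓ} ∩ S = {p} then {ℓ} else (∅ : Set L)) ∪ g '' D := by
    ext l
    constructor
    · intro hl
      simp only [Set.mem_setOf_eq] at hl
      by_cases hlℓ : l = ℓ
      · subst hlℓ
        rw [if_pos hl]
        exact Set.mem_union_left _ rfl
      · have hpmem : p ∈ l := by
          have : p ∈ ({x : P | x ∈ l} ∩ S) := hl ▸ rfl
          exact this.1
        have hlℓ' : l ≠ ℓ' := fun h => hpl' (h ▸ hpmem)
        set x : P := Configuration.HasPoints.mkPoint hlℓ' with hx
        have hxl : x ∈ l := (Configuration.HasPoints.mkPoint_ax (P := P) hlℓ').1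
        have hxl' : x ∈ ℓ' := (Configuration.HasPoints.mkPoint_ax (P := P) hlℓ').2
        have hxp : x ≠ p := fun h => hpl' (h ▸ hxl')
        have hxc : x ≠ c := by
          intro h
          rcases eq_or_eq (p₁ := p) (p₂ := x) hpmem hxl hpl (h ▸ hcl) with h' | h'
          · exact hxp h'.symm
          · exact hlℓ h'
        have hxS : x ∉ S := by
          intro h
          have : x ∈ ({x : P | x ∈ l} ∩ S) := ⟨hxl, h⟩
          rw [hl] at this
          exact hxp this
        have hxD : x ∈ D := ⟨hxl', hxc, hxS⟩
        refine Set.mem_union_right _ ⟨x, hxD, ?_⟩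
        -- g x = l
        rcases eq_or_eq (p₁ := p) (p₂ := x) (hgmem x hxD).1 (hgmem x hxD).2 hpmem hxl
          with h' | h'
        · exact absurd h'.symm hxp
        · exact h'
    · intro hl
      rcases hl with hl | ⟨x, hx, rfl⟩
      · by_cases hflag : {x : P | x ∈ ℓ} ∩ S = {p}
        · rw [if_pos hflag] at hl
          rw [Set.mem_singleton_iff.mp hl]
          exact hflag
        · rw [if_neg hflag] at hl
          exact absurd hl (Set.notMem_empty _)
      · exact hgtan x hx
  -- cardinalities
  have hcard_D : D.ncard = q - ({x : P | x ∈ ℓ'} ∩ S).ncard := by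
    have hDeq : D = ({x : P | x ∈ ℓ'} \ {c}) \ ({x : P | x ∈ ℓ'} ∩ S) := by
      ext x
      simp only [hD, Set.mem_setOf_eq, Set.mem_diff, Set.mem_singleton_iff, Set.mem_inter_iff]
      constructor
      · rintro ⟨h1, h2, h3⟩; exact ⟨⟨h1, h2⟩, fun h => h3 h.2⟩
      · rintro ⟨⟨h1, h2⟩, h3⟩; exact ⟨h1, h2, fun h => h3 ⟨h1, h⟩⟩
    have hsub' : ({x : P | x ∈ ℓ'} ∩ S) ⊆ ({x : P | x ∈ ℓ'} \ {c}) := by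
      rintro x ⟨h1, h2⟩
      exact ⟨h1, fun h => hcS ((Set.mem_singleton_iff.mp h) ▸ h2)⟩
    have h1 : ({x : P | x ∈ ℓ'} \ {c}).ncard = q := by
      rw [Set.ncard_diff_singleton_of_mem (show c ∈ {x : P | x ∈ ℓ'} from hcl')
        , line_ncard q hq]
      simp
    rw [hDeq, Set.ncard_diff hsub' (Set.toFinite _), h1]
  rw [hset, Set.ncard_union_eq ?_ ?_ ?_, Set.ncard_image_of_injOn hinj, hcard_D]
  · congr 1
    by_cases hflag : {x : P | x ∈ ℓ} ∩ S = {p} <;> simp [hflag]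
  · rw [Set.disjoint_left]
    intro l hl hl'
    rcases hl' with ⟨x, hx, rfl⟩
    by_cases hflag : {x : P | x ∈ ℓ} ∩ S = {p}
    · rw [if_pos hflag] at hl
      exact hgne x hx (Set.mem_singleton_iff.mp hl)
    · rw [if_neg hflag] at hl
      exact Set.notMem_empty _ hl
  · exact Set.toFinite _
  · exact Set.toFinite _


lemma exists_on_other (q t : ℕ) (hq : Configuration.ProjectivePlane.order P L = q)
    (hq2 : 2 ≤ q) (ht : t ≤ q - 2)
    (S : Set P) (htan : ∀ p ∈ S, Nat.card {l : L | {x : P | x ∈ l} ∩ S = {p}} = t)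
    (ℓ ℓ' : L) (hne : ℓ ≠ ℓ')
    (hsub : S ⊆ {x : P | x ∈ ℓ} ∪ {x : P | x ∈ ℓ'})
    (c : P) (hcl : c ∈ ℓ) (hcl' : c ∈ ℓ') (hcS : c ∉ S)
    (p : P) (hpS : p ∈ S) (hpl : p ∈ ℓ) (hpl' : p ∉ ℓ') :
    ∃ p', p' ∈ S ∧ p' ∈ ℓ' ∧ p' ∉ ℓ := by
  have heq := tangent_count q hq S ℓ ℓ' hne hsub c hcl hcl' hcS p hpS hpl hpl'
  have ht' : {l : L | {x : P | x ∈ l} ∩ S = {p}}.ncard = t := by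
    rw [← htan p hpS, Nat.card_coe_set_eq]
  rw [ht'] at heq
  have hbpos : 0 < ({x : P | x ∈ ℓ'} ∩ S).ncard := by
    by_contra h
    have hb0 : ({x : P | x ∈ ℓ'} ∩ S).ncard = 0 := by omega
    rw [hb0] at heq
    split_ifs at heq <;> omega
  obtain ⟨x, hx⟩ := Set.nonempty_of_ncard_ne_zero (by omega :
    ({x : P | x ∈ ℓ'} ∩ S).ncard ≠ 0)
  have hxl' : x ∈ ℓ' := hx.1
  refine ⟨x, hx.2, hxl', fun hxl => hcS ?_⟩
  have : x = c := (eq_or_eq hxl hcl hxl' hcl').resolve_right hne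
  exact this ▸ hx.2

lemma secant_card (q t : ℕ) (hq : Configuration.ProjectivePlane.order P L = q)
    (hq2 : 2 ≤ q) (ht : t ≤ q - 2)
    (S : Set P) (htan : ∀ p ∈ S, Nat.card {l : L | {x : P | x ∈ l} ∩ S = {p}} = t)
    (ℓ ℓ' : L) (hne : ℓ ≠ ℓ')
    (hsub : S ⊆ {x : P | x ∈ ℓ} ∪ {x : P | x ∈ ℓ'})
    (c : P) (hcl : c ∈ ℓ) (hcl' : c ∈ ℓ') (hcS : c ∉ S)
    (p : P) (hpS : p ∈ S) (hpl : p ∈ ℓ) (hpl' : p ∉ ℓ')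
    (p₁ : P) (hp₁S : p₁ ∈ S) (hp₁l' : p₁ ∈ ℓ') (hp₁l : p₁ ∉ ℓ) :
    ({x : P | x ∈ ℓ'} ∩ S).ncard = q - t := by
  have hsub' : S ⊆ {x : P | x ∈ ℓ'} ∪ {x : P | x ∈ ℓ} := fun x hx =>
    (hsub hx).elim Or.inr Or.inl
  have heq1 := tangent_count q hq S ℓ ℓ' hne hsub c hcl hcl' hcS p hpS hpl hpl'
  have heq2 := tangent_count q hq S ℓ' ℓ hne.symm hsub' c hcl' hcl hcS p₁ hp₁S hp₁l' hp₁l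
  have ht1 : {l : L | {x : P | x ∈ l} ∩ S = {p}}.ncard = t := by
    rw [← htan p hpS, Nat.card_coe_set_eq]
  have ht2 : {l : L | {x : P | x ∈ l} ∩ S = {p₁}}.ncard = t := by
    rw [← htan p₁ hp₁S, Nat.card_coe_set_eq]
  rw [ht1] at heq1
  rw [ht2] at heq2
  have hble : ({x : P | x ∈ ℓ'} ∩ S).ncard ≤ q := by
    have hsub2 : ({x : P | x ∈ ℓ'} ∩ S) ⊆ ({x : P | x ∈ ℓ'} \ {c}) := by
      rintro x ⟨h1, h2⟩
      exact ⟨h1, fun h => hcS ((Set.mem_singleton_iff.mp h) ▸ h2)⟩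
    have h1 : ({x : P | x ∈ ℓ'} \ {c}).ncard = q := by
      rw [Set.ncard_diff_singleton_of_mem (show c ∈ {x : P | x ∈ ℓ'} from hcl')
        , line_ncard q hq]
      simp
    calc ({x : P | x ∈ ℓ'} ∩ S).ncard ≤ ({x : P | x ∈ ℓ'} \ {c}).ncard :=
          Set.ncard_le_ncard hsub2 (Set.toFinite _)
      _ = q := h1
  have hale : ({x : P | x ∈ ℓ} ∩ S).ncard ≤ q := by
    have hsub2 : ({x : P | x ∈ ℓ} ∩ S) ⊆ ({x : P | x ∈ ℓ} \ {c}) := by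
      rintro x ⟨h1, h2⟩
      exact ⟨h1, fun h => hcS ((Set.mem_singleton_iff.mp h) ▸ h2)⟩
    have h1 : ({x : P | x ∈ ℓ} \ {c}).ncard = q := by
      rw [Set.ncard_diff_singleton_of_mem (show c ∈ {x : P | x ∈ ℓ} from hcl)
        , line_ncard q hq]
      simp
    calc ({x : P | x ∈ ℓ} ∩ S).ncard ≤ ({x : P | x ∈ ℓ} \ {c}).ncard :=
          Set.ncard_le_ncard hsub2 (Set.toFinite _)
      _ = q := h1
  have hbpos : 0 < ({x : P | x ∈ ℓ'} ∩ S).ncard :=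
    (Set.ncard_pos (Set.toFinite _)).mpr ⟨p₁, hp₁l', hp₁S⟩
  have hapos : 0 < ({x : P | x ∈ ℓ} ∩ S).ncard :=
    (Set.ncard_pos (Set.toFinite _)).mpr ⟨p, hpl, hpS⟩
  split_ifs at heq1 with h1
  · have ha1 : ({x : P | x ∈ ℓ} ∩ S).ncard = 1 := by rw [h1]; simp
    split_ifs at heq2 with h2
    · have hb1 : ({x : P | x ∈ ℓ'} ∩ S).ncard = 1 := by rw [h2]; simp
      omega
    · omega
  · split_ifs at heq2 with h2
    · have hb1 : ({x : P | x ∈ ℓ'} ∩ S).ncard = 1 := by rw [h2]; simp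
      omega
    · omega

end Aux

/-- A `t`-semiarc: a nonempty pointset such that through each of its points
there pass exactly `t` tangent lines (lines meeting the set only in that point). -/
def IsSemiarc (P : Type*) (L : Type*) [Membership P L] (t : ℕ) (S : Set P) : Prop :=
  S.Nonempty ∧ ∀ p ∈ S, Nat.card {l : L | {x : P | x ∈ l} ∩ S = {p}} = t

/-- A `k`-secant: a line meeting `S` in exactly `k` points. -/
def IsSecant (P : Type*) {L : Type*} [Membership P L] (k : ℕ) (S : Set P) (l : L) : Prop :=
  ({x : P | x ∈ l} ∩ S).ncard = k

theorem semiarc_in_two_lines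
    {P L : Type*} [Membership P L] [Fintype P] [Fintype L]
    [Configuration.ProjectivePlane P L]
    (q t : ℕ) (hq : Configuration.ProjectivePlane.order P L = q)
    (ht : t ≤ q - 2)
    (S : Set P) (hS : IsSemiarc P L t S)
    (ℓ ℓ' : L) (hne : ℓ ≠ ℓ')
    (hsub : S ⊆ {x : P | x ∈ ℓ} ∪ {x : P | x ∈ ℓ'}) :
    (∀ p : P, p ∈ ℓ → p ∈ ℓ' → p ∉ S) ∧
      ({x : P | x ∈ ℓ} ∩ S).ncard = q - t ∧ ({x : P | x ∈ ℓ'} ∩ S).ncard = q - t := by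
  classical
  obtain ⟨hSne, htan⟩ := hS
  set c : P := Configuration.HasPoints.mkPoint hne with hc
  have hcl : c ∈ ℓ := (Configuration.HasPoints.mkPoint_ax (P := P) hne).1
  have hcl' : c ∈ ℓ' := (Configuration.HasPoints.mkPoint_ax (P := P) hne).2
  have hq2 : 2 ≤ q := by
    have h := Configuration.ProjectivePlane.one_lt_order P L
    omega
  have hunique : ∀ p : P, p ∈ ℓ → p ∈ ℓ' → p = c := fun p h1 h2 =>
    (Configuration.Nondegenerate.eq_or_eq h1 hcl h2 hcl').resolve_right hne
  have hsub' : S ⊆ {x : P | x ∈ ℓ'} ∪ {x : P | x ∈ ℓ} := fun x hx =>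
    (hsub hx).elim Or.inr Or.inl
  -- c ∉ S
  have hcS : c ∉ S := by
    intro hcSmem
    have hsubT : ({l : L | c ∈ l} \ {ℓ, ℓ'}) ⊆ {l : L | {x : P | x ∈ l} ∩ S = {c}} := by
      rintro l ⟨hcl2, hl2⟩
      simp only [Set.mem_insert_iff, Set.mem_singleton_iff, not_or] at hl2
      have hcl2' : c ∈ l := hcl2
      apply Set.eq_singleton_iff_unique_mem.mpr
      refine ⟨⟨hcl2', hcSmem⟩, ?_⟩
      rintro y ⟨hyl0, hyS⟩
      have hyl : y ∈ l := hyl0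
      rcases hsub hyS with hy | hy
      · exact (Configuration.Nondegenerate.eq_or_eq hyl hcl2'
          (show y ∈ ℓ from hy) hcl).resolve_right hl2.1
      · exact (Configuration.Nondegenerate.eq_or_eq hyl hcl2'
          (show y ∈ ℓ' from hy) hcl').resolve_right hl2.2
    have hT : {l : L | {x : P | x ∈ l} ∩ S = {c}}.ncard = t := by
      rw [← htan c hcSmem, Nat.card_coe_set_eq]
    have hle := Set.ncard_le_ncard hsubT (Set.toFinite _)
    have hbig := Set.ncard_le_ncard_diff_add_ncard {l : L | c ∈ l} {ℓ, ℓ'} (Set.toFinite _)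
    have hpr : ({ℓ, ℓ'} : Set L).ncard ≤ 2 := by
      apply le_trans (Set.ncard_insert_le _ _)
      simp
    rw [point_ncard q hq] at hbig
    omega
  have hmem_ne : ∀ p ∈ S, (p ∈ ℓ ∧ p ∉ ℓ') ∨ (p ∈ ℓ' ∧ p ∉ ℓ) := by
    intro p hp
    rcases hsub hp with h | h
    · exact Or.inl ⟨h, fun h' => hcS (hunique p h h' ▸ hp)⟩
    · exact Or.inr ⟨h, fun h' => hcS (hunique p h' h ▸ hp)⟩
  obtain ⟨p₀, hp₀⟩ := hSne
  refine ⟨fun p h1 h2 hpS => hcS (hunique p h1 h2 ▸ hpS), ?_⟩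
  have key : ∃ p p₁ : P, p ∈ S ∧ p ∈ ℓ ∧ p ∉ ℓ' ∧ p₁ ∈ S ∧ p₁ ∈ ℓ' ∧ p₁ ∉ ℓ := by
    rcases hmem_ne p₀ hp₀ with ⟨h1, h2⟩ | ⟨h1, h2⟩
    · obtain ⟨p₁, hA, hB, hC⟩ := exists_on_other q t hq hq2 ht S htan ℓ ℓ' hne hsub
        c hcl hcl' hcS p₀ hp₀ h1 h2
      exact ⟨p₀, p₁, hp₀, h1, h2, hA, hB, hC⟩
    · obtain ⟨p₁, hA, hB, hC⟩ := exists_on_other q t hq hq2 ht S htan ℓ' ℓ hne.symm hsub'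
        c hcl' hcl hcS p₀ hp₀ h1 h2
      exact ⟨p₁, p₀, hA, hB, hC, hp₀, h1, h2⟩
  obtain ⟨p, p₁, hpS, hpl, hpl', hp₁S, hp₁l', hp₁l⟩ := key
  constructor
  · exact secant_card q t hq hq2 ht S htan ℓ' ℓ hne.symm hsub' c hcl' hcl hcS
      p₁ hp₁S hp₁l' hp₁l p hpS hpl hpl'
  · exact secant_card q t hq hq2 ht S htan ℓ ℓ' hne hsub c hcl hcl' hcS
      p hpS hpl hpl' p₁ hp₁S hp₁l' hp₁l
end

section
/- Let S be a t-semiarc of size 2(q - t) in a projective plane of order q with t ≤ q - 2, and let ℓ be a (q - t)-secant of S. Then S \ ℓ is contained in a line ℓ', the intersection point ℓ ∩ ℓ' is not in S, and |ℓ' ∩ S| = q - t; that is, S is the symmetric difference of two lines with t further points removed from each line. -/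
open Configuration

theorem semiarc_symmDiff_of_two_lines
    {P L : Type*} [Membership P L] [Fintype P] [Fintype L]
    [Configuration.ProjectivePlane P L]
    (q t : ℕ) (hq : Configuration.ProjectivePlane.order P L = q)
    (ht : t ≤ q - 2)
    (S : Set P) (hS : IsSemiarc P L t S) (hcard : S.ncard = 2 * (q - t))
    (ℓ : L) (hℓ : IsSecant P (q - t) S ℓ) :
    ∃ ℓ' : L, S \ {x : P | x ∈ ℓ} ⊆ {x : P | x ∈ ℓ'} ∧
      (∀ p : P, p ∈ ℓ → p ∈ ℓ' → p ∉ S) ∧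
      ({x : P | x ∈ ℓ'} ∩ S).ncard = q - t := by
  classical
  obtain ⟨hSne, htan⟩ := hS
  have hq2 : 2 ≤ q := by
    have := Configuration.ProjectivePlane.one_lt_order P L
    omega
  have hqt2 : 2 ≤ q - t := by omega
  set lset : Set P := {x : P | x ∈ ℓ} with hlset
  set S₂ : Set P := S \ lset with hS₂
  -- uniqueness of lines through two distinct points
  have uniq : ∀ {x y : P} {l₁ l₂ : L}, x ≠ y → x ∈ l₁ → y ∈ l₁ → x ∈ l₂ → y ∈ l₂ →
      l₁ = l₂ := by
    intro x y l₁ l₂ hxy h1 h2 h3 h4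
    rcases Configuration.Nondegenerate.eq_or_eq h1 h2 h3 h4 with h | h
    · exact absurd h hxy
    · exact h
  -- cardinality of S₂
  have hS₂card : S₂.ncard = q - t := by
    have h := Set.ncard_inter_add_ncard_diff_eq_ncard S lset (Set.toFinite S)
    have hint : (S ∩ lset).ncard = q - t := by
      rw [Set.inter_comm]; exact hℓ
    rw [hS₂]
    omega
  -- the tangent count, rephrased with ncard
  have htan' : ∀ p ∈ S, ({l : L | {x : P | x ∈ l} ∩ S = {p}}).ncard = t := by
    intro p hp
    rw [← Nat.card_coe_set_eq]
    exact htan p hp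
  -- tangent lines pass through p
  have htsub : ∀ p : P, {l : L | {x : P | x ∈ l} ∩ S = {p}} ⊆ {l : L | p ∈ l} := by
    intro p l hl
    have : p ∈ {x : P | x ∈ l} ∩ S := by rw [hl]; exact rfl
    exact this.1
  -- number of lines through a point
  have hLT : ∀ p : P, ({l : L | p ∈ l}).ncard = q + 1 := by
    intro p
    have h1 : Nat.card {l : L // p ∈ l} = q + 1 := by
      have := Configuration.ProjectivePlane.lineCount_eq (P := P) (L := L) p
      rw [hq] at this
      exact this
    rw [← Nat.card_coe_set_eq]
    exact h1
  -- count of non-tangent lines through p ∈ S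
  have hNT : ∀ p ∈ S, ({l : L | p ∈ l} \ {l : L | {x : P | x ∈ l} ∩ S = {p}}).ncard
      = q + 1 - t := by
    intro p hp
    rw [Set.ncard_diff (htsub p) (Set.toFinite _), hLT p, htan' p hp]
  -- ℓ is not a tangent line at any point of S (since it meets S in ≥ 2 points)
  have hℓnt : ∀ a : P, ¬ ({x : P | x ∈ ℓ} ∩ S = {a}) := by
    intro a h
    have : ({x : P | x ∈ ℓ} ∩ S).ncard = 1 := by rw [h]; simp
    rw [hℓ] at *; omega
  -- KEY LEMMA: for a point a ∈ ℓ ∩ S, every line through a other than ℓ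
  -- contains at most one point of S₂
  have lemC : ∀ a : P, a ∈ ℓ → a ∈ S → ∀ m : L, a ∈ m → m ≠ ℓ →
      ∀ x ∈ S₂, x ∈ m → ∀ y ∈ S₂, y ∈ m → x = y := by
    intro a haℓ haS
    set A : Set L := ({l : L | a ∈ l} \ {l : L | {x : P | x ∈ l} ∩ S = {a}}) \ {ℓ} with hA
    have hℓmem : ℓ ∈ ({l : L | a ∈ l} \ {l : L | {x : P | x ∈ l} ∩ S = {a}}) :=
      ⟨haℓ, hℓnt a⟩
    have hAcard : A.ncard = q - t := by
      have h1 := Set.ncard_diff_singleton_of_mem hℓmem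
      rw [hA, h1, hNT a haS]
      omega
    -- each x ∈ S₂ determines a line in A
    have hax : ∀ x ∈ S₂, a ≠ x := by
      rintro x ⟨hxS, hxℓ⟩ rfl
      exact hxℓ haℓ
    have hmem : ∀ (x : P) (hx : x ∈ S₂),
        Configuration.HasLines.mkLine (L := L) (hax x hx) ∈ A := by
      intro x hx
      have hxa := hax x hx
      obtain ⟨h1, h2⟩ := Configuration.HasLines.mkLine_ax (L := L) (hax x hx)
      refine ⟨⟨h1, ?_⟩, ?_⟩
      · intro hcon
        have : x ∈ ({a} : Set P) := by
          rw [← hcon]; exact ⟨h2, hx.1⟩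
        exact hxa (this.symm)
      · intro hcon
        apply hx.2
        simpa [hlset] using hcon ▸ h2
    let f : ↥S₂ → ↥A := fun x => ⟨Configuration.HasLines.mkLine (L := L) (hax x.1 x.2), hmem x.1 x.2⟩
    have hsurj : Function.Surjective f := by
      rintro ⟨l, ⟨⟨hal, hlnt⟩, hlℓ⟩⟩
      have hlℓ' : l ≠ ℓ := by simpa using hlℓ
      have : ∃ x, x ∈ {x : P | x ∈ l} ∩ S ∧ x ≠ a := by
        by_contra hcon
        push_neg at hcon
        apply hlnt
        apply Set.eq_singleton_iff_unique_mem.2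
        exact ⟨⟨hal, haS⟩, fun x hx => hcon x hx⟩
      obtain ⟨x, ⟨hxl, hxS⟩, hxa⟩ := this
      have hxℓ : x ∉ lset := by
        intro hxℓ
        exact hlℓ' (uniq (Ne.symm hxa) hal (show x ∈ l from hxl) haℓ (show x ∈ ℓ from hxℓ))
      have hx2 : x ∈ S₂ := ⟨hxS, hxℓ⟩
      refine ⟨⟨x, hx2⟩, ?_⟩
      apply Subtype.ext
      obtain ⟨h1, h2⟩ := Configuration.HasLines.mkLine_ax (L := L) (hax x hx2)
      exact uniq (hax x hx2) h1 h2 hal (show x ∈ l from hxl)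
    have hcards : Nat.card ↥S₂ = Nat.card ↥A := by
      rw [Nat.card_coe_set_eq, Nat.card_coe_set_eq, hS₂card, hAcard]
    have hbij : Function.Bijective f :=
      (Nat.bijective_iff_surjective_and_card f).2 ⟨hsurj, hcards⟩
    intro m ham hmℓ x hx hxm y hy hym
    have hmA : m ∈ A := by
      refine ⟨⟨ham, ?_⟩, by simpa using hmℓ⟩
      intro hcon
      have : x ∈ ({a} : Set P) := by rw [← hcon]; exact ⟨hxm, hx.1⟩
      exact (hax x hx) this.symm
    have hfx : f ⟨x, hx⟩ = ⟨m, hmA⟩ := by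
      apply Subtype.ext
      obtain ⟨h1, h2⟩ := Configuration.HasLines.mkLine_ax (L := L) (hax x hx)
      exact uniq (hax x hx) h1 h2 ham hxm
    have hfy : f ⟨y, hy⟩ = ⟨m, hmA⟩ := by
      apply Subtype.ext
      obtain ⟨h1, h2⟩ := Configuration.HasLines.mkLine_ax (L := L) (hax y hy)
      exact uniq (hax y hy) h1 h2 ham hym
    have := hbij.1 (hfx.trans hfy.symm)
    exact congrArg Subtype.val this
  -- get two distinct points of S₂
  have hS₂2 : 1 < S₂.ncard := by omega
  obtain ⟨p, p', hp, hp', hpp'⟩ := (Set.one_lt_ncard_iff (Set.toFinite S₂)).1 hS₂2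
  set ℓ' : L := Configuration.HasLines.mkLine (L := L) hpp' with hℓ'def
  obtain ⟨hpℓ', hp'ℓ'⟩ := Configuration.HasLines.mkLine_ax (L := L) hpp'
  have hℓ'ℓ : ℓ' ≠ ℓ := by
    intro h
    exact hp.2 (by simpa [hlset] using h ▸ hpℓ')
  -- no point of S on ℓ lies on ℓ'
  have hnoS₁ : ∀ a : P, a ∈ ℓ → a ∈ ℓ' → a ∉ S := by
    intro a haℓ haℓ' haS
    exact hpp' (lemC a haℓ haS ℓ' haℓ' hℓ'ℓ p hp hpℓ' p' hp' hp'ℓ')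
  -- main claim : S₂ ⊆ ℓ'
  have hsub : S₂ ⊆ {x : P | x ∈ ℓ'} := by
    intro x hx
    by_cases hxp : x = p
    · subst hxp; exact hpℓ'
    by_cases hxp' : x = p'
    · subst hxp'; exact hp'ℓ'
    -- count lines through p
    have hppx : p ≠ x := fun h => hxp h.symm
    -- the set of lines from p to points of S ∩ ℓ
    set g : P → L := fun a => if h : p ≠ a then Configuration.HasLines.mkLine h else ℓ
      with hg
    have hgmem : ∀ a : P, a ∈ ℓ → a ∈ S → p ∈ g a ∧ a ∈ g a := by
      intro a haℓ haS
      have hpa : p ≠ a := by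
        rintro rfl
        exact hp.2 haℓ
      rw [hg]
      simp only [dif_pos hpa]
      exact Configuration.HasLines.mkLine_ax (L := L) hpa
    set S₁ : Set P := {x : P | x ∈ ℓ} ∩ S with hS₁
    have hS₁card : S₁.ncard = q - t := hℓ
    have hginj : Set.InjOn g S₁ := by
      rintro a ⟨haℓ, haS⟩ b ⟨hbℓ, hbS⟩ hab
      by_contra hne
      obtain ⟨h1, h2⟩ := hgmem a haℓ haS
      obtain ⟨h3, h4⟩ := hgmem b hbℓ hbS
      rw [hab] at h1 h2
      have : g b = ℓ := uniq hne h2 h4 haℓ hbℓ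
      rw [this] at h3
      exact hp.2 h3
    set B : Set L := g '' S₁ with hB
    have hBcard : B.ncard = q - t := by
      rw [hB, Set.ncard_image_of_injOn hginj, hS₁card]
    set T : Set L := {l : L | {x : P | x ∈ l} ∩ S = {p}} with hT
    have hTcard : T.ncard = t := htan' p hp.1
    -- B and T are disjoint, both inside lines through p
    have hBsub : B ⊆ {l : L | p ∈ l} := by
      rintro _ ⟨a, ⟨haℓ, haS⟩, rfl⟩
      exact (hgmem a haℓ haS).1
    have hTsub : T ⊆ {l : L | p ∈ l} := htsub p
    have hBT : Disjoint B T := by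
      rw [Set.disjoint_left]
      rintro _ ⟨a, ⟨haℓ, haS⟩, rfl⟩ hgT
      have hpa : p ≠ a := by rintro rfl; exact hp.2 haℓ
      have := (hgmem a haℓ haS).2
      have : a ∈ ({p} : Set P) := by
        rw [← hgT]; exact ⟨this, haS⟩
      exact hpa this.symm
    -- the line from p to a point of S₂ \ {p} is neither in B nor in T
    have hrem : ∀ (z : P) (hz : z ∈ S₂) (hpz : p ≠ z),
        Configuration.HasLines.mkLine (L := L) hpz ∈ ({l : L | p ∈ l} \ (B ∪ T)) := by
      intro z hz hpz
      obtain ⟨h1, h2⟩ := Configuration.HasLines.mkLine_ax (L := L) hpz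
      refine ⟨h1, ?_⟩
      rintro (⟨a, ⟨haℓ, haS⟩, hga⟩ | hmT)
      · -- line meets S ∩ ℓ at a; then by lemC it has ≤ 1 point of S₂, contradiction
        obtain ⟨h3, h4⟩ := hgmem a haℓ haS
        rw [hga] at h3 h4
        have hmℓ : Configuration.HasLines.mkLine (L := L) hpz ≠ ℓ := by
          intro h
          rw [h] at h1
          exact hp.2 (show p ∈ lset from h1)
        exact hpz (lemC a haℓ haS _ h4 hmℓ p hp h1 z hz h2)
      · -- tangent line containing two points of S
        have : z ∈ ({p} : Set P) := by
          rw [← hmT]; exact ⟨h2, hz.1⟩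
        exact hpz this.symm
    -- counting: at most one line remains
    have hBTsub : B ∪ T ⊆ {l : L | p ∈ l} := Set.union_subset hBsub hTsub
    have hBTcard : (B ∪ T).ncard = q := by
      rw [Set.ncard_union_eq hBT (Set.toFinite _) (Set.toFinite _), hBcard, hTcard]
      omega
    have hremcard : ({l : L | p ∈ l} \ (B ∪ T)).ncard = 1 := by
      rw [Set.ncard_diff hBTsub (Set.toFinite _), hLT p, hBTcard]
      omega
    obtain ⟨m, hm⟩ := Set.ncard_eq_one.1 hremcard
    have e1 : Configuration.HasLines.mkLine (L := L) hppx = m := by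
      have := hrem x hx hppx
      rw [hm] at this
      exact this
    have e2 : ℓ' = m := by
      have := hrem p' hp' hpp'
      rw [hm] at this
      exact this
    have : x ∈ ℓ' := by
      rw [e2, ← e1]
      exact (Configuration.HasLines.mkLine_ax (L := L) hppx).2
    exact this
  -- conclusion
  refine ⟨ℓ', hsub, hnoS₁, ?_⟩
  have heq : {x : P | x ∈ ℓ'} ∩ S = S₂ := by
    apply Set.eq_of_subset_of_subset
    · rintro x ⟨hxℓ', hxS⟩
      refine ⟨hxS, ?_⟩
      intro hxℓ
      exact hnoS₁ x hxℓ hxℓ' hxS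
    · intro x hx
      exact ⟨hsub hx, hx.1⟩
  rw [heq, hS₂card]
end

section
/- Let q be odd, let C ⊂ GF(q) be the set of non-squares, and let S = {(0:1:s), (s:0:1), (1:s:0) : -s ∈ C} ⊂ PG(2,q). If 0 ≤ r < (q-1)/2 - 1 and S' is obtained from S by deleting exactly r points from each of the three lines [1:0:0], [0:1:0], [0:0:1], then S' is a (2r+1)-semiarc of size 3((q-1)/2 - r) having three ((q-1)/2 - r)-secants. -/
open Configuration Projectivization
open scoped LinearAlgebra.Projectivization

/-- The points of `PG(2,F)`. Via the `Configuration.ofField` instance, the same type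
also serves as the type of lines, with `p ∈ l` meaning that the point `p` lies on
the line `l` (vanishing of the dot product of homogeneous coordinates). -/
abbrev PG (F : Type*) [Field F] := ℙ F (Fin 3 → F)

/-- A `t`-semiarc in `PG(2,F)`: a nonempty pointset such that through each of its
points there pass exactly `t` tangent lines. -/
def IsSemiarcPG {F : Type*} [Field F] (t : ℕ) (S : Set (PG F)) : Prop :=
  S.Nonempty ∧ ∀ p ∈ S, Nat.card {l : PG F | {x : PG F | x ∈ l} ∩ S = {p}} = t

lemma vec_ne_zero {F : Type*} [Field F] (v : Fin 3 → F) (i : Fin 3) (h : v i ≠ 0) :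
    v ≠ 0 := fun hv => h (by simp [hv])

set_option linter.unusedSectionVars false

namespace SemiarcProof
variable {F : Type*} [Field F]

lemma mem_mk_mk {v w : Fin 3 → F} (hv : v ≠ 0) (hw : w ≠ 0) :
    (Projectivization.mk F v hv ∈ Projectivization.mk F w hw) ↔
      v 0 * w 0 + v 1 * w 1 + v 2 * w 2 = 0 := by
  rw [Configuration.ofField.mem_iff, orthogonal_mk]
  constructor <;> intro h <;> · rw [← h]; simp [dotProduct, Fin.sum_univ_three]

lemma mk_eq_mk_iff_cross {v w : Fin 3 → F} (hv : v ≠ 0) (hw : w ≠ 0) :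
    Projectivization.mk F v hv = Projectivization.mk F w hw ↔
      (v 1 * w 2 - v 2 * w 1 = 0 ∧ v 2 * w 0 - v 0 * w 2 = 0 ∧ v 0 * w 1 - v 1 * w 0 = 0) := by
  rw [mk_eq_mk_iff_crossProduct_eq_zero]
  constructor
  · intro h
    exact ⟨by simpa [crossProduct] using congrFun h 0,
           by simpa [crossProduct] using congrFun h 1,
           by simpa [crossProduct] using congrFun h 2⟩
  · rintro ⟨h0, h1, h2⟩
    ext i; fin_cases i <;> simp [crossProduct]
    exacts [h0, h1, h2]

/-- The three families of points of `S`. -/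
def P1 (s : F) : PG F := Projectivization.mk F ![0, 1, s] (vec_ne_zero _ 1 (by simp))
def P2 (s : F) : PG F := Projectivization.mk F ![s, 0, 1] (vec_ne_zero _ 2 (by simp))
def P3 (s : F) : PG F := Projectivization.mk F ![1, s, 0] (vec_ne_zero _ 0 (by simp))

/-- The three coordinate lines. -/
def L1 : PG F := Projectivization.mk F ![1, 0, 0] (vec_ne_zero _ 0 (by simp))
def L2 : PG F := Projectivization.mk F ![0, 1, 0] (vec_ne_zero _ 1 (by simp))
def L3 : PG F := Projectivization.mk F ![0, 0, 1] (vec_ne_zero _ 2 (by simp))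

@[simp] lemma P1_eq_P1 {s t : F} : (P1 s : PG F) = P1 t ↔ s = t := by
  rw [P1, P1, mk_eq_mk_iff_cross]; constructor
  · rintro ⟨h, -, -⟩; simp at h; linear_combination -h
  · rintro rfl; norm_num [Matrix.cons_val_two, Matrix.tail_cons, Matrix.head_cons]

@[simp] lemma P2_eq_P2 {s t : F} : (P2 s : PG F) = P2 t ↔ s = t := by
  rw [P2, P2, mk_eq_mk_iff_cross]; constructor
  · rintro ⟨-, h, -⟩; simp at h; linear_combination -h
  · rintro rfl; norm_num [Matrix.cons_val_two, Matrix.tail_cons, Matrix.head_cons]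

@[simp] lemma P3_eq_P3 {s t : F} : (P3 s : PG F) = P3 t ↔ s = t := by
  rw [P3, P3, mk_eq_mk_iff_cross]; constructor
  · rintro ⟨-, -, h⟩; simp at h; linear_combination -h
  · rintro rfl; norm_num [Matrix.cons_val_two, Matrix.tail_cons, Matrix.head_cons]

@[simp] lemma P1_ne_P2 {s t : F} : (P1 s : PG F) ≠ P2 t := by
  rw [P1, P2]; intro h; rw [mk_eq_mk_iff_cross] at h; obtain ⟨h, -, -⟩ := h; simp at h

@[simp] lemma P1_ne_P3 {s t : F} : (P1 s : PG F) ≠ P3 t := by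
  rw [P1, P3]; intro h; rw [mk_eq_mk_iff_cross] at h; obtain ⟨-, -, h⟩ := h; simp at h

@[simp] lemma P2_ne_P3 {s t : F} : (P2 s : PG F) ≠ P3 t := by
  rw [P2, P3]; intro h; rw [mk_eq_mk_iff_cross] at h; obtain ⟨-, h, -⟩ := h; simp at h

@[simp] lemma P1_mem_L1 (s : F) : (P1 s : PG F) ∈ (L1 : PG F) := by
  rw [P1, L1, mem_mk_mk]; norm_num [Matrix.cons_val_two, Matrix.tail_cons, Matrix.head_cons]
@[simp] lemma P2_mem_L1 {s : F} : (P2 s : PG F) ∈ (L1 : PG F) ↔ s = 0 := by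
  rw [P2, L1, mem_mk_mk]; norm_num [Matrix.cons_val_two, Matrix.tail_cons, Matrix.head_cons]
@[simp] lemma P3_not_mem_L1 (s : F) : (P3 s : PG F) ∉ (L1 : PG F) := by
  rw [P3, L1, mem_mk_mk]; norm_num [Matrix.cons_val_two, Matrix.tail_cons, Matrix.head_cons]
@[simp] lemma P2_mem_L2 (s : F) : (P2 s : PG F) ∈ (L2 : PG F) := by
  rw [P2, L2, mem_mk_mk]; norm_num [Matrix.cons_val_two, Matrix.tail_cons, Matrix.head_cons]
@[simp] lemma P3_mem_L2 {s : F} : (P3 s : PG F) ∈ (L2 : PG F) ↔ s = 0 := by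
  rw [P3, L2, mem_mk_mk]; norm_num [Matrix.cons_val_two, Matrix.tail_cons, Matrix.head_cons]
@[simp] lemma P1_not_mem_L2 (s : F) : (P1 s : PG F) ∉ (L2 : PG F) := by
  rw [P1, L2, mem_mk_mk]; norm_num [Matrix.cons_val_two, Matrix.tail_cons, Matrix.head_cons]
@[simp] lemma P3_mem_L3 (s : F) : (P3 s : PG F) ∈ (L3 : PG F) := by
  rw [P3, L3, mem_mk_mk]; norm_num [Matrix.cons_val_two, Matrix.tail_cons, Matrix.head_cons]
@[simp] lemma P1_mem_L3 {s : F} : (P1 s : PG F) ∈ (L3 : PG F) ↔ s = 0 := by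
  rw [P1, L3, mem_mk_mk]; norm_num [Matrix.cons_val_two, Matrix.tail_cons, Matrix.head_cons]
@[simp] lemma P2_not_mem_L3 (s : F) : (P2 s : PG F) ∉ (L3 : PG F) := by
  rw [P2, L3, mem_mk_mk]; norm_num [Matrix.cons_val_two, Matrix.tail_cons, Matrix.head_cons]

variable [Fintype F] [DecidableEq F]



lemma char_ne_two (hodd : Odd (Fintype.card F)) : ringChar F ≠ 2 := by
  intro h
  have h2 := FiniteField.even_card_of_char_two h
  obtain ⟨k, hk⟩ := hodd
  omega

lemma isSquare_of_not_not {a b : F} (ha : ¬ IsSquare a) (hb : ¬ IsSquare b) :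
    IsSquare (a * b) := by
  have ha0 : a ≠ 0 := fun h => ha (h ▸ ⟨0, by simp⟩)
  have hb0 : b ≠ 0 := fun h => hb (h ▸ ⟨0, by simp⟩)
  have h1 : quadraticChar F a = -1 := quadraticChar_neg_one_iff_not_isSquare.mpr ha
  have h2 : quadraticChar F b = -1 := quadraticChar_neg_one_iff_not_isSquare.mpr hb
  have : quadraticChar F (a * b) = 1 := by rw [map_mul, h1, h2]; ring
  exact (quadraticChar_one_iff_isSquare (mul_ne_zero ha0 hb0)).mp this

omit [Fintype F] [DecidableEq F] in
lemma not_isSquare_mul {a b : F} (ha : IsSquare a) (ha0 : a ≠ 0) (hb : ¬ IsSquare b) :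
    ¬ IsSquare (a * b) := by
  intro h
  obtain ⟨y, hy⟩ := ha
  apply hb
  obtain ⟨z, hz⟩ := h
  have hy0 : y ≠ 0 := by rintro rfl; simp at hy; exact ha0 hy
  refine ⟨z / y, ?_⟩
  field_simp
  linear_combination hz - b * hy

omit [Fintype F] [DecidableEq F] in
lemma isSquare_inv_iff {a : F} : IsSquare a⁻¹ ↔ IsSquare a := by
  constructor <;> intro ⟨y, hy⟩
  · rcases eq_or_ne a 0 with rfl | ha
    · exact ⟨0, by simp⟩
    · exact ⟨y⁻¹, by rw [← mul_inv, ← hy, inv_inv]⟩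
  · exact ⟨y⁻¹, by rw [← mul_inv, ← hy]⟩

open Finset in
lemma card_not_isSquare (hodd : Odd (Fintype.card F)) :
    ({x : F | ¬ IsSquare x} : Set F).ncard = (Fintype.card F - 1) / 2 := by
  classical
  have hF : ringChar F ≠ 2 := char_ne_two hodd
  set N : Finset F := univ.filter (fun x => ¬ IsSquare x) with hN
  set P : Finset F := univ.filter (fun x => x ≠ 0 ∧ IsSquare x) with hP
  have hsum := quadraticChar_sum_zero hF
  have hdecomp : (univ : Finset F) = insert (0:F) (N ∪ P) := by
    ext x
    simp only [mem_insert, mem_union, hN, hP, mem_filter, mem_univ, true_and]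
    constructor
    · intro _
      by_cases h0 : x = 0
      · exact Or.inl h0
      · by_cases hs : IsSquare x
        · exact Or.inr (Or.inr ⟨h0, hs⟩)
        · exact Or.inr (Or.inl hs)
    · intro _; trivial
  have h0N : (0:F) ∉ N ∪ P := by
    simp only [mem_union, hN, hP, mem_filter, mem_univ, true_and, not_or]
    exact ⟨fun h => h ⟨0, by simp⟩, fun h => h.1 rfl⟩
  have hNP : Disjoint N P := by
    rw [disjoint_left]; intro x hx hx'
    rw [hN, mem_filter] at hx; rw [hP, mem_filter] at hx'
    exact hx.2 hx'.2.2
  have hNs : ∑ x ∈ N, quadraticChar F x = N.card • (-1 : ℤ) :=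
    Finset.sum_eq_card_nsmul (fun x hx =>
      quadraticChar_neg_one_iff_not_isSquare.mpr (by rw [hN, mem_filter] at hx; exact hx.2))
  have hPs : ∑ x ∈ P, quadraticChar F x = P.card • (1 : ℤ) :=
    Finset.sum_eq_card_nsmul (fun x hx => by
      rw [hP, mem_filter] at hx
      exact (quadraticChar_one_iff_isSquare hx.2.1).mpr hx.2.2)
  have hsum2 : (0 : ℤ) = (P.card : ℤ) - N.card := by
    rw [← hsum, hdecomp, sum_insert h0N, sum_union hNP, quadraticChar_zero, hNs, hPs]
    simp
    ring
  have hcards : N.card = P.card := by omega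
  have htot : 1 + N.card + P.card = Fintype.card F := by
    rw [← Finset.card_univ, hdecomp, card_insert_of_notMem h0N, card_union_of_disjoint hNP]
    omega
  have hfin : ({x : F | ¬ IsSquare x} : Set F).ncard = N.card := by
    rw [Set.ncard_eq_toFinset_card']
    congr 1
    ext x; simp [hN]
  omega


/-- parameter set -/
def sig (F : Type*) [Field F] : Set F := {s : F | ¬ IsSquare (-s)}

omit [Fintype F] [DecidableEq F] in
lemma sig_ne_zero {s : F} (hs : s ∈ sig F) : s ≠ 0 := by
  rintro rfl; exact hs (by simpa using (⟨0, by simp⟩ : IsSquare (0:F)))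

lemma card_sig (hodd : Odd (Fintype.card F)) :
    (sig F).ncard = (Fintype.card F - 1) / 2 := by
  have h : sig F = Neg.neg '' {x : F | ¬ IsSquare x} := by
    ext s
    constructor
    · intro hs; exact ⟨-s, hs, by simp⟩
    · rintro ⟨x, hx, rfl⟩; show ¬ IsSquare (- -x); simpa using hx
  rw [h, Set.ncard_image_of_injective _ neg_injective]
  exact card_not_isSquare hodd

/-- The canonical description of `S`. -/
def Sdef (F : Type*) [Field F] : Set (PG F) :=
  {p : PG F | ∃ s ∈ sig F, p = P1 s ∨ p = P2 s ∨ p = P3 s}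

omit [Fintype F] [DecidableEq F] in
lemma Sdef_inter_L1 : {x : PG F | x ∈ (L1 : PG F)} ∩ Sdef F = P1 '' sig F := by
  ext x
  simp only [Set.mem_inter_iff, Set.mem_setOf_eq, Sdef, Set.mem_image]
  constructor
  · rintro ⟨hx, s, hs, rfl | rfl | rfl⟩
    · exact ⟨s, hs, rfl⟩
    · exact absurd (P2_mem_L1.mp hx) (sig_ne_zero hs)
    · exact absurd hx (P3_not_mem_L1 s)
  · rintro ⟨s, hs, rfl⟩; exact ⟨P1_mem_L1 s, s, hs, Or.inl rfl⟩

omit [Fintype F] [DecidableEq F] in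
lemma Sdef_inter_L2 : {x : PG F | x ∈ (L2 : PG F)} ∩ Sdef F = P2 '' sig F := by
  ext x
  simp only [Set.mem_inter_iff, Set.mem_setOf_eq, Sdef, Set.mem_image]
  constructor
  · rintro ⟨hx, s, hs, rfl | rfl | rfl⟩
    · exact absurd hx (P1_not_mem_L2 s)
    · exact ⟨s, hs, rfl⟩
    · exact absurd (P3_mem_L2.mp hx) (sig_ne_zero hs)
  · rintro ⟨s, hs, rfl⟩; exact ⟨P2_mem_L2 s, s, hs, Or.inr (Or.inl rfl)⟩

omit [Fintype F] [DecidableEq F] in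
lemma Sdef_inter_L3 : {x : PG F | x ∈ (L3 : PG F)} ∩ Sdef F = P3 '' sig F := by
  ext x
  simp only [Set.mem_inter_iff, Set.mem_setOf_eq, Sdef, Set.mem_image]
  constructor
  · rintro ⟨hx, s, hs, rfl | rfl | rfl⟩
    · exact absurd (P1_mem_L3.mp hx) (sig_ne_zero hs)
    · exact absurd hx (P2_not_mem_L3 s)
    · exact ⟨s, hs, rfl⟩
  · rintro ⟨s, hs, rfl⟩; exact ⟨P3_mem_L3 s, s, hs, Or.inr (Or.inr rfl)⟩

/-- The pencil of lines through `P1 s₀` other than `L1`. -/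
def La (s₀ a : F) : PG F := Projectivization.mk F ![a, -s₀, 1] (vec_ne_zero _ 2 (by simp))

omit [Fintype F] [DecidableEq F] in
@[simp] lemma P1_mem_La {s₀ a s : F} : (P1 s : PG F) ∈ (La s₀ a : PG F) ↔ s = s₀ := by
  rw [P1, La, mem_mk_mk]
  constructor
  · intro h; simp at h; linear_combination h
  · rintro rfl; norm_num [Matrix.cons_val_two, Matrix.tail_cons, Matrix.head_cons]

omit [Fintype F] [DecidableEq F] in
@[simp] lemma P2_mem_La {s₀ a t : F} : (P2 t : PG F) ∈ (La s₀ a : PG F) ↔ t * a + 1 = 0 := by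
  rw [P2, La, mem_mk_mk]
  constructor
  · intro h; simp at h; linear_combination h
  · intro h; simp; linear_combination h

omit [Fintype F] [DecidableEq F] in
@[simp] lemma P3_mem_La {s₀ a u : F} : (P3 u : PG F) ∈ (La s₀ a : PG F) ↔ a - u * s₀ = 0 := by
  rw [P3, La, mem_mk_mk]
  constructor
  · intro h; simp at h; linear_combination h
  · intro h; simp; linear_combination h

omit [Fintype F] [DecidableEq F] in
@[simp] lemma La_eq_La {s₀ a b : F} : (La s₀ a : PG F) = La s₀ b ↔ a = b := by
  rw [La, La, mk_eq_mk_iff_cross]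
  constructor
  · rintro ⟨-, h, -⟩; simp at h; linear_combination -h
  · rintro rfl; refine ⟨by ring, by ring, by ring⟩

omit [Fintype F] [DecidableEq F] in
lemma La_ne_L1 {s₀ a : F} : (La s₀ a : PG F) ≠ L1 := by
  rw [La, L1]; intro h; rw [mk_eq_mk_iff_cross] at h
  obtain ⟨-, h, -⟩ := h; simp at h

omit [Fintype F] [DecidableEq F] in
lemma line_through_P1 {s₀ : F} (l : PG F) (hl : (P1 s₀ : PG F) ∈ l) :
    l = L1 ∨ ∃ a : F, l = La s₀ a := by
  induction l using Projectivization.ind with | h w hw => ?_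
  rw [P1, mem_mk_mk] at hl
  simp at hl
  by_cases h2 : w 2 = 0
  · left
    have h1 : w 1 = 0 := by rw [h2] at hl; linear_combination hl
    have h0 : w 0 ≠ 0 := by
      intro h0; apply hw; ext i; fin_cases i <;> simp [h0, h1, h2]
    rw [L1, mk_eq_mk_iff]
    exact ⟨Units.mk0 (w 0) h0, by ext i; fin_cases i <;> simp [h1, h2] <;> rfl⟩
  · right
    refine ⟨w 0 / w 2, ?_⟩
    rw [La, mk_eq_mk_iff]
    refine ⟨Units.mk0 (w 2) h2, ?_⟩
    ext i; fin_cases i <;> simp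
    · field_simp
    · linear_combination -hl

/-- The second intersection point with `Sdef` of the line `La s₀ a`, `a ≠ 0`. -/
noncomputable def W (s₀ a : F) : PG F :=
  if IsSquare a then P3 (a / s₀) else P2 (-1 / a)

variable {s₀ : F}

lemma W_mem (hs₀ : ¬ IsSquare (-s₀)) {a : F} (ha : a ≠ 0) : (W s₀ a : PG F) ∈ Sdef F := by
  rw [W]
  split_ifs with h
  · refine ⟨a / s₀, ?_, Or.inr (Or.inr rfl)⟩
    have : -(a / s₀) = a * (-s₀)⁻¹ := by
      have hs : s₀ ≠ 0 := fun hs => hs₀ (by rw [hs, neg_zero]; exact ⟨0, by simp⟩)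
      rw [eq_comm, mul_comm, inv_neg, neg_mul, neg_eq_iff_eq_neg, neg_neg, inv_mul_eq_div]
    rw [sig, Set.mem_setOf_eq, this]
    exact not_isSquare_mul h ha (fun hinv => hs₀ (isSquare_inv_iff.mp hinv))
  · refine ⟨-1 / a, ?_, Or.inr (Or.inl rfl)⟩
    have : -(-1 / a) = a⁻¹ := by field_simp
    rw [sig, Set.mem_setOf_eq, this]
    exact fun hinv => h (isSquare_inv_iff.mp hinv)

lemma W_ne_P1 {a s : F} : (W s₀ a : PG F) ≠ P1 s := by
  rw [W]; split_ifs <;> [exact fun h => P1_ne_P3 h.symm; exact fun h => P1_ne_P2 h.symm]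

lemma W_mem_La (hs₀ : ¬ IsSquare (-s₀)) {a : F} (ha : a ≠ 0) :
    (W s₀ a : PG F) ∈ (La s₀ a : PG F) := by
  have hs : s₀ ≠ 0 := fun hs => hs₀ (by rw [hs, neg_zero]; exact ⟨0, by simp⟩)
  rw [W]; split_ifs with h
  · rw [P3_mem_La]; field_simp; ring
  · rw [P2_mem_La]; field_simp; ring

lemma W_inj (hs₀ : ¬ IsSquare (-s₀)) {a b : F} (ha : a ≠ 0) (hb : b ≠ 0)
    (h : (W s₀ a : PG F) = W s₀ b) : a = b := by
  have hs : s₀ ≠ 0 := fun hs => hs₀ (by rw [hs, neg_zero]; exact ⟨0, by simp⟩)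
  rw [W, W] at h
  split_ifs at h with h1 h2 h2
  · rw [P3_eq_P3] at h; field_simp at h; exact h
  · exact absurd h.symm P2_ne_P3
  · exact absurd h P2_ne_P3
  · rw [P2_eq_P2] at h; field_simp at h; exact neg_injective h.symm

/-- The tangent line at `P1 s₀`. -/
lemma tangent_inter (hs₀ : ¬ IsSquare (-s₀)) :
    {x : PG F | x ∈ (La s₀ 0 : PG F)} ∩ Sdef F = {P1 s₀} := by
  ext x
  simp only [Set.mem_inter_iff, Set.mem_setOf_eq, Set.mem_singleton_iff]
  constructor
  · rintro ⟨hx, s, hs, rfl | rfl | rfl⟩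
    · rw [P1_mem_La] at hx; rw [hx]
    · rw [P2_mem_La] at hx; simp at hx
    · rw [P3_mem_La] at hx
      exfalso
      have hu : s = 0 := by
        rcases mul_eq_zero.mp (by linear_combination -hx : s * s₀ = 0) with h | h
        · exact h
        · exact absurd h (fun h => (fun hs' => hs' (by rw [h, neg_zero]; exact ⟨0, by simp⟩)) hs₀)
      exact sig_ne_zero hs hu
  · rintro rfl
    exact ⟨by rw [P1_mem_La], s₀, by simpa [sig] using hs₀, Or.inl rfl⟩

lemma secant_inter (hs₀ : ¬ IsSquare (-s₀)) {a : F} (ha : a ≠ 0) :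
    {x : PG F | x ∈ (La s₀ a : PG F)} ∩ Sdef F = {P1 s₀, W s₀ a} := by
  have hs : s₀ ≠ 0 := fun h => hs₀ (by rw [h, neg_zero]; exact ⟨0, by simp⟩)
  ext x
  simp only [Set.mem_inter_iff, Set.mem_setOf_eq, Set.mem_insert_iff, Set.mem_singleton_iff]
  constructor
  · rintro ⟨hx, s, hsig, rfl | rfl | rfl⟩
    · rw [P1_mem_La] at hx; left; rw [hx]
    · right
      rw [P2_mem_La] at hx
      have hseq : s = -1 / a := by field_simp; linear_combination hx
      subst hseq
      rw [W]
      split_ifs with hsq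
      · exfalso
        apply hsig
        have : -(-1 / a) = a⁻¹ := by field_simp
        rw [this]
        exact isSquare_inv_iff.mpr hsq
      · rfl
    · right
      rw [P3_mem_La] at hx
      have hseq : s = a / s₀ := by field_simp; linear_combination -hx
      subst hseq
      rw [W]
      split_ifs with hsq
      · rfl
      · exfalso
        apply hsig
        have : -(a / s₀) = a * (-s₀)⁻¹ := by
          rw [eq_comm, mul_comm, inv_neg, neg_mul, neg_eq_iff_eq_neg, neg_neg, inv_mul_eq_div]
        rw [this]
        exact isSquare_of_not_not hsq (fun hinv => hs₀ (isSquare_inv_iff.mp hinv))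
  · rintro (rfl | rfl)
    · exact ⟨by rw [P1_mem_La], s₀, by simpa [sig] using hs₀, Or.inl rfl⟩
    · exact ⟨W_mem_La hs₀ ha, W_mem hs₀ ha⟩

lemma W_surj (hs₀ : ¬ IsSquare (-s₀)) {x : PG F} (hx : x ∈ Sdef F)
    (hl : x ∈ (L2 : PG F) ∨ x ∈ (L3 : PG F)) :
    ∃ a : F, a ≠ 0 ∧ (W s₀ a : PG F) = x := by
  have hs : s₀ ≠ 0 := fun h => hs₀ (by rw [h, neg_zero]; exact ⟨0, by simp⟩)
  obtain ⟨s, hsig, rfl | rfl | rfl⟩ := hx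
  · rcases hl with h | h
    · exact absurd h (P1_not_mem_L2 s)
    · exact absurd (P1_mem_L3.mp h) (sig_ne_zero hsig)
  · refine ⟨(-s)⁻¹, by simpa using sig_ne_zero hsig, ?_⟩
    rw [W]
    split_ifs with hsq
    · exact absurd (isSquare_inv_iff.mp hsq) hsig
    · rw [P2_eq_P2]
      field_simp
  · refine ⟨s * s₀, mul_ne_zero (sig_ne_zero hsig) hs, ?_⟩
    rw [W]
    split_ifs with hsq
    · rw [P3_eq_P3]
      field_simp
    · exfalso
      apply hsq
      have : s * s₀ = (-s) * (-s₀) := by ring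
      rw [this]
      exact isSquare_of_not_not hsig hs₀

instance : Finite (PG F) := Quotient.finite _

lemma W_mem_L23 {a : F} :
    (W s₀ a : PG F) ∈ (L2 : PG F) ∨ (W s₀ a : PG F) ∈ (L3 : PG F) := by
  rw [W]; split_ifs
  · exact Or.inr (P3_mem_L3 _)
  · exact Or.inl (P2_mem_L2 _)

lemma master {S S' : Set (PG F)} (hS' : S' ⊆ S) (hSdef : S = Sdef F)
    {r k : ℕ} (hk : ({x : PG F | x ∈ (L1 : PG F)} ∩ S').ncard = k) (hk2 : 2 ≤ k)
    (hd2 : ((S \ S') ∩ {x : PG F | x ∈ (L2 : PG F)}).ncard = r)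
    (hd3 : ((S \ S') ∩ {x : PG F | x ∈ (L3 : PG F)}).ncard = r)
    {s₀ : F} (hs₀ : ¬ IsSquare (-s₀)) (hp : (P1 s₀ : PG F) ∈ S') :
    Nat.card {l : PG F | {x : PG F | x ∈ l} ∩ S' = {(P1 s₀ : PG F)}} = 2 * r + 1 := by
  subst hSdef
  set p : PG F := P1 s₀ with hpdef
  set A : Set F := {a : F | a ≠ 0 ∧ (W s₀ a : PG F) ∈ Sdef F \ S'} with hA
  have hT : {l : PG F | {x : PG F | x ∈ l} ∩ S' = {p}} =
      insert (La s₀ 0) (La s₀ '' A) := by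
    ext l
    simp only [Set.mem_setOf_eq, Set.mem_insert_iff, Set.mem_image]
    constructor
    · intro hl
      have hpl : p ∈ l := by
        have : p ∈ {x : PG F | x ∈ l} ∩ S' := by rw [hl]; rfl
        exact this.1
      rcases line_through_P1 l hpl with rfl | ⟨a, rfl⟩
      · exfalso
        have h1 : ({x : PG F | x ∈ (L1 : PG F)} ∩ S').ncard = 1 := by
          rw [hl, Set.ncard_singleton]
        omega
      · rcases eq_or_ne a 0 with rfl | ha
        · exact Or.inl rfl
        · refine Or.inr ⟨a, ⟨ha, W_mem hs₀ ha, fun hW => ?_⟩, rfl⟩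
          have : (W s₀ a : PG F) ∈ {x : PG F | x ∈ (La s₀ a : PG F)} ∩ S' :=
            ⟨W_mem_La hs₀ ha, hW⟩
          rw [hl] at this
          exact W_ne_P1 this
    · rintro (rfl | ⟨a, ⟨ha, hWS, hWS'⟩, rfl⟩)
      · apply subset_antisymm
        · intro x hx
          have : x ∈ {x : PG F | x ∈ (La s₀ 0 : PG F)} ∩ Sdef F := ⟨hx.1, hS' hx.2⟩
          rw [tangent_inter hs₀] at this
          exact this
        · rintro x rfl
          exact ⟨P1_mem_La.mpr rfl, hp⟩
      · apply subset_antisymm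
        · intro x hx
          have hx2 : x ∈ {x : PG F | x ∈ (La s₀ a : PG F)} ∩ Sdef F := ⟨hx.1, hS' hx.2⟩
          rw [secant_inter hs₀ ha] at hx2
          rcases hx2 with rfl | rfl
          · rfl
          · exact absurd hx.2 hWS'
        · rintro x rfl
          exact ⟨P1_mem_La.mpr rfl, hp⟩
  rw [Nat.card_coe_set_eq, hT]
  have hnotmem : (La s₀ 0 : PG F) ∉ La s₀ '' A := by
    rintro ⟨a, ⟨ha, -⟩, haeq⟩
    exact ha (La_eq_La.mp haeq)
  rw [Set.ncard_insert_of_notMem hnotmem (Set.toFinite _)]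
  have himg : (La s₀ '' A).ncard = A.ncard :=
    Set.ncard_image_of_injOn (fun a _ b _ h => La_eq_La.mp h)
  have hWimg : W s₀ '' A = (Sdef F \ S') ∩
      ({x : PG F | x ∈ (L2 : PG F)} ∪ {x : PG F | x ∈ (L3 : PG F)}) := by
    ext x
    constructor
    · rintro ⟨a, ⟨ha, hWa⟩, rfl⟩
      exact ⟨hWa, W_mem_L23⟩
    · rintro ⟨hxS, hxL⟩
      obtain ⟨a, ha, haeq⟩ := W_surj hs₀ hxS.1 hxL
      exact ⟨a, ⟨ha, haeq ▸ hxS⟩, haeq⟩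
  have hAcard : A.ncard = 2 * r := by
    have h1 : A.ncard = (W s₀ '' A).ncard :=
      (Set.ncard_image_of_injOn (fun a haA b hbA h => W_inj hs₀ haA.1 hbA.1 h)).symm
    rw [h1, hWimg, Set.inter_union_distrib_left]
    have hdisj : Disjoint ((Sdef F \ S') ∩ {x : PG F | x ∈ (L2 : PG F)})
        ((Sdef F \ S') ∩ {x : PG F | x ∈ (L3 : PG F)}) := by
      rw [Set.disjoint_left]
      rintro x ⟨hx1, hx2⟩ ⟨hx3, hx4⟩
      obtain ⟨s, hs, rfl | rfl | rfl⟩ := hx1.1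
      · exact P1_not_mem_L2 s hx2
      · exact P2_not_mem_L3 s hx4
      · exact sig_ne_zero hs (P3_mem_L2.mp hx2)
    rw [Set.ncard_union_eq hdisj (Set.toFinite _) (Set.toFinite _), hd2, hd3]
    omega
  rw [himg, hAcard]

/-- The cyclic coordinate rotation of the projective plane. -/
noncomputable def rho : PG F → PG F :=
  Projectivization.map (LinearMap.funLeft F F (finRotate 3))
    (LinearMap.funLeft_injective_of_surjective F F _ (finRotate 3).surjective)

omit [Fintype F] [DecidableEq F] in
lemma rho_mk {v : Fin 3 → F} (hv : v ≠ 0) :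
    rho (Projectivization.mk F v hv) =
      Projectivization.mk F ![v 1, v 2, v 0]
        (fun h => hv (by ext i; fin_cases i <;>
          [exact congrFun h 2; exact congrFun h 0; exact congrFun h 1])) := by
  rw [rho, Projectivization.map_mk]
  congr 1
  ext i
  fin_cases i <;> rfl

omit [Fintype F] [DecidableEq F] in
lemma rho_inj : Function.Injective (rho : PG F → PG F) :=
  Projectivization.map_injective _ _

lemma rho_surj : Function.Surjective (rho : PG F → PG F) :=
  Finite.surjective_of_injective rho_inj

omit [Fintype F] [DecidableEq F] in
@[simp] lemma rho_P1 (s : F) : rho (P1 s : PG F) = P3 s := by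
  rw [P1, rho_mk, P3]; congr 1
omit [Fintype F] [DecidableEq F] in
@[simp] lemma rho_P2 (s : F) : rho (P2 s : PG F) = P1 s := by
  rw [P2, rho_mk, P1]; congr 1
omit [Fintype F] [DecidableEq F] in
@[simp] lemma rho_P3 (s : F) : rho (P3 s : PG F) = P2 s := by
  rw [P3, rho_mk, P2]; congr 1
omit [Fintype F] [DecidableEq F] in
@[simp] lemma rho_L1 : rho (L1 : PG F) = L3 := by
  rw [L1, rho_mk, L3]; congr 1
omit [Fintype F] [DecidableEq F] in
@[simp] lemma rho_L2 : rho (L2 : PG F) = L1 := by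
  rw [L2, rho_mk, L1]; congr 1
omit [Fintype F] [DecidableEq F] in
@[simp] lemma rho_L3 : rho (L3 : PG F) = L2 := by
  rw [L3, rho_mk, L2]; congr 1

omit [Fintype F] [DecidableEq F] in
lemma mem_rho_iff {x l : PG F} : rho x ∈ rho l ↔ x ∈ l := by
  induction x using Projectivization.ind with | h v hv => ?_
  induction l using Projectivization.ind with | h w hw => ?_
  rw [rho_mk, rho_mk, mem_mk_mk, mem_mk_mk]
  constructor <;> intro h <;> [skip; skip] <;> · rw [← h]; simp; ring

lemma rho_line_set (l : PG F) :
    rho '' {x : PG F | x ∈ l} = {x : PG F | x ∈ rho l} := by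
  ext y
  obtain ⟨x, rfl⟩ := rho_surj y
  simp only [Set.mem_image, Set.mem_setOf_eq]
  constructor
  · rintro ⟨x', hx', he⟩
    rw [← rho_inj he]
    exact mem_rho_iff.mpr hx'
  · intro h
    exact ⟨x, mem_rho_iff.mp h, rfl⟩

omit [Fintype F] [DecidableEq F] in
lemma rho_Sdef : rho '' (Sdef F) = Sdef F := by
  ext y
  simp only [Sdef, Set.mem_image, Set.mem_setOf_eq]
  constructor
  · rintro ⟨x, ⟨s, hs, rfl | rfl | rfl⟩, rfl⟩
    · exact ⟨s, hs, Or.inr (Or.inr (rho_P1 s))⟩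
    · exact ⟨s, hs, Or.inl (rho_P2 s)⟩
    · exact ⟨s, hs, Or.inr (Or.inl (rho_P3 s))⟩
  · rintro ⟨s, hs, rfl | rfl | rfl⟩
    · exact ⟨P2 s, ⟨s, hs, Or.inr (Or.inl rfl)⟩, rho_P2 s⟩
    · exact ⟨P3 s, ⟨s, hs, Or.inr (Or.inr rfl)⟩, rho_P3 s⟩
    · exact ⟨P1 s, ⟨s, hs, Or.inl rfl⟩, rho_P1 s⟩

lemma rho_transfer (S' : Set (PG F)) (p : PG F) :
    Nat.card {l : PG F | {x : PG F | x ∈ l} ∩ (rho '' S') = {rho p}} =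
      Nat.card {l : PG F | {x : PG F | x ∈ l} ∩ S' = {p}} := by
  have key : {l : PG F | {x : PG F | x ∈ l} ∩ (rho '' S') = {rho p}} =
      rho '' {l : PG F | {x : PG F | x ∈ l} ∩ S' = {p}} := by
    ext l
    obtain ⟨m, rfl⟩ := rho_surj l
    simp only [Set.mem_setOf_eq, Set.mem_image]
    rw [← rho_line_set, ← Set.image_inter rho_inj, ← Set.image_singleton,
      Set.image_eq_image rho_inj]
    constructor
    · intro h; exact ⟨m, h, rfl⟩
    · rintro ⟨m', h', he⟩; rwa [← rho_inj he]
  rw [Nat.card_coe_set_eq, Nat.card_coe_set_eq, key,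
    Set.ncard_image_of_injective _ rho_inj]

lemma ncard_inter_rho (S' : Set (PG F)) (l : PG F) :
    ({x : PG F | x ∈ rho l} ∩ (rho '' S')).ncard = ({x : PG F | x ∈ l} ∩ S').ncard := by
  rw [← rho_line_set, ← Set.image_inter rho_inj, Set.ncard_image_of_injective _ rho_inj]

lemma ncard_diff_inter_rho (S' : Set (PG F)) (l : PG F) :
    ((Sdef F \ rho '' S') ∩ {x : PG F | x ∈ rho l}).ncard
      = ((Sdef F \ S') ∩ {x : PG F | x ∈ l}).ncard := by
  conv_lhs => rw [← rho_Sdef]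
  rw [← Set.image_diff rho_inj, ← rho_line_set, ← Set.image_inter rho_inj,
    Set.ncard_image_of_injective _ rho_inj]

end SemiarcProof

open SemiarcProof in
theorem projective_triangle_truncation_semiarc
    {F : Type*} [Field F] [Fintype F] [DecidableEq F]
    (q : ℕ) (hq : Fintype.card F = q) (hodd : Odd q)
    -- `C` is the set of non-squares of `GF(q)`
    (C : Set F) (hC : C = {x : F | ¬ ∃ y : F, y ^ 2 = x})
    (S : Set (PG F))
    (hS : S = {p : PG F | ∃ s : F, -s ∈ C ∧
      (p = Projectivization.mk F ![0, 1, s] (vec_ne_zero _ 1 (by simp)) ∨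
       p = Projectivization.mk F ![s, 0, 1] (vec_ne_zero _ 2 (by simp)) ∨
       p = Projectivization.mk F ![1, s, 0] (vec_ne_zero _ 0 (by simp)))})
    -- the three coordinate lines `[1:0:0]`, `[0:1:0]`, `[0:0:1]`
    (l₁ l₂ l₃ : PG F)
    (hl₁ : l₁ = Projectivization.mk F ![1, 0, 0] (vec_ne_zero _ 0 (by simp)))
    (hl₂ : l₂ = Projectivization.mk F ![0, 1, 0] (vec_ne_zero _ 1 (by simp)))
    (hl₃ : l₃ = Projectivization.mk F ![0, 0, 1] (vec_ne_zero _ 2 (by simp)))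
    (r : ℕ) (hr : r < (q - 1) / 2 - 1)
    -- `S'` is obtained from `S` by deleting exactly `r` points from each coordinate line
    (S' : Set (PG F)) (hsub : S' ⊆ S)
    (hdel : ∀ l ∈ ({l₁, l₂, l₃} : Set (PG F)),
      ((S \ S') ∩ {x : PG F | x ∈ l}).ncard = r) :
    IsSemiarcPG (2 * r + 1) S' ∧ S'.ncard = 3 * ((q - 1) / 2 - r) ∧
      ∀ l ∈ ({l₁, l₂, l₃} : Set (PG F)),
        ({x : PG F | x ∈ l} ∩ S').ncard = (q - 1) / 2 - r := by
  subst hq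
  have el1 : l₁ = (L1 : PG F) := hl₁
  have el2 : l₂ = (L2 : PG F) := hl₂
  have el3 : l₃ = (L3 : PG F) := hl₃
  subst el1 el2 el3
  have eS : S = Sdef F := by
    rw [hS, hC]
    ext p
    simp only [Set.mem_setOf_eq, Sdef, sig]
    constructor
    · rintro ⟨s, h1, h2⟩
      exact ⟨s, fun hsq => h1 (by obtain ⟨y, hy⟩ := hsq; exact ⟨y, by rw [hy]; ring⟩), h2⟩
    · rintro ⟨s, h1, h2⟩
      exact ⟨s, fun hsq => h1 (by obtain ⟨y, hy⟩ := hsq; exact ⟨y, by rw [← hy]; ring⟩), h2⟩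
  subst eS
  set k : ℕ := (Fintype.card F - 1) / 2 with hkdef
  have hd1 : ((Sdef F \ S') ∩ {x : PG F | x ∈ (L1 : PG F)}).ncard = r := hdel L1 (by simp)
  have hd2 : ((Sdef F \ S') ∩ {x : PG F | x ∈ (L2 : PG F)}).ncard = r := hdel L2 (by simp)
  have hd3 : ((Sdef F \ S') ∩ {x : PG F | x ∈ (L3 : PG F)}).ncard = r := hdel L3 (by simp)
  have hP1inj : Function.Injective (P1 : F → PG F) := fun a b h => P1_eq_P1.mp h
  have hP2inj : Function.Injective (P2 : F → PG F) := fun a b h => P2_eq_P2.mp h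
  have hP3inj : Function.Injective (P3 : F → PG F) := fun a b h => P3_eq_P3.mp h
  have c1 : ({x : PG F | x ∈ (L1 : PG F)} ∩ Sdef F).ncard = k := by
    rw [Sdef_inter_L1, Set.ncard_image_of_injective _ hP1inj, card_sig hodd]
  have c2 : ({x : PG F | x ∈ (L2 : PG F)} ∩ Sdef F).ncard = k := by
    rw [Sdef_inter_L2, Set.ncard_image_of_injective _ hP2inj, card_sig hodd]
  have c3 : ({x : PG F | x ∈ (L3 : PG F)} ∩ Sdef F).ncard = k := by
    rw [Sdef_inter_L3, Set.ncard_image_of_injective _ hP3inj, card_sig hodd]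
  have ediff : ∀ l : PG F, {x : PG F | x ∈ l} ∩ S' =
      ({x : PG F | x ∈ l} ∩ Sdef F) \ ((Sdef F \ S') ∩ {x : PG F | x ∈ l}) := by
    intro l
    ext x
    constructor
    · rintro ⟨hl, hs'⟩; exact ⟨⟨hl, hsub hs'⟩, fun hc => hc.1.2 hs'⟩
    · rintro ⟨⟨hl, hsd⟩, hnc⟩
      refine ⟨hl, ?_⟩
      by_contra h
      exact hnc ⟨⟨hsd, h⟩, hl⟩
  have esub : ∀ l : PG F, (Sdef F \ S') ∩ {x : PG F | x ∈ l} ⊆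
      {x : PG F | x ∈ l} ∩ Sdef F := fun l x hx => ⟨hx.2, hx.1.1⟩
  have s1card : ({x : PG F | x ∈ (L1 : PG F)} ∩ S').ncard = k - r := by
    rw [ediff, Set.ncard_diff (esub L1) (Set.toFinite _), c1, hd1]
  have s2card : ({x : PG F | x ∈ (L2 : PG F)} ∩ S').ncard = k - r := by
    rw [ediff, Set.ncard_diff (esub L2) (Set.toFinite _), c2, hd2]
  have s3card : ({x : PG F | x ∈ (L3 : PG F)} ∩ S').ncard = k - r := by
    rw [ediff, Set.ncard_diff (esub L3) (Set.toFinite _), c3, hd3]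
  have hk2 : 2 ≤ k - r := by omega
  have hSpart : S' = ({x : PG F | x ∈ (L1 : PG F)} ∩ S') ∪
      (({x : PG F | x ∈ (L2 : PG F)} ∩ S') ∪ ({x : PG F | x ∈ (L3 : PG F)} ∩ S')) := by
    ext x
    constructor
    · intro hx
      obtain ⟨s, hs, rfl | rfl | rfl⟩ := hsub hx
      · exact Or.inl ⟨P1_mem_L1 s, hx⟩
      · exact Or.inr (Or.inl ⟨P2_mem_L2 s, hx⟩)
      · exact Or.inr (Or.inr ⟨P3_mem_L3 s, hx⟩)
    · rintro (⟨-, h⟩ | ⟨-, h⟩ | ⟨-, h⟩) <;> exact h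
  have d12 : Disjoint ({x : PG F | x ∈ (L1 : PG F)} ∩ S')
      ({x : PG F | x ∈ (L2 : PG F)} ∩ S') := by
    rw [Set.disjoint_left]
    rintro x ⟨h1, hx⟩ ⟨h2, -⟩
    obtain ⟨s, hs, rfl | rfl | rfl⟩ := hsub hx
    · exact P1_not_mem_L2 s h2
    · exact sig_ne_zero hs (P2_mem_L1.mp h1)
    · exact P3_not_mem_L1 s h1
  have d13 : Disjoint ({x : PG F | x ∈ (L1 : PG F)} ∩ S')
      ({x : PG F | x ∈ (L3 : PG F)} ∩ S') := by
    rw [Set.disjoint_left]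
    rintro x ⟨h1, hx⟩ ⟨h2, -⟩
    obtain ⟨s, hs, rfl | rfl | rfl⟩ := hsub hx
    · exact sig_ne_zero hs (P1_mem_L3.mp h2)
    · exact P2_not_mem_L3 s h2
    · exact P3_not_mem_L1 s h1
  have d23 : Disjoint ({x : PG F | x ∈ (L2 : PG F)} ∩ S')
      ({x : PG F | x ∈ (L3 : PG F)} ∩ S') := by
    rw [Set.disjoint_left]
    rintro x ⟨h1, hx⟩ ⟨h2, -⟩
    obtain ⟨s, hs, rfl | rfl | rfl⟩ := hsub hx
    · exact P1_not_mem_L2 s h1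
    · exact P2_not_mem_L3 s h2
    · exact sig_ne_zero hs (P3_mem_L2.mp h1)
  have hS'card : S'.ncard = 3 * (k - r) := by
    rw [hSpart, Set.ncard_union_eq (Set.disjoint_union_right.mpr ⟨d12, d13⟩)
        (Set.toFinite _) (Set.toFinite _),
      Set.ncard_union_eq d23 (Set.toFinite _) (Set.toFinite _), s1card, s2card, s3card]
    ring
  refine ⟨⟨?_, ?_⟩, hS'card, ?_⟩
  · -- nonempty
    have hne : ({x : PG F | x ∈ (L1 : PG F)} ∩ S').Nonempty := by
      apply Set.nonempty_of_ncard_ne_zero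
      rw [s1card]; omega
    obtain ⟨x, hx⟩ := hne
    exact ⟨x, hx.2⟩
  · -- tangent counts
    intro p hp
    obtain ⟨s, hs, rfl | rfl | rfl⟩ := hsub hp
    · exact master hsub rfl s1card hk2 hd2 hd3 hs hp
    · rw [← rho_transfer S' (P2 s)]
      simp only [rho_P2]
      have hsub' : rho '' S' ⊆ Sdef F := by
        rw [← rho_Sdef]; exact Set.image_mono hsub
      have hk' : ({x : PG F | x ∈ (L1 : PG F)} ∩ rho '' S').ncard = k - r := by
        rw [← rho_L2, ncard_inter_rho]; exact s2card
      have hd2' : ((Sdef F \ rho '' S') ∩ {x : PG F | x ∈ (L2 : PG F)}).ncard = r := by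
        rw [← rho_L3, ncard_diff_inter_rho]; exact hd3
      have hd3' : ((Sdef F \ rho '' S') ∩ {x : PG F | x ∈ (L3 : PG F)}).ncard = r := by
        rw [← rho_L1, ncard_diff_inter_rho]; exact hd1
      exact master hsub' rfl hk' hk2 hd2' hd3' hs ⟨P2 s, hp, rho_P2 s⟩
    · rw [← rho_transfer S' (P3 s)]
      simp only [rho_P3]
      rw [← rho_transfer (rho '' S') (P2 s)]
      simp only [rho_P2]
      have hsub' : rho '' (rho '' S') ⊆ Sdef F := by
        rw [← rho_Sdef]; apply Set.image_mono
        rw [← rho_Sdef]; exact Set.image_mono hsub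
      have hk' : ({x : PG F | x ∈ (L1 : PG F)} ∩ rho '' (rho '' S')).ncard = k - r := by
        rw [← rho_L2, ncard_inter_rho, ← rho_L3, ncard_inter_rho]; exact s3card
      have hd2' : ((Sdef F \ rho '' (rho '' S')) ∩ {x : PG F | x ∈ (L2 : PG F)}).ncard = r := by
        rw [← rho_L3, ncard_diff_inter_rho, ← rho_L1, ncard_diff_inter_rho]; exact hd1
      have hd3' : ((Sdef F \ rho '' (rho '' S')) ∩ {x : PG F | x ∈ (L3 : PG F)}).ncard = r := by
        rw [← rho_L1, ncard_diff_inter_rho, ← rho_L2, ncard_diff_inter_rho]; exact hd2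
      exact master hsub' rfl hk' hk2 hd2' hd3' hs
        ⟨P2 s, ⟨P3 s, hp, rho_P3 s⟩, rho_P2 s⟩
  · -- secant sizes
    intro l hl
    simp only [Set.mem_insert_iff, Set.mem_singleton_iff] at hl
    rcases hl with rfl | rfl | rfl
    exacts [s1card, s2card, s3card]
end

section
/- Let T be a (q+τ, τ)-arc of type (0, 2, τ) in PG(2,q) with τ ∉ {0,1,2}, so that every line meets T in 0, 2 or τ points, and suppose the τ-secants of T are exactly q/τ + 1 lines through a common point (the τ-nucleus). If 0 ≤ r < τ - 1 and S is obtained from T by deleting exactly r points from each τ-secant of T, then S is a t-semiarc with t = rq/τ, of size q + τ - r(q/τ + 1), having q/τ + 1 secants each meeting S in τ - r points. -/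
open Configuration Projectivization
open scoped LinearAlgebra.Projectivization

lemma mk'_surj (F : Type*) [Field F] : Function.Surjective (Projectivization.mk' F (V := Fin 3 → F)) := by
  intro p
  exact ⟨⟨p.rep, p.rep_nonzero⟩, by rw [mk'_eq_mk, p.mk_rep]⟩

instance PG.finite {F : Type*} [Field F] [Finite F] : Finite (PG F) :=
  Finite.of_surjective _ (mk'_surj F)

noncomputable instance {F : Type*} [Field F] [Fintype F] : Fintype (PG F) := Fintype.ofFinite _

lemma PG_card_mul (F : Type*) [Field F] [Fintype F] [DecidableEq F] :
    Fintype.card (PG F) * (Fintype.card F - 1) = Fintype.card F ^ 3 - 1 := by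
  classical
  have h1 : Fintype.card {v : Fin 3 → F // v ≠ 0} = Fintype.card F ^ 3 - 1 := by
    rw [Fintype.card_subtype_compl, Fintype.card_pi]
    simp [Fintype.card_subtype_eq (0 : Fin 3 → F)]
  have h2 : ∀ p : PG F, Fintype.card {a : {v : Fin 3 → F // v ≠ 0} // Projectivization.mk' F a = p}
      = Fintype.card Fˣ := by
    intro p
    have hb : Function.Bijective (fun u : Fˣ =>
      (⟨⟨(u : F) • p.rep, smul_ne_zero u.ne_zero p.rep_nonzero⟩, by
        rw [mk'_eq_mk]
        conv_rhs => rw [← p.mk_rep]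
        exact (mk_eq_mk_iff F _ _ _ p.rep_nonzero).2 ⟨u, rfl⟩⟩ :
        {a : {v : Fin 3 → F // v ≠ 0} // Projectivization.mk' F a = p})) := by
      constructor
      · intro u u' h
        obtain ⟨i, hi⟩ := Function.ne_iff.1 p.rep_nonzero
        have := congrFun (congrArg (fun a => (a.1 : Fin 3 → F)) h) i
        simp only [Pi.smul_apply, smul_eq_mul] at this
        exact Units.ext (mul_right_cancel₀ (by simpa using hi) this)
      · rintro ⟨⟨v, hv⟩, hmk⟩
        rw [mk'_eq_mk] at hmk
        obtain ⟨u, hu⟩ := (mk_eq_mk_iff F v p.rep hv p.rep_nonzero).1 (by rw [hmk, p.mk_rep])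
        exact ⟨u, Subtype.ext (Subtype.ext (by simpa [Units.smul_def] using hu))⟩
    exact (Fintype.card_of_bijective hb).symm
  have h3 := Fintype.card_congr (Equiv.sigmaFiberEquiv (Projectivization.mk' F (V := Fin 3 → F)))
  rw [Fintype.card_sigma] at h3
  simp only [h2] at h3
  rw [Finset.sum_const, Finset.card_univ, smul_eq_mul] at h3
  rw [← h1, ← Fintype.card_units (α := F)]
  exact h3

lemma PG_order (F : Type*) [Field F] [Fintype F] [DecidableEq F] :
    ProjectivePlane.order (PG F) (PG F) = Fintype.card F := by
  classical
  have hq2 : 2 ≤ Fintype.card F := Fintype.one_lt_card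
  have hcard := ProjectivePlane.card_points (PG F) (PG F)
  have hmul := PG_card_mul F
  rw [hcard] at hmul
  generalize hn : ProjectivePlane.order (PG F) (PG F) = n at *
  generalize hqq : Fintype.card F = q at *
  have hrhs : (q ^ 2 + q + 1) * (q - 1) + 1 = q ^ 3 := by
    obtain ⟨m, rfl⟩ : ∃ m, q = m + 1 := ⟨q - 1, by omega⟩
    simp only [Nat.add_sub_cancel]
    ring
  have heq : (n ^ 2 + n + 1) * (q - 1) = (q ^ 2 + q + 1) * (q - 1) := by omega
  have h4 : n ^ 2 + n + 1 = q ^ 2 + q + 1 :=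
    Nat.eq_of_mul_eq_mul_right (by omega) heq
  rcases Nat.lt_trichotomy n q with h | h | h
  · have := Nat.pow_lt_pow_left h (n := 2) (by norm_num)
    omega
  · exact h
  · have := Nat.pow_lt_pow_left h (n := 2) (by norm_num)
    omega

section Main
variable {F : Type*} [Field F] [Fintype F] [DecidableEq F]

omit [Fintype F] [DecidableEq F] in
lemma line_unique {x y l m : PG F} (hxy : x ≠ y) (h1 : x ∈ l) (h2 : y ∈ l)
    (h3 : x ∈ m) (h4 : y ∈ m) : l = m :=
  (Nondegenerate.eq_or_eq h1 h2 h3 h4).resolve_left hxy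

lemma lines_through_ncard (p : PG F) : {l : PG F | p ∈ l}.ncard = Fintype.card F + 1 := by
  rw [← Nat.card_coe_set_eq]
  have : Nat.card {l : PG F | p ∈ l} = lineCount (PG F) p := rfl
  rw [this, ProjectivePlane.lineCount_eq, PG_order]

lemma sum_through_point (T : Set (PG F)) (p : PG F) :
    ∑ l ∈ (Set.toFinite {l : PG F | p ∈ l}).toFinset,
      ((Set.toFinite (({x : PG F | x ∈ l} ∩ T) \ {p})).toFinset).card
      = (T \ {p}).ncard := by
  classical
  rw [Set.ncard_eq_toFinset_card _ (Set.toFinite _)]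
  rw [← Finset.card_biUnion]
  · congr 1
    ext x
    simp only [Finset.mem_biUnion, Set.Finite.mem_toFinset, Set.mem_setOf_eq, Set.mem_inter_iff,
      Set.mem_diff, Set.mem_singleton_iff]
    constructor
    · rintro ⟨l, -, ⟨-, hxT⟩, hxp⟩
      exact ⟨hxT, hxp⟩
    · rintro ⟨hxT, hxp⟩
      refine ⟨HasLines.mkLine (Ne.symm hxp), ?_, ⟨?_, hxT⟩, hxp⟩
      · exact (HasLines.mkLine_ax (Ne.symm hxp)).1
      · exact (HasLines.mkLine_ax (Ne.symm hxp)).2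
  · intro l hl m hm hlm
    simp only [Finset.mem_coe, Set.Finite.mem_toFinset, Set.mem_setOf_eq] at hl hm
    simp only [Function.onFun, Finset.disjoint_left, Set.Finite.mem_toFinset, Set.mem_diff, Set.mem_inter_iff,
      Set.mem_setOf_eq, Set.mem_singleton_iff]
    rintro x ⟨⟨hxl, -⟩, hxp⟩ ⟨⟨hxm, -⟩, -⟩
    exact hxp ((Nondegenerate.eq_or_eq hxl hl hxm hm).resolve_right hlm)

end Main

theorem KM_arc_truncation_semiarc
    {F : Type*} [Field F] [Fintype F] [DecidableEq F]
    (q τ : ℕ) (hq : Fintype.card F = q)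
    (hτ0 : τ ≠ 0) (hτ1 : τ ≠ 1) (hτ2 : τ ≠ 2) (hdvd : τ ∣ q)
    -- `T` is a `(q+τ, τ)`-arc of type `(0, 2, τ)`
    (T : Set (PG F)) (hT : T.ncard = q + τ)
    (htype : ∀ l : PG F, ({x : PG F | x ∈ l} ∩ T).ncard = 0 ∨
      ({x : PG F | x ∈ l} ∩ T).ncard = 2 ∨ ({x : PG F | x ∈ l} ∩ T).ncard = τ)
    -- the `τ`-secants of `T` are exactly `q/τ + 1` lines through a common point
    (N : PG F)
    (hnuc : ∀ l : PG F, ({x : PG F | x ∈ l} ∩ T).ncard = τ → N ∈ l)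
    (hnum : {l : PG F | ({x : PG F | x ∈ l} ∩ T).ncard = τ}.ncard = q / τ + 1)
    (r : ℕ) (hr : r < τ - 1)
    -- `S` is obtained from `T` by deleting exactly `r` points from each `τ`-secant
    (S : Set (PG F)) (hsub : S ⊆ T)
    (hdel : ∀ l : PG F, ({x : PG F | x ∈ l} ∩ T).ncard = τ →
      (({x : PG F | x ∈ l} ∩ T) \ S).ncard = r)
    (hcover : ∀ p ∈ T \ S, ∃ l : PG F, ({x : PG F | x ∈ l} ∩ T).ncard = τ ∧ p ∈ l) :
    IsSemiarcPG (r * (q / τ)) S ∧ S.ncard = q + τ - r * (q / τ + 1) ∧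
      ∀ l : PG F, ({x : PG F | x ∈ l} ∩ T).ncard = τ →
        ({x : PG F | x ∈ l} ∩ S).ncard = τ - r := by
  classical
  have hq2 : 2 ≤ q := by rw [← hq]; exact Fintype.one_lt_card
  have hτ3 : 3 ≤ τ := by omega
  have hτq : τ ≤ q := Nat.le_of_dvd (by omega) hdvd
  set d := q / τ with hd
  have hqd : τ * d = q := Nat.mul_div_cancel' hdvd
  have hd1 : 1 ≤ d := by
    rcases Nat.eq_zero_or_pos d with h | h
    · rw [h, Nat.mul_zero] at hqd; omega
    · exact h
  have hrτ : r ≤ τ - 2 := by omega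
  have hlc : ∀ p : PG F, {l : PG F | p ∈ l}.ncard = q + 1 := by
    intro p; rw [lines_through_ncard, hq]
  set Sec : Set (PG F) := {l : PG F | ({x : PG F | x ∈ l} ∩ T).ncard = τ} with hSecdef
  -- N is not in T
  have hNT : N ∉ T := by
    intro hNTmem
    have hsum := sum_through_point T N
    have hTn : (T \ {N}).ncard = q + τ - 1 := by
      rw [Set.ncard_diff_singleton_of_mem hNTmem, hT]
    rw [hTn] at hsum
    have hsummand : ∀ l ∈ (Set.toFinite {l : PG F | N ∈ l}).toFinset,
        ((Set.toFinite (({x : PG F | x ∈ l} ∩ T) \ {N})).toFinset).card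
        = ({x : PG F | x ∈ l} ∩ T).ncard - 1 := by
      intro l hl
      rw [Set.Finite.mem_toFinset, Set.mem_setOf_eq] at hl
      rw [← Set.ncard_eq_toFinset_card _ (Set.toFinite _)]
      rw [Set.ncard_diff_singleton_of_mem
        (show N ∈ {x : PG F | x ∈ l} ∩ T from ⟨hl, hNTmem⟩)]
    rw [Finset.sum_congr rfl hsummand] at hsum
    rw [← Finset.sum_filter_add_sum_filter_not _ (fun l => l ∈ Sec)] at hsum
    have hfil : ((Set.toFinite {l : PG F | N ∈ l}).toFinset).filter (fun l => l ∈ Sec)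
        = (Set.toFinite Sec).toFinset := by
      ext l
      simp only [Finset.mem_filter, Set.Finite.mem_toFinset, Set.mem_setOf_eq, hSecdef]
      exact ⟨fun h => h.2, fun h => ⟨hnuc l h, h⟩⟩
    have hSeccard : (Set.toFinite Sec).toFinset.card = d + 1 := by
      rw [← Set.ncard_eq_toFinset_card _ (Set.toFinite _)]
      exact hnum
    have hsum1 : ∑ l ∈ ((Set.toFinite {l : PG F | N ∈ l}).toFinset).filter (fun l => l ∈ Sec),
        (({x : PG F | x ∈ l} ∩ T).ncard - 1) = (d + 1) * (τ - 1) := by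
      rw [hfil, Finset.sum_congr rfl (fun l hl => ?_), Finset.sum_const, hSeccard, smul_eq_mul]
      rw [Set.Finite.mem_toFinset] at hl
      rw [hl]
    have hsum2 : ∑ l ∈ ((Set.toFinite {l : PG F | N ∈ l}).toFinset).filter (fun l => l ∉ Sec),
        (({x : PG F | x ∈ l} ∩ T).ncard - 1) = q - d := by
      have hcard2 : (((Set.toFinite {l : PG F | N ∈ l}).toFinset).filter (fun l => l ∉ Sec)).card
          = q - d := by
        have := Finset.card_filter_add_card_filter_not
          (s := (Set.toFinite {l : PG F | N ∈ l}).toFinset) (p := fun l => l ∈ Sec)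
        rw [hfil, hSeccard] at this
        have hLN : ((Set.toFinite {l : PG F | N ∈ l}).toFinset).card = q + 1 := by
          rw [← Set.ncard_eq_toFinset_card _ (Set.toFinite _)]
          exact hlc N
        omega
      rw [Finset.sum_congr rfl (fun l hl => ?_), Finset.sum_const, hcard2, smul_eq_mul,
        Nat.mul_one]
      rw [Finset.mem_filter, Set.Finite.mem_toFinset, Set.mem_setOf_eq] at hl
      obtain ⟨hNl, hlS⟩ := hl
      rcases htype l with h | h | h
      · exfalso
        rw [Set.ncard_eq_zero] at h
        exact absurd (h ▸ (⟨hNl, hNTmem⟩ : N ∈ {x : PG F | x ∈ l} ∩ T)) (Set.notMem_empty N)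
      · rw [h]
      · exact absurd h hlS
    rw [hsum1, hsum2] at hsum
    -- (d+1)(τ-1) + (q - d) = q + τ - 1 with q = τ d gives τ = 2
    have e1 : (d + 1) * (τ - 1) + (d + 1) = (d + 1) * τ := by
      zify [show 1 ≤ τ from by omega]
      ring
    have e2 : (d + 1) * τ = q + τ := by
      rw [Nat.add_mul, Nat.one_mul, Nat.mul_comm, hqd]
    have e3 : q = 2 * d := by omega
    have : τ * d = 2 * d := by rw [hqd]; omega
    have : τ = 2 := Nat.eq_of_mul_eq_mul_right (by omega) this
    omega
  -- each point of T is on some τ-secant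
  have hex : ∀ p ∈ T, ∃ l, l ∈ Sec ∧ p ∈ l := by
    intro p hp
    by_contra hcon
    push_neg at hcon
    have hsum := sum_through_point T p
    have hTn : (T \ {p}).ncard = q + τ - 1 := by
      rw [Set.ncard_diff_singleton_of_mem hp, hT]
    rw [hTn] at hsum
    have hble : ∑ l ∈ (Set.toFinite {l : PG F | p ∈ l}).toFinset,
        ((Set.toFinite (({x : PG F | x ∈ l} ∩ T) \ {p})).toFinset).card
        ≤ ((Set.toFinite {l : PG F | p ∈ l}).toFinset).card * 1 := by
      apply Finset.sum_le_card_nsmul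
      intro l hl
      rw [Set.Finite.mem_toFinset, Set.mem_setOf_eq] at hl
      rw [← Set.ncard_eq_toFinset_card _ (Set.toFinite _)]
      rw [Set.ncard_diff_singleton_of_mem
        (show p ∈ {x : PG F | x ∈ l} ∩ T from ⟨hl, hp⟩)]
      rcases htype l with h | h | h
      · omega
      · omega
      · exact absurd hl (hcon l h)
    have hLN : ((Set.toFinite {l : PG F | p ∈ l}).toFinset).card = q + 1 := by
      rw [← Set.ncard_eq_toFinset_card _ (Set.toFinite _)]
      exact hlc p
    rw [hLN] at hble
    omega
  -- uniqueness of τ-secant through a point of T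
  have huniq : ∀ p ∈ T, ∀ l ∈ Sec, ∀ m ∈ Sec, p ∈ l → p ∈ m → l = m := by
    intro p hp l hl m hm hpl hpm
    have hpN : p ≠ N := fun h => hNT (h ▸ hp)
    exact line_unique hpN hpl (hnuc l hl) hpm (hnuc m hm)
  -- part 3
  have hpart3 : ∀ l : PG F, ({x : PG F | x ∈ l} ∩ T).ncard = τ →
      ({x : PG F | x ∈ l} ∩ S).ncard = τ - r := by
    intro l hl
    have h1 : {x : PG F | x ∈ l} ∩ S = ({x : PG F | x ∈ l} ∩ T) ∩ S := by
      ext x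
      simp only [Set.mem_inter_iff, Set.mem_setOf_eq]
      exact ⟨fun ⟨h1, h2⟩ => ⟨⟨h1, hsub h2⟩, h2⟩, fun ⟨⟨h1, _⟩, h2⟩ => ⟨h1, h2⟩⟩
    have h2 := Set.ncard_inter_add_ncard_diff_eq_ncard ({x : PG F | x ∈ l} ∩ T) S
      (Set.toFinite _)
    rw [hdel l hl, hl] at h2
    rw [h1]
    omega
  -- cardinality of T \ S
  have hSeccard : (Set.toFinite Sec).toFinset.card = d + 1 := by
    rw [← Set.ncard_eq_toFinset_card _ (Set.toFinite _)]
    exact hnum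
  have hTS : (T \ S).ncard = r * (d + 1) := by
    rw [Set.ncard_eq_toFinset_card _ (Set.toFinite _)]
    have hbu : (Set.toFinite (T \ S)).toFinset = (Set.toFinite Sec).toFinset.biUnion
        (fun l => (Set.toFinite (({x : PG F | x ∈ l} ∩ T) \ S)).toFinset) := by
      ext x
      simp only [Set.Finite.mem_toFinset, Set.mem_diff, Finset.mem_biUnion, Set.mem_inter_iff,
        Set.mem_setOf_eq, hSecdef]
      constructor
      · rintro ⟨hxT, hxS⟩
        obtain ⟨l, hl, hxl⟩ := hcover x ⟨hxT, hxS⟩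
        exact ⟨l, hl, ⟨hxl, hxT⟩, hxS⟩
      · rintro ⟨l, -, ⟨-, hxT⟩, hxS⟩
        exact ⟨hxT, hxS⟩
    rw [hbu, Finset.card_biUnion]
    · rw [Finset.sum_congr rfl (fun l hl => ?_), Finset.sum_const, hSeccard, smul_eq_mul,
        Nat.mul_comm]
      rw [Set.Finite.mem_toFinset] at hl
      rw [← Set.ncard_eq_toFinset_card _ (Set.toFinite _)]
      exact hdel l hl
    · intro l hl m hm hlm
      rw [Finset.mem_coe, Set.Finite.mem_toFinset] at hl hm
      simp only [Function.onFun, Finset.disjoint_left, Set.Finite.mem_toFinset, Set.mem_diff, Set.mem_inter_iff,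
        Set.mem_setOf_eq]
      rintro x ⟨⟨hxl, hxT⟩, -⟩ ⟨⟨hxm, -⟩, -⟩
      rcases Nondegenerate.eq_or_eq hxl (hnuc l hl) hxm (hnuc m hm) with h | h
      · exact hNT (h ▸ hxT)
      · exact hlm h
  have hScard : S.ncard = q + τ - r * (d + 1) := by
    have hds : T \ (T \ S) = S := Set.diff_diff_cancel_left hsub
    rw [← hds, Set.ncard_diff Set.diff_subset, hTS, hT]
  -- nonemptiness
  have hSne : S.Nonempty := by
    apply Set.nonempty_of_ncard_ne_zero
    rw [hScard]
    have e1 : (τ - 2) * (d + 1) + 2 * (d + 1) = q + τ := by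
      rw [← Nat.add_mul, Nat.sub_add_cancel (by omega), Nat.mul_add, hqd, Nat.mul_one]
    have e2 : r * (d + 1) ≤ (τ - 2) * (d + 1) := Nat.mul_le_mul_right _ hrτ
    omega
  refine ⟨⟨hSne, ?_⟩, hScard, hpart3⟩
  -- the tangent count
  intro p hp
  have hpT := hsub hp
  obtain ⟨l₀, hl₀Sec, hpl₀⟩ := hex p hpT
  rw [Nat.card_coe_set_eq]
  set E : Set (PG F) := (T \ S) \ {x : PG F | x ∈ l₀} with hE
  set φ : PG F → PG F := fun x => if h : p = x then p else HasLines.mkLine h with hφ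
  have hφspec : ∀ x ∈ E, {y : PG F | y ∈ φ x} ∩ T = {p, x} ∧ {y : PG F | y ∈ φ x} ∩ S = {p} := by
    intro x hx
    obtain ⟨⟨hxT, hxS⟩, hxl₀⟩ := hx
    have hpx : p ≠ x := fun h => hxS (h ▸ hp)
    have hφx : φ x = HasLines.mkLine hpx := dif_neg hpx
    have hpm : p ∈ φ x := by rw [hφx]; exact (HasLines.mkLine_ax hpx).1
    have hxm : x ∈ φ x := by rw [hφx]; exact (HasLines.mkLine_ax hpx).2
    have hsubpx : ({p, x} : Set (PG F)) ⊆ {y : PG F | y ∈ φ x} ∩ T := by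
      rintro y (rfl | rfl)
      · exact ⟨hpm, hpT⟩
      · exact ⟨hxm, hxT⟩
    have hmT : ({y : PG F | y ∈ φ x} ∩ T).ncard = 2 := by
      rcases htype (φ x) with h | h | h
      · exfalso
        rw [Set.ncard_eq_zero] at h
        exact absurd (h ▸ (⟨hpm, hpT⟩ : p ∈ {y : PG F | y ∈ φ x} ∩ T)) (Set.notMem_empty p)
      · exact h
      · exfalso
        have : φ x = l₀ := huniq p hpT (φ x) h l₀ hl₀Sec hpm hpl₀
        exact hxl₀ (this ▸ hxm)
    have hTeq : {y : PG F | y ∈ φ x} ∩ T = {p, x} :=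
      (Set.eq_of_subset_of_ncard_le hsubpx (by rw [hmT, Set.ncard_pair hpx])).symm
    refine ⟨hTeq, ?_⟩
    ext y
    simp only [Set.mem_inter_iff, Set.mem_setOf_eq, Set.mem_singleton_iff]
    constructor
    · rintro ⟨hym, hyS⟩
      have : y ∈ ({p, x} : Set (PG F)) := hTeq ▸ (⟨hym, hsub hyS⟩ : y ∈ {y : PG F | y ∈ φ x} ∩ T)
      rcases this with rfl | rfl
      · rfl
      · exact absurd hyS hxS
    · rintro rfl
      exact ⟨hpm, hp⟩
  have hinj : Set.InjOn φ E := by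
    intro x hx y hy hxy
    have h1 := (hφspec x hx).1
    have h2 := (hφspec y hy).1
    rw [hxy, h2] at h1
    have hxS : x ∉ S := hx.1.2
    have hxp : x ≠ p := fun h => hxS (h ▸ hp)
    have : x ∈ ({p, y} : Set (PG F)) := h1 ▸ (Set.mem_insert_iff.2 (Or.inr rfl))
    rcases this with h | h
    · exact absurd h hxp
    · exact h
  have himg : {l : PG F | {x : PG F | x ∈ l} ∩ S = {p}} = φ '' E := by
    ext m
    simp only [Set.mem_setOf_eq, Set.mem_image]
    constructor
    · intro hm
      have hpm : p ∈ m := by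
        have : p ∈ {x : PG F | x ∈ m} ∩ S := hm ▸ rfl
        exact this.1
      have hmne : ({x : PG F | x ∈ m} ∩ S).ncard = 1 := by rw [hm]; exact Set.ncard_singleton p
      have hmT2 : ({x : PG F | x ∈ m} ∩ T).ncard = 2 := by
        rcases htype m with h | h | h
        · exfalso
          rw [Set.ncard_eq_zero] at h
          exact absurd (h ▸ (⟨hpm, hpT⟩ : p ∈ {x : PG F | x ∈ m} ∩ T)) (Set.notMem_empty p)
        · exact h
        · exfalso
          have hml₀ : m = l₀ := huniq p hpT m h l₀ hl₀Sec hpm hpl₀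
          have := hpart3 m h
          rw [hm, Set.ncard_singleton] at this
          omega
      obtain ⟨a, b, hab, habeq⟩ := Set.ncard_eq_two.1 hmT2
      have hpmem : p ∈ ({a, b} : Set (PG F)) := habeq ▸ (⟨hpm, hpT⟩ : p ∈ {x : PG F | x ∈ m} ∩ T)
      have key : ∃ x, x ≠ p ∧ {x : PG F | x ∈ m} ∩ T = {p, x} := by
        rcases hpmem with rfl | rfl
        · exact ⟨b, fun h => hab h.symm, habeq⟩
        · exact ⟨a, fun h => hab h, habeq.trans (Set.pair_comm a p)⟩
      obtain ⟨x, hxp, hmTeq⟩ := key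
      have hxmT : x ∈ {x : PG F | x ∈ m} ∩ T := by
        rw [hmTeq]; exact Set.mem_insert_iff.2 (Or.inr rfl)
      obtain ⟨hxm, hxT⟩ := hxmT
      have hxS : x ∉ S := by
        intro h
        have hxin : x ∈ ({p} : Set (PG F)) := hm ▸ (⟨hxm, h⟩ : x ∈ {x : PG F | x ∈ m} ∩ S)
        exact hxp hxin
      have hxl₀ : x ∉ {y : PG F | y ∈ l₀} := by
        intro hxl₀
        have hml₀ : m = l₀ := line_unique hxp hxm hpm hxl₀ hpl₀
        rw [hml₀] at hmT2
        rw [hSecdef, Set.mem_setOf_eq] at hl₀Sec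
        omega
      refine ⟨x, ⟨⟨hxT, hxS⟩, hxl₀⟩, ?_⟩
      have hpx : p ≠ x := fun h => hxp h.symm
      have hφx : φ x = HasLines.mkLine hpx := dif_neg hpx
      rw [hφx]
      exact line_unique hpx (HasLines.mkLine_ax hpx).1 (HasLines.mkLine_ax hpx).2 hpm hxm
    · rintro ⟨x, hx, rfl⟩
      exact (hφspec x hx).2
  rw [himg, Set.ncard_image_of_injOn hinj]
  have hEeq : E = (T \ S) \ (({x : PG F | x ∈ l₀} ∩ T) \ S) := by
    ext x
    simp only [hE, Set.mem_diff, Set.mem_inter_iff, Set.mem_setOf_eq, not_and, not_not]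
    constructor
    · rintro ⟨⟨hxT, hxS⟩, hxl₀⟩
      exact ⟨⟨hxT, hxS⟩, fun h => absurd h.1 hxl₀⟩
    · rintro ⟨⟨hxT, hxS⟩, h⟩
      refine ⟨⟨hxT, hxS⟩, fun hxl₀ => hxS (h ⟨hxl₀, hxT⟩)⟩
  have hBsub : (({x : PG F | x ∈ l₀} ∩ T) \ S) ⊆ T \ S := fun x hx => ⟨hx.1.2, hx.2⟩
  rw [hEeq, Set.ncard_diff hBsub, hdel l₀ hl₀Sec, hTS, Nat.mul_add, Nat.mul_one,
    Nat.add_sub_cancel]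
end

section
/- Let Π be a projective plane of order q ≥ 9 containing a Baer subplane B (a subplane of order √q), let ℓ be a line of Π extending a line of B, let P ⊂ B \ ℓ be a set of t ≤ q - √q - 2 points such that no line meets P in exactly √q - 1 points, and let T ⊂ ℓ \ B be a set of t points. Then S = (B △ ℓ) \ (T ∪ P) is a t-semiarc of size (q - √q - t) + (q - t), and ℓ ∩ S has size q - √q - t. -/
open Configuration

/-- A Baer subplane (as a pointset) of a projective plane of square order `q = r * r`:
a set of `q + r + 1` points meeting every line in `1` or `r + 1` points. -/
def IsBaerSubplane (P : Type*) (L : Type*) [Membership P L] (q r : ℕ) (B : Set P) : Prop :=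
  q = r * r ∧ B.ncard = q + r + 1 ∧
    ∀ l : L, ({x : P | x ∈ l} ∩ B).ncard = 1 ∨ ({x : P | x ∈ l} ∩ B).ncard = r + 1

section Aux

open Configuration.ProjectivePlane

variable {P L : Type*} [Membership P L] [Fintype P] [Fintype L] [ProjectivePlane P L]

lemma Baer.pts_ncard {q : ℕ} (hq : order P L = q) (l : L) :
    ({x : P | x ∈ l}).ncard = q + 1 := by
  have h := pointCount_eq P l
  rw [hq] at h
  rw [← h, ← Nat.card_coe_set_eq]
  rfl

lemma Baer.unique_secant {q r : ℕ} (hq : order P L = q) (hr : 3 ≤ r)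
    {B : Set P} (hBcard : B.ncard = q + r + 1)
    (hBl : ∀ l : L, ({x : P | x ∈ l} ∩ B).ncard = 1 ∨ ({x : P | x ∈ l} ∩ B).ncard = r + 1)
    {x : P} (hx : x ∉ B) {l₁ l₂ : L} (h₁ : x ∈ l₁) (h₂ : x ∈ l₂)
    (hs₁ : ({y : P | y ∈ l₁} ∩ B).ncard = r + 1)
    (hs₂ : ({y : P | y ∈ l₂} ∩ B).ncard = r + 1) : l₁ = l₂ := by
  classical
  by_contra hne
  set F : Finset L := Finset.univ.filter (fun l => x ∈ l) with hF
  have hFcard : F.card = q + 1 := by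
    have h := lineCount_eq L x
    rw [hq] at h
    rw [hF, ← h, lineCount, Nat.card_eq_fintype_card, Fintype.card_subtype]
  set g : L → Finset P := fun l => ({y : P | y ∈ l} ∩ B).toFinset with hg
  have hgcard : ∀ l : L, (g l).card = ({y : P | y ∈ l} ∩ B).ncard := fun l => by
    rw [hg, Set.ncard_eq_toFinset_card']
  have hg1 : ∀ l : L, 1 ≤ (g l).card := by
    intro l
    rcases hBl l with h | h <;> rw [hgcard, h] <;> omega
  have hdisj : ∀ m₁ ∈ F, ∀ m₂ ∈ F, m₁ ≠ m₂ → Disjoint (g m₁) (g m₂) := by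
    intro m₁ hm₁ m₂ hm₂ hmne
    rw [Finset.disjoint_left]
    intro a ha₁ ha₂
    simp only [hg, Set.mem_toFinset, Set.mem_inter_iff, Set.mem_setOf_eq] at ha₁ ha₂
    rcases Nondegenerate.eq_or_eq ha₁.1 (Finset.mem_filter.mp hm₁).2 ha₂.1
      (Finset.mem_filter.mp hm₂).2 with h | h
    · exact hx (h ▸ ha₁.2)
    · exact hmne h
  have hsum : ∑ l ∈ F, (g l).card = (F.biUnion g).card := (Finset.card_biUnion hdisj).symm
  have hsub : F.biUnion g ⊆ B.toFinset := by
    intro a ha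
    rw [Finset.mem_biUnion] at ha
    obtain ⟨l, -, hal⟩ := ha
    simp only [hg, Set.mem_toFinset, Set.mem_inter_iff] at hal ⊢
    exact hal.2
  have hle : (F.biUnion g).card ≤ q + r + 1 := by
    have := Finset.card_le_card hsub
    rwa [← Set.ncard_eq_toFinset_card', hBcard] at this
  have hl₁F : l₁ ∈ F := Finset.mem_filter.mpr ⟨Finset.mem_univ _, h₁⟩
  have hl₂F : l₂ ∈ F.erase l₁ :=
    Finset.mem_erase.mpr ⟨Ne.symm hne, Finset.mem_filter.mpr ⟨Finset.mem_univ _, h₂⟩⟩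
  have e1 : ∑ l ∈ F, (g l).card = (g l₁).card + ∑ l ∈ F.erase l₁, (g l).card :=
    (Finset.add_sum_erase F _ hl₁F).symm
  have e2 : ∑ l ∈ F.erase l₁, (g l).card
      = (g l₂).card + ∑ l ∈ (F.erase l₁).erase l₂, (g l).card :=
    (Finset.add_sum_erase _ _ hl₂F).symm
  have e3 : ((F.erase l₁).erase l₂).card = q - 1 := by
    rw [Finset.card_erase_of_mem hl₂F, Finset.card_erase_of_mem hl₁F, hFcard]
    omega
  have e4 : ((F.erase l₁).erase l₂).card ≤ ∑ l ∈ (F.erase l₁).erase l₂, (g l).card := by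
    calc ((F.erase l₁).erase l₂).card = ∑ _l ∈ (F.erase l₁).erase l₂, 1 := by simp
    _ ≤ _ := Finset.sum_le_sum fun l _ => hg1 l
  rw [hgcard, hs₁] at e1
  rw [hgcard, hs₂] at e2
  have hq1 : 1 ≤ q := by
    have : 1 < order P L := one_lt_order P L
    omega
  omega

end Aux

theorem baer_symmDiff_semiarc
    {P L : Type*} [Membership P L] [Fintype P] [Fintype L]
    [Configuration.ProjectivePlane P L]
    (q r t : ℕ) (hq : Configuration.ProjectivePlane.order P L = q) (hq9 : 9 ≤ q)
    (B : Set P) (hB : IsBaerSubplane P L q r B)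
    (ℓ : L) (hℓ : ({x : P | x ∈ ℓ} ∩ B).ncard = r + 1)
    (Pset : Set P) (hPB : Pset ⊆ B \ {x : P | x ∈ ℓ}) (hPcard : Pset.ncard = t)
    (ht : t ≤ q - r - 2)
    (hPline : ∀ l : L, ({x : P | x ∈ l} ∩ Pset).ncard ≠ r - 1)
    (Tset : Set P) (hT : Tset ⊆ {x : P | x ∈ ℓ} \ B) (hTcard : Tset.ncard = t) :
    IsSemiarc P L t ((symmDiff B {x : P | x ∈ ℓ}) \ (Tset ∪ Pset)) ∧
      ((symmDiff B {x : P | x ∈ ℓ}) \ (Tset ∪ Pset)).ncard = (q - r - t) + (q - t) ∧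
      ({x : P | x ∈ ℓ} ∩ ((symmDiff B {x : P | x ∈ ℓ}) \ (Tset ∪ Pset))).ncard = q - r - t := by
  classical
  obtain ⟨hqr, hBcard, hBl⟩ := hB
  set ℓs : Set P := {x : P | x ∈ ℓ} with hℓsdef
  set S : Set P := symmDiff B ℓs \ (Tset ∪ Pset) with hSdef
  have hr3 : 3 ≤ r := by
    by_contra h
    push_neg at h
    interval_cases r <;> omega
  have h3r : 3 * r ≤ r * r := Nat.mul_le_mul_right r hr3
  have h2r : 2 * r + 2 ≤ q := by omega
  have hPs : ∀ y ∈ Pset, y ∈ B ∧ y ∉ ℓs := fun y hy => ⟨(hPB hy).1, (hPB hy).2⟩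
  have hTs : ∀ y ∈ Tset, y ∈ ℓs ∧ y ∉ B := fun y hy => ⟨(hT hy).1, (hT hy).2⟩
  have hℓcard : ℓs.ncard = q + 1 := Baer.pts_ncard hq ℓ
  have hBdiff : (B \ ℓs).ncard = q := by
    have h1 : B \ ℓs = B \ (ℓs ∩ B) := (Set.diff_inter_self_eq_diff).symm
    rw [h1, Set.ncard_diff Set.inter_subset_right, hBcard, hℓ]
    omega
  have hℓdiff : (ℓs \ B).ncard = q - r := by
    have h1 : ℓs \ B = ℓs \ (ℓs ∩ B) := (Set.diff_self_inter).symm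
    rw [h1, Set.ncard_diff Set.inter_subset_left, hℓcard, hℓ]
    omega
  have hSmem : ∀ y, y ∈ S ↔
      ((y ∈ B ∧ y ∉ ℓs) ∨ (y ∈ ℓs ∧ y ∉ B)) ∧ y ∉ Tset ∧ y ∉ Pset := by
    intro y
    rw [hSdef]
    simp only [Set.mem_diff, Set.mem_union, Set.mem_symmDiff]
    tauto
  have hSdecomp : S = ((B \ ℓs) \ Pset) ∪ ((ℓs \ B) \ Tset) := by
    ext y
    rw [hSmem y]
    simp only [Set.mem_union, Set.mem_diff]
    constructor
    · rintro ⟨h1 | h1, h2, h3⟩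
      · exact Or.inl ⟨⟨h1.1, h1.2⟩, h3⟩
      · exact Or.inr ⟨⟨h1.1, h1.2⟩, h2⟩
    · rintro (⟨⟨hyB, hyℓ⟩, hyP⟩ | ⟨⟨hyℓ, hyB⟩, hyT⟩)
      · exact ⟨Or.inl ⟨hyB, hyℓ⟩, fun hT' => hyℓ (hTs _ hT').1, hyP⟩
      · exact ⟨Or.inr ⟨hyℓ, hyB⟩, hyT, fun hP' => hyB (hPs _ hP').1⟩
  have hc1 : ((B \ ℓs) \ Pset).ncard = q - t := by
    rw [Set.ncard_diff hPB, hBdiff, hPcard]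
  have hc2 : ((ℓs \ B) \ Tset).ncard = q - r - t := by
    rw [Set.ncard_diff hT, hℓdiff, hTcard]
  have hdisj2 : Disjoint ((B \ ℓs) \ Pset) ((ℓs \ B) \ Tset) := by
    rw [Set.disjoint_left]
    rintro a ⟨⟨-, haℓ⟩, -⟩ ⟨⟨haℓ', -⟩, -⟩
    exact haℓ haℓ'
  have hScard : S.ncard = (q - r - t) + (q - t) := by
    rw [hSdecomp, Set.ncard_union_eq hdisj2, hc1, hc2]
    omega
  have hℓS : ℓs ∩ S = (ℓs \ B) \ Tset := by
    ext y
    simp only [Set.mem_inter_iff, hSmem y, Set.mem_diff]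
    constructor
    · rintro ⟨hyℓ, h1 | h1, h2, h3⟩
      · exact absurd hyℓ h1.2
      · exact ⟨⟨hyℓ, h1.2⟩, h2⟩
    · rintro ⟨⟨hyℓ, hyB⟩, hyT⟩
      exact ⟨hyℓ, Or.inr ⟨hyℓ, hyB⟩, hyT, fun hP' => hyB (hPs _ hP').1⟩
  have hℓScard : (ℓs ∩ S).ncard = q - r - t := by rw [hℓS, hc2]
  have hSne : S.Nonempty := by
    rw [← Set.ncard_pos, hScard]
    omega
  have line_unique : ∀ {a b : P} {m m' : L}, a ≠ b → a ∈ m → b ∈ m → a ∈ m' → b ∈ m' →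
      m = m' := fun hab ham hbm ham' hbm' =>
    (Nondegenerate.eq_or_eq ham hbm ham' hbm').resolve_left hab
  have htan : ∀ p ∈ S, Nat.card {l : L | {x : P | x ∈ l} ∩ S = {p}} = t := by
    intro p hp
    rw [hSdecomp] at hp
    rcases hp with hp | hp
    · -- Case: p ∈ (B \ ℓs) \ Pset
      obtain ⟨⟨hpB, hpℓ⟩, hpP⟩ := hp
      have hpT : p ∉ Tset := fun h => hpℓ (hTs p h).1
      have hpℓ' : p ∉ ℓ := hpℓ
      have hpS : p ∈ S := (hSmem p).mpr ⟨Or.inl ⟨hpB, hpℓ⟩, hpT, hpP⟩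
      have key : {l : L | {x : P | x ∈ l} ∩ S = {p}}
          = (fun x : P => if h : p = x then ℓ else HasLines.mkLine h) '' Tset := by
        ext m
        simp only [Set.mem_setOf_eq, Set.mem_image]
        constructor
        · intro hm
          have hpm : p ∈ m := by
            have h1 : p ∈ ({x : P | x ∈ m} ∩ S) := by rw [hm]; exact rfl
            exact h1.1
          have hmℓ : m ≠ ℓ := fun h => hpℓ' (h ▸ hpm)
          obtain ⟨x, hxm, hxℓ, hxuniq⟩ : ∃ x, x ∈ m ∧ x ∈ ℓ ∧
              ∀ y, y ∈ m → y ∈ ℓ → y = x :=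
            ⟨HasPoints.mkPoint hmℓ, (HasPoints.mkPoint_ax hmℓ).1,
              (HasPoints.mkPoint_ax hmℓ).2, fun y hy hy' =>
              (Nondegenerate.eq_or_eq hy (HasPoints.mkPoint_ax hmℓ).1 hy'
                (HasPoints.mkPoint_ax hmℓ).2).resolve_right hmℓ⟩
          have hpx : p ≠ x := fun h => hpℓ' (h ▸ hxℓ)
          rcases hBl m with hsec | hsec
          · obtain ⟨b, hb⟩ := Set.ncard_eq_one.mp hsec
            have hbp : b = p := by
              have h1 : p ∈ ({x : P | x ∈ m} ∩ B) := ⟨hpm, hpB⟩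
              rw [hb] at h1
              exact h1.symm
            subst hbp
            have hxB : x ∉ B := by
              intro hxB
              have h1 : x ∈ ({y : P | y ∈ m} ∩ B) := ⟨hxm, hxB⟩
              rw [hb] at h1
              exact hpx h1.symm
            have hxT : x ∈ Tset := by
              by_contra hxT
              have h1 : x ∈ ({y : P | y ∈ m} ∩ S) :=
                ⟨hxm, (hSmem x).mpr ⟨Or.inr ⟨hxℓ, hxB⟩, hxT, fun h => hxB (hPs x h).1⟩⟩
              rw [hm] at h1
              exact hpx h1.symm
            refine ⟨x, hxT, ?_⟩
            rw [dif_neg hpx]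
            exact line_unique hpx (HasLines.mkLine_ax hpx).1 (HasLines.mkLine_ax hpx).2 hpm hxm
          · exfalso
            have hxB : x ∈ B := by
              by_contra hxB
              exact hmℓ (Baer.unique_secant hq hr3 hBcard hBl hxB hxm hxℓ hsec hℓ)
            have hPeq : {y : P | y ∈ m} ∩ Pset = ({y : P | y ∈ m} ∩ B) \ {x, p} := by
              ext y
              simp only [Set.mem_inter_iff, Set.mem_diff, Set.mem_insert_iff,
                Set.mem_singleton_iff, Set.mem_setOf_eq, not_or]
              constructor
              · rintro ⟨hym, hyP⟩
                refine ⟨⟨hym, (hPs y hyP).1⟩, ?_, ?_⟩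
                · rintro rfl
                  exact (hPs y hyP).2 hxℓ
                · rintro rfl
                  exact hpP hyP
              · rintro ⟨⟨hym, hyB⟩, hyx, hyp⟩
                refine ⟨hym, ?_⟩
                by_contra hyP
                have hyℓ : y ∉ ℓs := fun h => hyx (hxuniq y hym h)
                have h1 : y ∈ ({z : P | z ∈ m} ∩ S) :=
                  ⟨hym, (hSmem y).mpr ⟨Or.inl ⟨hyB, hyℓ⟩, fun h => hyℓ (hTs y h).1, hyP⟩⟩
                rw [hm] at h1
                exact hyp h1
            have hxp_sub : ({x, p} : Set P) ⊆ {y : P | y ∈ m} ∩ B := by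
              intro z hz
              simp only [Set.mem_insert_iff, Set.mem_singleton_iff] at hz
              rcases hz with rfl | rfl
              · exact ⟨hxm, hxB⟩
              · exact ⟨hpm, hpB⟩
            have hfin : ({y : P | y ∈ m} ∩ Pset).ncard = r - 1 := by
              rw [hPeq, Set.ncard_diff hxp_sub, hsec, Set.ncard_pair (Ne.symm hpx)]
              omega
            exact hPline m hfin
        · rintro ⟨x, hxT, rfl⟩
          obtain ⟨hxℓ, hxB⟩ := hTs x hxT
          have hxℓ' : x ∈ ℓ := hxℓ
          have hpx : p ≠ x := fun h => hpℓ' (h ▸ hxℓ')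
          rw [dif_neg hpx]
          obtain ⟨hpm, hxm⟩ := HasLines.mkLine_ax (L := L) hpx
          have hmℓ : HasLines.mkLine (L := L) hpx ≠ ℓ := fun h => hpℓ' (h ▸ hpm)
          have hmB : {y : P | y ∈ HasLines.mkLine (L := L) hpx} ∩ B = {p} := by
            rcases hBl (HasLines.mkLine (L := L) hpx) with hsec | hsec
            · obtain ⟨b, hb⟩ := Set.ncard_eq_one.mp hsec
              have h1 : p ∈ ({y : P | y ∈ HasLines.mkLine (L := L) hpx} ∩ B) := ⟨hpm, hpB⟩
              rw [hb] at h1 ⊢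
              rw [h1]
            · exact absurd (Baer.unique_secant hq hr3 hBcard hBl hxB hxm hxℓ' hsec hℓ) hmℓ
          have hxuniq : ∀ y, y ∈ HasLines.mkLine (L := L) hpx → y ∈ ℓs → y = x := fun y hy hy' =>
            (Nondegenerate.eq_or_eq hy hxm hy' hxℓ').resolve_right hmℓ
          ext y
          simp only [Set.mem_inter_iff, Set.mem_setOf_eq, Set.mem_singleton_iff]
          constructor
          · rintro ⟨hym, hyS⟩
            rw [hSmem] at hyS
            obtain ⟨hy1, hyT, hyP⟩ := hyS
            rcases hy1 with ⟨hyB, -⟩ | ⟨hyℓ, -⟩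
            · have h1 : y ∈ ({z : P | z ∈ HasLines.mkLine (L := L) hpx} ∩ B) := ⟨hym, hyB⟩
              rw [hmB] at h1
              exact h1
            · exact absurd (hxuniq y hym hyℓ ▸ hxT) hyT
          · rintro rfl
            exact ⟨hpm, hpS⟩
      have hinj : Set.InjOn (fun x : P => if h : p = x then ℓ else HasLines.mkLine h) Tset := by
        intro x₁ h₁ x₂ h₂ hfe
        have hpx₁ : p ≠ x₁ := fun h => hpℓ (h ▸ (hTs _ h₁).1)
        have hpx₂ : p ≠ x₂ := fun h => hpℓ (h ▸ (hTs _ h₂).1)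
        simp only [dif_neg hpx₁, dif_neg hpx₂] at hfe
        have hm := HasLines.mkLine_ax (L := L) hpx₁
        have hx₂m : x₂ ∈ HasLines.mkLine (L := L) hpx₁ := hfe ▸ (HasLines.mkLine_ax hpx₂).2
        have hne : HasLines.mkLine (L := L) hpx₁ ≠ ℓ := fun h => hpℓ' (h ▸ hm.1)
        exact (Nondegenerate.eq_or_eq hm.2 hx₂m (hTs _ h₁).1 (hTs _ h₂).1).resolve_right hne
      rw [Nat.card_coe_set_eq, key, Set.ncard_image_of_injOn hinj, hTcard]
    · -- Case: p ∈ (ℓs \ B) \ Tset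
      obtain ⟨⟨hpℓ, hpB⟩, hpT⟩ := hp
      have hpP : p ∉ Pset := fun h => hpB (hPs p h).1
      have hpℓ' : p ∈ ℓ := hpℓ
      have hpS : p ∈ S := (hSmem p).mpr ⟨Or.inr ⟨hpℓ, hpB⟩, hpT, hpP⟩
      have key : {l : L | {x : P | x ∈ l} ∩ S = {p}}
          = (fun x : P => if h : p = x then ℓ else HasLines.mkLine h) '' Pset := by
        ext m
        simp only [Set.mem_setOf_eq, Set.mem_image]
        constructor
        · intro hm
          have hpm : p ∈ m := by
            have h1 : p ∈ ({x : P | x ∈ m} ∩ S) := by rw [hm]; exact rfl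
            exact h1.1
          have hmℓ : m ≠ ℓ := by
            rintro rfl
            have h1 : (ℓs ∩ S).ncard = 1 := by
              rw [show (ℓs ∩ S) = {p} from hm, Set.ncard_singleton]
            rw [hℓScard] at h1
            omega
          have hpuniq : ∀ y, y ∈ m → y ∈ ℓ → y = p := fun y hy hy' =>
            (Nondegenerate.eq_or_eq hy hpm hy' hpℓ).resolve_right hmℓ
          rcases hBl m with hsec | hsec
          · obtain ⟨b, hb⟩ := Set.ncard_eq_one.mp hsec
            have hbm : b ∈ m ∧ b ∈ B := by
              have h1 : b ∈ ({y : P | y ∈ m} ∩ B) := by rw [hb]; exact rfl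
              exact ⟨h1.1, h1.2⟩
            have hbℓ : b ∉ ℓs := fun h => hpB ((hpuniq b hbm.1 h) ▸ hbm.2)
            have hbP : b ∈ Pset := by
              by_contra hbP
              have h1 : b ∈ ({y : P | y ∈ m} ∩ S) :=
                ⟨hbm.1, (hSmem b).mpr ⟨Or.inl ⟨hbm.2, hbℓ⟩, fun h => hbℓ (hTs b h).1, hbP⟩⟩
              rw [hm] at h1
              exact hpB (h1 ▸ hbm.2)
            have hpb : p ≠ b := fun h => hpB (h ▸ hbm.2)
            refine ⟨b, hbP, ?_⟩
            rw [dif_neg hpb]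
            exact line_unique hpb (HasLines.mkLine_ax hpb).1 (HasLines.mkLine_ax hpb).2
              hpm hbm.1
          · exact absurd (Baer.unique_secant hq hr3 hBcard hBl hpB hpm hpℓ hsec hℓ) hmℓ
        · rintro ⟨x, hxP, rfl⟩
          obtain ⟨hxB, hxℓ⟩ := hPs x hxP
          have hxℓ' : x ∉ ℓ := hxℓ
          have hpx : p ≠ x := fun h => hxℓ (h ▸ hpℓ)
          rw [dif_neg hpx]
          obtain ⟨hpm, hxm⟩ := HasLines.mkLine_ax (L := L) hpx
          have hmℓ : HasLines.mkLine (L := L) hpx ≠ ℓ := fun h => hxℓ' (h ▸ hxm)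
          have hmB : {y : P | y ∈ HasLines.mkLine (L := L) hpx} ∩ B = {x} := by
            rcases hBl (HasLines.mkLine (L := L) hpx) with hsec | hsec
            · obtain ⟨b, hb⟩ := Set.ncard_eq_one.mp hsec
              have h1 : x ∈ ({y : P | y ∈ HasLines.mkLine (L := L) hpx} ∩ B) := ⟨hxm, hxB⟩
              rw [hb] at h1 ⊢
              rw [h1]
            · exact absurd (Baer.unique_secant hq hr3 hBcard hBl hpB hpm hpℓ hsec hℓ) hmℓ
          have hpuniq : ∀ y, y ∈ HasLines.mkLine (L := L) hpx → y ∈ ℓs → y = p := fun y hy hy' =>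
            (Nondegenerate.eq_or_eq hy hpm hy' hpℓ).resolve_right hmℓ
          ext y
          simp only [Set.mem_inter_iff, Set.mem_setOf_eq, Set.mem_singleton_iff]
          constructor
          · rintro ⟨hym, hyS⟩
            rw [hSmem] at hyS
            obtain ⟨hy1, hyT, hyP⟩ := hyS
            rcases hy1 with ⟨hyB, -⟩ | ⟨hyℓ, -⟩
            · exfalso
              have h1 : y ∈ ({z : P | z ∈ HasLines.mkLine (L := L) hpx} ∩ B) := ⟨hym, hyB⟩
              rw [hmB] at h1
              exact hyP (h1 ▸ hxP)
            · exact hpuniq y hym hyℓ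
          · rintro rfl
            exact ⟨hpm, hpS⟩
      have hinj : Set.InjOn (fun x : P => if h : p = x then ℓ else HasLines.mkLine h) Pset := by
        intro x₁ h₁ x₂ h₂ hfe
        have hpx₁ : p ≠ x₁ := fun h => (hPs _ h₁).2 (h ▸ hpℓ)
        have hpx₂ : p ≠ x₂ := fun h => (hPs _ h₂).2 (h ▸ hpℓ)
        simp only [dif_neg hpx₁, dif_neg hpx₂] at hfe
        have hm := HasLines.mkLine_ax (L := L) hpx₁
        have hx₂m : x₂ ∈ HasLines.mkLine (L := L) hpx₁ := hfe ▸ (HasLines.mkLine_ax hpx₂).2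
        have hmℓ : HasLines.mkLine (L := L) hpx₁ ≠ ℓ := fun h =>
          (show x₁ ∉ ℓ from (hPs _ h₁).2) (h ▸ hm.2)
        rcases hBl (HasLines.mkLine (L := L) hpx₁) with hsec | hsec
        · obtain ⟨b, hb⟩ := Set.ncard_eq_one.mp hsec
          have e₁ : x₁ ∈ ({y : P | y ∈ HasLines.mkLine (L := L) hpx₁} ∩ B) := ⟨hm.2, (hPs _ h₁).1⟩
          have e₂ : x₂ ∈ ({y : P | y ∈ HasLines.mkLine (L := L) hpx₁} ∩ B) := ⟨hx₂m, (hPs _ h₂).1⟩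
          rw [hb] at e₁ e₂
          rw [e₁, e₂]
        · exact absurd (Baer.unique_secant hq hr3 hBcard hBl hpB hm.1 hpℓ hsec hℓ) hmℓ
      rw [Nat.card_coe_set_eq, key, Set.ncard_image_of_injOn hinj, hPcard]
  exact ⟨⟨hSne, htan⟩, hScard.symm ▸ by omega, hℓScard⟩
end

section
/- Let z ≥ 3 and t be positive integers with t ≤ √(q(z-1)/z). Let U ⊂ AG(2,q) have size q - t, and let E ⊆ F be sets of directions (points on the line at infinity) such that: (1) through each point of U there are at least t tangent lines to U with direction in F; (2) there is a set P of t affine points disjoint from U such that every tangent to U with direction in F \ E meets U ∪ P in 0 mod z points. Then |E| ≥ t. -/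
/-- A line of `AG(2,F)` with direction `d`: `some m` denotes slope `m`,
`none` denotes the vertical direction. -/
def IsLineWithDirection {F : Type*} [Field F] (d : Option F) (l : Set (F × F)) : Prop :=
  match d with
  | some m => ∃ c : F, l = {p : F × F | p.2 = m * p.1 + c}
  | none => ∃ c : F, l = {p : F × F | p.1 = c}

/-- Two distinct points lie on at most one line. -/
lemma line_eq_of_two_points {F : Type*} [Field F] {d d' : Option F} {l l' : Set (F × F)}
    (hl : IsLineWithDirection d l) (hl' : IsLineWithDirection d' l')
    {p p' : F × F} (hpl : p ∈ l) (hpl' : p ∈ l') (hp'l : p' ∈ l) (hp'l' : p' ∈ l')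
    (hne : p ≠ p') : l = l' := by
  match d, d' with
  | none, none =>
    obtain ⟨c, rfl⟩ := hl; obtain ⟨c', rfl⟩ := hl'
    simp only [Set.mem_setOf_eq] at hpl hpl'
    rw [hpl] at hpl'; rw [hpl']
  | none, some m' =>
    obtain ⟨c, rfl⟩ := hl; obtain ⟨c', rfl⟩ := hl'
    simp only [Set.mem_setOf_eq] at hpl hpl' hp'l hp'l'
    exact absurd (Prod.ext (hpl.trans hp'l.symm)
      (by rw [hpl', hp'l', hpl, hp'l])) hne
  | some m, none =>
    obtain ⟨c, rfl⟩ := hl; obtain ⟨c', rfl⟩ := hl'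
    simp only [Set.mem_setOf_eq] at hpl hpl' hp'l hp'l'
    exact absurd (Prod.ext (hpl'.trans hp'l'.symm)
      (by rw [hpl, hp'l, hpl', hp'l'])) hne
  | some m, some m' =>
    obtain ⟨c, rfl⟩ := hl; obtain ⟨c', rfl⟩ := hl'
    simp only [Set.mem_setOf_eq] at hpl hpl' hp'l hp'l'
    have hx : p.1 ≠ p'.1 := by
      intro hx
      exact hne (Prod.ext hx (by rw [hpl, hp'l, hx]))
    have hm : m = m' := by
      have h1 : m * (p.1 - p'.1) = m' * (p.1 - p'.1) := by
        linear_combination -hpl + hpl' + hp'l - hp'l'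
      exact mul_right_cancel₀ (sub_ne_zero.mpr hx) h1
    have hc : c = c' := by
      have h2 := hpl.symm.trans hpl'
      rw [hm] at h2
      exact add_left_cancel h2
    rw [hm, hc]

/-- Through a given point there is at most one line with a given direction. -/
lemma line_unique_of_direction {F : Type*} [Field F] {d : Option F} {l l' : Set (F × F)}
    (hl : IsLineWithDirection d l) (hl' : IsLineWithDirection d l')
    {p : F × F} (hpl : p ∈ l) (hpl' : p ∈ l') : l = l' := by
  match d with
  | none =>
    obtain ⟨c, rfl⟩ := hl; obtain ⟨c', rfl⟩ := hl'
    simp only [Set.mem_setOf_eq] at hpl hpl'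
    rw [hpl] at hpl'; rw [hpl']
  | some m =>
    obtain ⟨c, rfl⟩ := hl; obtain ⟨c', rfl⟩ := hl'
    simp only [Set.mem_setOf_eq] at hpl hpl'
    have : c = c' := add_left_cancel (hpl.symm.trans hpl')
    rw [this]

theorem directions_blocking_tangents_bound
    {F : Type*} [Field F] [Fintype F] (q : ℕ) (hq : Fintype.card F = q)
    (z t : ℕ) (hz : 3 ≤ z) (ht0 : 1 ≤ t)
    (ht : (t : ℝ) ≤ Real.sqrt (q * (z - 1) / z))
    (U : Set (F × F)) (hU : U.ncard = q - t)
    (E Fdir : Set (Option F)) (hEF : E ⊆ Fdir)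
    -- through each point of `U` there are at least `t` tangents to `U` with direction in `Fdir`
    (htang : ∀ P ∈ U, t ≤ {l : Set (F × F) |
      (∃ d ∈ Fdir, IsLineWithDirection d l) ∧ l ∩ U = {P}}.ncard)
    -- a set `Pp` of `t` affine points disjoint from `U` such that every tangent to `U`
    -- with direction in `Fdir \ E` meets `U ∪ Pp` in `0 mod z` points
    (hP : ∃ Pp : Set (F × F), Pp.ncard = t ∧ Disjoint U Pp ∧
      ∀ d ∈ Fdir \ E, ∀ l : Set (F × F), IsLineWithDirection d l →
        (∃ P₀, l ∩ U = {P₀}) → z ∣ ((U ∪ Pp) ∩ l).ncard) :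
    t ≤ E.ncard := by
  classical
  by_contra hcon
  push_neg at hcon
  obtain ⟨Pp, hPcard, hdisj, hPp⟩ := hP
  have hq1 : 1 ≤ q := by rw [← hq]; exact Fintype.card_pos
  -- arithmetic: t^2 ≤ q - 1, hence t < q
  have htsq : t * t < q := by
    have hz0 : (0:ℝ) < z := by positivity
    have hx : (0:ℝ) ≤ (q : ℝ) * ((z:ℝ) - 1) / z := by
      apply div_nonneg _ hz0.le
      have : (1:ℝ) ≤ z := by exact_mod_cast le_trans (by norm_num) hz
      nlinarith
    have h2 : (t:ℝ)^2 ≤ (q : ℝ) * ((z:ℝ) - 1) / z :=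
      (Real.le_sqrt (by positivity) hx).mp ht
    have h3 : (t:ℝ)^2 * z ≤ (q : ℝ) * ((z:ℝ) - 1) := by
      rw [div_eq_mul_inv] at h2
      calc (t:ℝ)^2 * z ≤ ((q : ℝ) * ((z:ℝ) - 1) * (z:ℝ)⁻¹) * z := by
            apply mul_le_mul_of_nonneg_right h2 hz0.le
        _ = (q : ℝ) * ((z:ℝ) - 1) := by field_simp
    by_contra hle
    push_neg at hle
    have hqt : (q:ℝ) ≤ (t:ℝ) * t := by exact_mod_cast hle
    have hq1' : (1:ℝ) ≤ q := by exact_mod_cast hq1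
    nlinarith [h3, hqt, hq1']
  have htq : t < q := lt_of_le_of_lt (Nat.le_mul_of_pos_left t ht0) htsq
  -- U is nonempty, in fact every u in U has a tangent with direction in Fdir \ E
  have key : ∀ u, ∃ (l : Set (F × F)) (p₁ p₂ : F × F), u ∈ U →
      ((∃ d ∈ Fdir \ E, IsLineWithDirection d l) ∧ l ∩ U = {u} ∧
        p₁ ∈ l ∩ Pp ∧ p₂ ∈ l ∩ Pp ∧ p₁ ≠ p₂) := by
    intro u
    by_cases hu : u ∈ U
    swap
    · exact ⟨∅, u, u, fun h => absurd h hu⟩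
    -- first find the tangent with direction avoiding E
    have hex : ∃ l : Set (F × F), (∃ d ∈ Fdir \ E, IsLineWithDirection d l) ∧ l ∩ U = {u} := by
      by_contra hctr
      push_neg at hctr
      set Tu := {l : Set (F × F) |
        (∃ d ∈ Fdir, IsLineWithDirection d l) ∧ l ∩ U = {u}} with hTu
      have hsub : ∀ l ∈ Tu, ∃ d ∈ E, IsLineWithDirection d l := by
        intro l hl
        obtain ⟨⟨d, hd, hdl⟩, hlu⟩ := hl
        by_cases hdE : d ∈ E
        · exact ⟨d, hdE, hdl⟩
        · exact absurd hlu (hctr l ⟨d, ⟨hd, hdE⟩, hdl⟩)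
      -- inject Tu into E
      have hchoice : ∀ l : Set (F × F), ∃ d : Option F,
          (∃ d' ∈ E, IsLineWithDirection d' l) → d ∈ E ∧ IsLineWithDirection d l := by
        intro l
        by_cases h : ∃ d' ∈ E, IsLineWithDirection d' l
        · obtain ⟨d, hd1, hd2⟩ := h
          exact ⟨d, fun _ => ⟨hd1, hd2⟩⟩
        · exact ⟨none, fun hh => absurd hh h⟩
      choose f hf using hchoice
      have hinj : Tu.ncard ≤ E.ncard := by
        apply Set.ncard_le_ncard_of_injOn f
          (fun l hl => (hf l (hsub l hl)).1)
          (fun l hl l' hl' hfe => by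
            have h1 := (hf l (hsub l hl)).2
            have h2 := (hf l' (hsub l' hl')).2
            rw [hfe] at h1
            have hul : u ∈ l := by
              have h3 := hl.2; rw [Set.eq_singleton_iff_unique_mem] at h3
              exact h3.1.1
            have hul' : u ∈ l' := by
              have h3 := hl'.2; rw [Set.eq_singleton_iff_unique_mem] at h3
              exact h3.1.1
            exact line_unique_of_direction h1 h2 hul hul')
          (Set.toFinite E)
      have hta := htang u hu
      rw [← hTu] at hta
      omega
    obtain ⟨l, ⟨d, hd, hdl⟩, hlu⟩ := hex
    -- now find two points of Pp on l
    have hdvd := hPp d hd l hdl ⟨u, hlu⟩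
    have hul : u ∈ l := by
      rw [Set.eq_singleton_iff_unique_mem] at hlu
      exact hlu.1.1
    have hUl : U ∩ l = {u} := by rw [Set.inter_comm]; exact hlu
    have hsplit : (U ∪ Pp) ∩ l = ({u} : Set (F × F)) ∪ (Pp ∩ l) := by
      rw [Set.union_inter_distrib_right, hUl]
    have hdisj2 : Disjoint ({u} : Set (F × F)) (Pp ∩ l) := by
      rw [Set.disjoint_singleton_left]
      intro hmem
      exact (Set.disjoint_left.mp hdisj hu) hmem.1
    have hcard : ((U ∪ Pp) ∩ l).ncard = 1 + (Pp ∩ l).ncard := by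
      rw [hsplit, Set.ncard_union_eq hdisj2 (Set.toFinite _) (Set.toFinite _),
        Set.ncard_singleton]
    rw [hcard] at hdvd
    have h2 : 1 < (Pp ∩ l).ncard := by
      have hpos : 0 < 1 + (Pp ∩ l).ncard := by omega
      have := Nat.le_of_dvd hpos hdvd
      omega
    rw [Set.one_lt_ncard_iff (Set.toFinite _)] at h2
    obtain ⟨p₁, p₂, hp₁, hp₂, hne⟩ := h2
    exact ⟨l, p₁, p₂, fun _ => ⟨⟨d, hd, hdl⟩, hlu,
      ⟨hp₁.2, hp₁.1⟩, ⟨hp₂.2, hp₂.1⟩, hne⟩⟩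
  choose lf p1 p2 hkey using key
  -- inject U into off-diagonal pairs of Pp
  have hinjU : U.ncard ≤ (Set.offDiag Pp).ncard := by
    apply Set.ncard_le_ncard_of_injOn (fun u => (p1 u, p2 u))
    · intro u hu
      obtain ⟨_, _, hp₁, hp₂, hne⟩ := hkey u hu
      exact ⟨hp₁.2, hp₂.2, hne⟩
    · intro u hu u' hu' heq
      obtain ⟨⟨d, hd, hdl⟩, hlu, hp₁, hp₂, hne⟩ := hkey u hu
      obtain ⟨⟨d', hd', hdl'⟩, hlu', hp₁', hp₂', hne'⟩ := hkey u' hu'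
      have h1 : p1 u = p1 u' := congrArg Prod.fst heq
      have h2 : p2 u = p2 u' := congrArg Prod.snd heq
      have hleq : lf u = lf u' :=
        line_eq_of_two_points hdl hdl' hp₁.1 (h1 ▸ hp₁'.1) hp₂.1 (h2 ▸ hp₂'.1) hne
      have : ({u} : Set (F × F)) = {u'} := by rw [← hlu, ← hlu', hleq]
      exact Set.singleton_eq_singleton_iff.mp this
  -- count off-diagonal pairs
  have hoff : (Set.offDiag Pp).ncard = t * t - t := by
    have hdiag : Set.offDiag Pp = (Pp ×ˢ Pp) \ ((fun a => (a, a)) '' Pp) := by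
      ext x
      simp only [Set.mem_offDiag, Set.mem_diff, Set.mem_prod, Set.mem_image]
      constructor
      · rintro ⟨h1, h2, h3⟩
        exact ⟨⟨h1, h2⟩, fun ⟨a, _, hax⟩ => h3 (by rw [← hax])⟩
      · rintro ⟨⟨h1, h2⟩, h3⟩
        refine ⟨h1, h2, fun heq => h3 ⟨x.1, h1, ?_⟩⟩
        exact Prod.ext rfl heq
    have hprod : (Pp ×ˢ Pp).ncard = t * t := by
      rw [← Nat.card_coe_set_eq, Nat.card_congr (Equiv.Set.prod Pp Pp),
        Nat.card_prod, Nat.card_coe_set_eq, hPcard]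
    have himg : ((fun a : F × F => (a, a)) '' Pp).ncard = t := by
      rw [Set.ncard_image_of_injective _ (fun a b hab => (Prod.ext_iff.mp hab).1), hPcard]
    rw [hdiag, Set.ncard_diff (fun x hx => by
        obtain ⟨a, ha, rfl⟩ := hx; exact ⟨ha, ha⟩) (Set.toFinite _), hprod, himg]
  rw [hU, hoff] at hinjU
  omega
end

section
/- Every blocking set of the affine plane AG(2,q) has at least 2q - 1 points. -/
open MvPolynomial Finset

namespace BlockAux

universe u

/-- exponent reduction -/
def red (k a : ℕ) : ℕ := if a = 0 then 0 else (a - 1) % k + 1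

lemma red_zero (k : ℕ) : red k 0 = 0 := by simp [red]

lemma red_le_self (k a : ℕ) : red k a ≤ a := by
  unfold red
  split
  · omega
  · have := Nat.mod_le (a - 1) k
    omega

lemma red_le (k a : ℕ) (hk : 1 ≤ k) : red k a ≤ k := by
  unfold red
  split
  · omega
  · have := Nat.mod_lt (a - 1) (show 0 < k by omega)
    omega

abbrev ι : Type u := ULift (Fin 2)

def i0 : ι.{u} := ⟨0⟩
def i1 : ι.{u} := ⟨1⟩

lemma i0_ne_i1 : (i0 : ι.{u}) ≠ i1 := by
  intro h
  have := congrArg ULift.down h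
  simp [i0, i1] at this

lemma sum_ulift_fin2 {M : Type*} [AddCommMonoid M] (f : ι.{u} → M) :
    ∑ i, f i = f i0 + f i1 := by
  rw [Fintype.sum_equiv (Equiv.ulift) f (fun j => f ⟨j⟩) (fun a => rfl), Fin.sum_univ_two]
  rfl

lemma prod_ulift_fin2 {M : Type*} [CommMonoid M] (f : ι.{u} → M) :
    ∏ i, f i = f i0 * f i1 := by
  rw [Fintype.prod_equiv (Equiv.ulift) f (fun j => f ⟨j⟩) (fun a => rfl), Fin.prod_univ_two]
  rfl

variable {K : Type u} [Field K] [Fintype K]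

lemma pow_red (hk : Fintype.card K - 1 ≠ 0) (x : K) (a : ℕ) :
    x ^ red (Fintype.card K - 1) a = x ^ a := by
  set k := Fintype.card K - 1 with hkdef
  rcases eq_or_ne a 0 with rfl | ha
  · simp [red]
  rcases eq_or_ne x 0 with rfl | hx
  · rw [zero_pow ha, zero_pow]
    unfold red
    rw [if_neg ha]
    omega
  · have hx1 : x ^ k = 1 := FiniteField.pow_card_sub_one_eq_one x hx
    have : a = (a - 1) % k + 1 + k * ((a - 1) / k) := by
      have := Nat.mod_add_div (a - 1) k
      omega
    rw [red, if_neg ha]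
    conv_rhs => rw [this, pow_add, pow_mul, hx1, one_pow, mul_one]

lemma key_degree (hq2 : 2 ≤ Fintype.card K) (P : MvPolynomial ι.{u} K)
    (h0 : eval (0 : ι.{u} → K) P ≠ 0)
    (hv : ∀ v : ι.{u} → K, v ≠ 0 → eval v P = 0) :
    2 * (Fintype.card K - 1) ≤ P.totalDegree := by
  classical
  set k := Fintype.card K - 1 with hkdef
  have hk : k ≠ 0 := by omega
  by_contra hdeg
  push_neg at hdeg
  set rd : (ι.{u} →₀ ℕ) → (ι.{u} →₀ ℕ) := fun d => Finsupp.mapRange (red k) (red_zero k) d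
    with hrd
  set Q : MvPolynomial ι.{u} K :=
    ∑ d ∈ P.support, monomial (rd d) (coeff d P) with hQ
  have hevalQ : ∀ v : ι.{u} → K, eval v Q = eval v P := by
    intro v
    rw [hQ, map_sum]
    conv_rhs => rw [P.as_sum, map_sum]
    refine Finset.sum_congr rfl fun d _ => ?_
    rw [eval_monomial, eval_monomial]
    congr 1
    rw [Finsupp.prod_fintype _ _ (fun i => pow_zero _),
        Finsupp.prod_fintype _ _ (fun i => pow_zero _)]
    refine Finset.prod_congr rfl fun i _ => ?_
    simp only [hrd, Finsupp.mapRange_apply]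
    exact pow_red hk (v i) (d i)
  have hQmem : Q ∈ restrictDegree ι.{u} K k := by
    refine Submodule.sum_mem _ fun d _ => ?_
    rw [mem_restrictDegree]
    intro s hs i
    rw [mem_support_iff, coeff_monomial] at hs
    split at hs
    · next h =>
      subst h
      simpa [hrd, Finsupp.mapRange_apply] using red_le k (d i) (by omega)
    · exact absurd rfl hs
  set c : K := eval (0 : ι.{u} → K) P with hc
  have hind : Q - C c * indicator (0 : ι.{u} → K) = 0 := by
    refine eq_zero_of_eval_eq_zero ι.{u} K (Q - C c * indicator (0 : ι.{u} → K)) ?_ ?_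
    · intro v
      rcases eq_or_ne v 0 with rfl | hv0
      · rw [map_sub, map_mul, eval_C, hevalQ, eval_indicator_apply_eq_one, ← hc,
          mul_one, sub_self]
      · simp [map_sub, map_mul, eval_C, hevalQ, hv v hv0,
          eval_indicator_apply_eq_zero _ _ hv0]
    · refine Submodule.sub_mem _ hQmem ?_
      have := indicator_mem_restrictDegree (0 : ι.{u} → K)
      rw [← smul_eq_C_mul]
      exact Submodule.smul_mem _ _ this
  have hQeq : Q = C c * indicator (0 : ι.{u} → K) := by
    have := sub_eq_zero.mp hind
    exact this
  set m0 : ι.{u} →₀ ℕ := Finsupp.single i0 k + Finsupp.single i1 k with hm0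
  have hm00 : m0 i0 = k := by
    simp [hm0, Finsupp.single_apply, i0_ne_i1, (Ne.symm i0_ne_i1)]
  have hm01 : m0 i1 = k := by
    simp [hm0, Finsupp.single_apply, i0_ne_i1, (Ne.symm i0_ne_i1)]
  have hcoeffInd : coeff m0 (indicator (0 : ι.{u} → K)) = 1 := by
    rw [indicator]
    simp only [Pi.zero_apply, map_zero, sub_zero]
    rw [prod_ulift_fin2, ← hkdef]
    have hexp : ((1 : MvPolynomial ι.{u} K) - X i0 ^ k) * (1 - X i1 ^ k) =
        1 - X i1 ^ k - X i0 ^ k + X i0 ^ k * X i1 ^ k := by ring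
    rw [hexp, X_pow_eq_monomial, X_pow_eq_monomial, monomial_mul, one_mul]
    rw [coeff_add, coeff_sub, coeff_sub, coeff_one, coeff_monomial, coeff_monomial,
      coeff_monomial]
    have h1 : m0 ≠ 0 := fun h => by
      have := congrFun (congrArg (fun f : ι.{u} →₀ ℕ => (f : ι.{u} → ℕ)) h) i0
      simp only [Finsupp.coe_zero, Pi.zero_apply] at this
      exact hk (by rw [← hm00]; exact this)
    have h2 : Finsupp.single (i0 : ι.{u}) k ≠ m0 := fun h => by
      have := congrFun (congrArg (fun f : ι.{u} →₀ ℕ => (f : ι.{u} → ℕ)) h) i1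
      simp [hm01, Finsupp.single_apply, i0_ne_i1] at this
      exact hk this.symm
    have h3 : Finsupp.single (i1 : ι.{u}) k ≠ m0 := fun h => by
      have := congrFun (congrArg (fun f : ι.{u} →₀ ℕ => (f : ι.{u} → ℕ)) h) i0
      simp [hm00, Finsupp.single_apply, (Ne.symm i0_ne_i1)] at this
      exact hk this.symm
    rw [if_neg (Ne.symm h1), if_neg h2, if_neg h3, if_pos rfl]
    ring
  have hcoeffQ : coeff m0 Q = 0 := by
    rw [hQ, coeff_sum]
    refine Finset.sum_eq_zero fun d hd => ?_
    rw [coeff_monomial, if_neg]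
    intro h
    have h0' : k ≤ d i0 := by
      have := red_le_self k (d i0)
      have h00 : red k (d i0) = k := by
        have := congrFun (congrArg (fun f : ι.{u} →₀ ℕ => (f : ι.{u} → ℕ)) h) i0
        simpa [hrd, Finsupp.mapRange_apply, hm00] using this
      omega
    have h1' : k ≤ d i1 := by
      have := red_le_self k (d i1)
      have h11 : red k (d i1) = k := by
        have := congrFun (congrArg (fun f : ι.{u} →₀ ℕ => (f : ι.{u} → ℕ)) h) i1
        simpa [hrd, Finsupp.mapRange_apply, hm01] using this
      omega
    have hdeg' : d i0 + d i1 ≤ P.totalDegree := by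
      have := le_totalDegree hd
      rw [Finsupp.sum_fintype _ _ (fun i => rfl), sum_ulift_fin2] at this
      exact this
    omega
  rw [hQeq, coeff_C_mul, hcoeffInd, mul_one] at hcoeffQ
  exact h0 hcoeffQ

end BlockAux
open MvPolynomial BlockAux

/-- A line of the affine plane `AG(2,F)`: either a non-vertical line `y = m x + c`
or a vertical line `x = c`. -/
def IsAffineLine {F : Type*} [Field F] (l : Set (F × F)) : Prop :=
  (∃ m c : F, l = {p : F × F | p.2 = m * p.1 + c}) ∨ ∃ c : F, l = {p : F × F | p.1 = c}

theorem affine_blocking_set_lower_bound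
    {F : Type*} [Field F] [Fintype F] (q : ℕ) (hq : Fintype.card F = q)
    (B : Set (F × F)) (hB : ∀ l : Set (F × F), IsAffineLine l → ∃ p ∈ B, p ∈ l) :
    2 * q - 1 ≤ B.ncard := by
  classical
  have hq2 : 2 ≤ Fintype.card F := Fintype.one_lt_card
  -- translate B so that it contains the origin
  obtain ⟨b0, hb0, -⟩ := hB {p : F × F | p.2 = 0 * p.1 + 0} (Or.inl ⟨0, 0, rfl⟩)
  set B₂ : Set (F × F) := (fun p => p - b0) '' B with hB₂
  have hB₂card : B₂.ncard = B.ncard :=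
    Set.ncard_image_of_injective _ (sub_left_injective)
  have h0B₂ : (0 : F × F) ∈ B₂ := ⟨b0, hb0, sub_self b0⟩
  have hB₂block : ∀ l : Set (F × F), IsAffineLine l → ∃ p ∈ B₂, p ∈ l := by
    rintro l (⟨m, c, rfl⟩ | ⟨c, rfl⟩)
    · obtain ⟨b, hb, hbl⟩ := hB {p : F × F | p.2 = m * p.1 + (c + b0.2 - m * b0.1)}
        (Or.inl ⟨m, c + b0.2 - m * b0.1, rfl⟩)
      refine ⟨b - b0, ⟨b, hb, rfl⟩, ?_⟩
      simp only [Set.mem_setOf_eq, Prod.fst_sub, Prod.snd_sub] at hbl ⊢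
      rw [hbl]; ring
    · obtain ⟨b, hb, hbl⟩ := hB {p : F × F | p.1 = c + b0.1} (Or.inr ⟨c + b0.1, rfl⟩)
      refine ⟨b - b0, ⟨b, hb, rfl⟩, ?_⟩
      simp only [Set.mem_setOf_eq, Prod.fst_sub] at hbl ⊢
      rw [hbl]; ring
  -- B₂ \ {0} meets every line `p ↦ p ⬝ (x,y) = 1`
  have claim : ∀ x y : F, ¬(x = 0 ∧ y = 0) →
      ∃ p ∈ B₂, p ≠ 0 ∧ p.1 * x + p.2 * y = 1 := by
    intro x y hxy
    rcases eq_or_ne y 0 with rfl | hy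
    · have hx : x ≠ 0 := fun h => hxy ⟨h, rfl⟩
      obtain ⟨p, hp, hpl⟩ := hB₂block {p : F × F | p.1 = x⁻¹} (Or.inr ⟨x⁻¹, rfl⟩)
      simp only [Set.mem_setOf_eq] at hpl
      have heq : p.1 * x + p.2 * 0 = 1 := by
        rw [hpl]; field_simp; ring
      refine ⟨p, hp, ?_, heq⟩
      rintro rfl
      simp at heq
    · obtain ⟨p, hp, hpl⟩ := hB₂block {p : F × F | p.2 = (-x / y) * p.1 + y⁻¹}
        (Or.inl ⟨-x / y, y⁻¹, rfl⟩)
      simp only [Set.mem_setOf_eq] at hpl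
      have heq : p.1 * x + p.2 * y = 1 := by
        rw [hpl]; field_simp; ring
      refine ⟨p, hp, ?_, heq⟩
      rintro rfl
      simp at heq
  -- the blocking polynomial
  have hfin : (B₂ \ {0}).Finite := Set.toFinite _
  set S : Finset (F × F) := hfin.toFinset with hS
  set P : MvPolynomial (ι : Type _) F :=
    ∏ p ∈ S, (C p.1 * X i0 + C p.2 * X i1 - 1) with hP
  have h0 : eval (0 : ι → F) P ≠ 0 := by
    rw [hP, map_prod]
    refine Finset.prod_ne_zero_iff.mpr fun p _ => ?_
    simp
  have hv : ∀ v : ι → F, v ≠ 0 → eval v P = 0 := by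
    intro v hv0
    have hxy : ¬(v i0 = 0 ∧ v i1 = 0) := by
      rintro ⟨h1, h2⟩
      apply hv0
      funext i
      rcases i with ⟨i⟩
      fin_cases i
      · exact h1
      · exact h2
    obtain ⟨p, hp, hpne, hpeq⟩ := claim (v i0) (v i1) hxy
    rw [hP, map_prod]
    refine Finset.prod_eq_zero (i := p) ?_ ?_
    · rw [hS, Set.Finite.mem_toFinset]
      exact ⟨hp, hpne⟩
    · simp only [map_sub, map_add, map_mul, eval_C, eval_X, map_one]
      rw [hpeq, sub_self]
  have hdeg : P.totalDegree ≤ S.card := by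
    rw [hP]
    refine le_trans (totalDegree_finset_prod _ _) ?_
    refine le_trans (Finset.sum_le_card_nsmul S _ 1 ?_) (by simp)
    intro p _
    have h1 : (C p.1 * X i0 + C p.2 * X i1 - 1 : MvPolynomial (ι : Type _) F)
        = C p.1 * X i0 + (C p.2 * X i1 + C (-1)) := by
      rw [map_neg, map_one]; ring
    rw [h1]
    refine le_trans (totalDegree_add _ _) ?_
    simp only [max_le_iff]
    constructor
    · exact le_trans (totalDegree_mul _ _) (by simp [totalDegree_X])
    · refine le_trans (totalDegree_add _ _) ?_
      simp only [max_le_iff]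
      exact ⟨le_trans (totalDegree_mul _ _) (by simp [totalDegree_X]), by simp⟩
  have hkey : 2 * (Fintype.card F - 1) ≤ P.totalDegree := key_degree hq2 P h0 hv
  have hScard : S.card = B₂.ncard - 1 := by
    rw [hS, ← Set.ncard_eq_toFinset_card _ hfin]
    rw [Set.ncard_diff_singleton_of_mem h0B₂]
  have hB₂pos : 1 ≤ B₂.ncard := (Set.ncard_pos (Set.toFinite _)).mpr ⟨0, h0B₂⟩
  rw [hB₂card] at hScard hB₂pos
  omega
end

section
/- Let A, B be proper subgroups of the multiplicative group GF(q)ˣ with GF(q)ˣ = A ⊕ B (internal direct product), and X = A ∪ B. Then S = {(0:s:1), (s:0:1), (1:-s:0) : s ∈ GF(q) \ (X ∪ {0})} is a 3-semiarc in PG(2,q) with three (q - |A| - |B|)-secants. -/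
open Configuration Projectivization
open scoped LinearAlgebra.Projectivization

namespace SemiarcAux

variable {F : Type*} [Field F]

lemma dot3 (x y z : F) (v : Fin 3 → F) :
    dotProduct ![x, y, z] v = x * v 0 + y * v 1 + z * v 2 := by
  simp [dotProduct, Fin.sum_univ_three]

lemma dot33 (x y z u v w : F) :
    dotProduct ![x, y, z] ![u, v, w] = x * u + y * v + z * w := by
  simp [dotProduct, Fin.sum_univ_three]

lemma mem_mk_iff {w v : Fin 3 → F} (hw : w ≠ 0) (hv : v ≠ 0) :
    Projectivization.mk F w hw ∈ Projectivization.mk F v hv ↔ dotProduct w v = 0 :=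
  Iff.rfl

lemma eq3_iff {v w : Fin 3 → F} (hv : v ≠ 0) (hw : w ≠ 0) :
    Projectivization.mk F v hv = Projectivization.mk F w hw ↔
      ∃ c : F, c * w 0 = v 0 ∧ c * w 1 = v 1 ∧ c * w 2 = v 2 := by
  rw [Projectivization.mk_eq_mk_iff' F v w hv hw]
  constructor
  · rintro ⟨c, hc⟩
    exact ⟨c, by rw [← hc]; simp, by rw [← hc]; simp, by rw [← hc]; simp⟩
  · rintro ⟨c, h0, h1, h2⟩
    refine ⟨c, funext fun i => ?_⟩
    fin_cases i <;> simpa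

lemma line1_eq {x y x' y' : F} (h : (![x,1,y] : Fin 3 → F) ≠ 0)
    (h' : (![x',1,y'] : Fin 3 → F) ≠ 0) :
    Projectivization.mk F ![x,1,y] h = Projectivization.mk F ![x',1,y'] h' ↔ x = x' ∧ y = y' := by
  rw [eq3_iff]
  constructor
  · rintro ⟨c, h0, h1, h2⟩
    simp only [Matrix.cons_val_zero, Matrix.cons_val_one, Matrix.head_cons, Matrix.cons_val_two,
      Matrix.tail_cons, mul_one] at h0 h1 h2
    subst h1
    simp only [one_mul] at h0 h2
    exact ⟨h0.symm, h2.symm⟩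
  · rintro ⟨rfl, rfl⟩; exact ⟨1, by simp⟩

lemma line2_eq {x y x' y' : F} (h : (![1,x,y] : Fin 3 → F) ≠ 0)
    (h' : (![1,x',y'] : Fin 3 → F) ≠ 0) :
    Projectivization.mk F ![1,x,y] h = Projectivization.mk F ![1,x',y'] h' ↔ x = x' ∧ y = y' := by
  rw [eq3_iff]
  constructor
  · rintro ⟨c, h0, h1, h2⟩
    simp only [Matrix.cons_val_zero, Matrix.cons_val_one, Matrix.head_cons, Matrix.cons_val_two,
      Matrix.tail_cons, mul_one] at h0 h1 h2
    subst h0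
    simp only [one_mul] at h1 h2
    exact ⟨h1.symm, h2.symm⟩
  · rintro ⟨rfl, rfl⟩; exact ⟨1, by simp⟩





lemma mk_eq_of_smul {v w : Fin 3 → F} (hv : v ≠ 0) (hw : w ≠ 0) (c : F) (hc : c • w = v) :
    Projectivization.mk F v hv = Projectivization.mk F w hw :=
  (Projectivization.mk_eq_mk_iff' F v w hv hw).2 ⟨c, hc⟩


-- p1 s = mk ![0,s,1], p2 s = mk ![s,0,1], p3 s = mk ![1,-s,0]
lemma p1_eq_p1 {s t : F} (h1 : (![0,s,1] : Fin 3 → F) ≠ 0) (h2 : (![0,t,1] : Fin 3 → F) ≠ 0) :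
    Projectivization.mk F ![0,s,1] h1 = Projectivization.mk F ![0,t,1] h2 ↔ s = t := by
  rw [eq3_iff]
  constructor
  · rintro ⟨c, _, hb, hc⟩
    simp only [Matrix.cons_val_one, Matrix.head_cons, Matrix.cons_val_two, Matrix.tail_cons,
      mul_one] at hb hc
    subst hc; simpa using hb.symm
  · rintro rfl; exact ⟨1, by simp⟩

lemma p2_eq_p2 {s t : F} (h1 : (![s,0,1] : Fin 3 → F) ≠ 0) (h2 : (![t,0,1] : Fin 3 → F) ≠ 0) :
    Projectivization.mk F ![s,0,1] h1 = Projectivization.mk F ![t,0,1] h2 ↔ s = t := by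
  rw [eq3_iff]
  constructor
  · rintro ⟨c, ha, _, hc⟩
    simp only [Matrix.cons_val_zero, Matrix.cons_val_two, Matrix.tail_cons, Matrix.head_cons,
      mul_one] at ha hc
    subst hc; simpa using ha.symm
  · rintro rfl; exact ⟨1, by simp⟩

lemma p3_eq_p3 {s t : F} (h1 : (![1,-s,0] : Fin 3 → F) ≠ 0) (h2 : (![1,-t,0] : Fin 3 → F) ≠ 0) :
    Projectivization.mk F ![1,-s,0] h1 = Projectivization.mk F ![1,-t,0] h2 ↔ s = t := by
  rw [eq3_iff]
  constructor
  · rintro ⟨c, ha, hb, _⟩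
    simp only [Matrix.cons_val_zero, Matrix.cons_val_one, Matrix.head_cons, mul_one] at ha hb
    subst ha; simpa using hb.symm
  · rintro rfl; exact ⟨1, by simp⟩

lemma p1_ne_p2 {s t : F} (ht : t ≠ 0) (h1 : (![0,s,1] : Fin 3 → F) ≠ 0)
    (h2 : (![t,0,1] : Fin 3 → F) ≠ 0) :
    Projectivization.mk F ![0,s,1] h1 ≠ Projectivization.mk F ![t,0,1] h2 := by
  rw [Ne, eq3_iff]
  rintro ⟨c, ha, _, hc⟩
  simp only [Matrix.cons_val_zero, Matrix.cons_val_two, Matrix.tail_cons, Matrix.head_cons,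
    mul_one] at ha hc
  subst hc
  exact ht (by simpa using ha)

lemma p1_ne_p3 {s t : F} (h1 : (![0,s,1] : Fin 3 → F) ≠ 0)
    (h2 : (![1,-t,0] : Fin 3 → F) ≠ 0) :
    Projectivization.mk F ![0,s,1] h1 ≠ Projectivization.mk F ![1,-t,0] h2 := by
  rw [Ne, eq3_iff]
  rintro ⟨c, _, _, hc⟩
  simp at hc

lemma p2_ne_p3 {s t : F} (h1 : (![s,0,1] : Fin 3 → F) ≠ 0)
    (h2 : (![1,-t,0] : Fin 3 → F) ≠ 0) :
    Projectivization.mk F ![s,0,1] h1 ≠ Projectivization.mk F ![1,-t,0] h2 := by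
  rw [Ne, eq3_iff]
  rintro ⟨c, _, _, hc⟩
  simp at hc



/-- Algebraic facts about the images `Aset`, `Bset` of the subgroups in `F`. -/
structure Good (Aset Bset Xs : Set F) : Prop where
  hXs : Xs = Aset ∪ Bset
  hA0 : (0:F) ∉ Aset
  hB0 : (0:F) ∉ Bset
  hA1 : (1:F) ∈ Aset
  hB1 : (1:F) ∈ Bset
  hAmul : ∀ {x y : F}, x ∈ Aset → y ∈ Aset → x * y ∈ Aset
  hBmul : ∀ {x y : F}, x ∈ Bset → y ∈ Bset → x * y ∈ Bset
  hAinv : ∀ {x : F}, x ∈ Aset → x⁻¹ ∈ Aset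
  hBinv : ∀ {x : F}, x ∈ Bset → x⁻¹ ∈ Bset
  hint : ∀ {x : F}, x ∈ Aset → x ∈ Bset → x = 1
  hex : ∀ s : F, s ≠ 0 → ∃ a ∈ Aset, ∃ b ∈ Bset, a * b = s

namespace Good

variable {Aset Bset Xs : Set F} (G : Good Aset Bset Xs)
include G

lemma hAdiv {x y : F} (hx : x ∈ Aset) (hy : y ∈ Aset) : x / y ∈ Aset := by
  rw [div_eq_mul_inv]; exact G.hAmul hx (G.hAinv hy)

lemma hBdiv {x y : F} (hx : x ∈ Bset) (hy : y ∈ Bset) : x / y ∈ Bset := by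
  rw [div_eq_mul_inv]; exact G.hBmul hx (G.hBinv hy)

lemma uniq {a a' b b' : F} (ha : a ∈ Aset) (ha' : a' ∈ Aset) (hb : b ∈ Bset)
    (hb' : b' ∈ Bset) (h : a * b = a' * b') : a = a' ∧ b = b' := by
  have ha0 : a ≠ 0 := fun h => G.hA0 (h ▸ ha)
  have ha'0 : a' ≠ 0 := fun h => G.hA0 (h ▸ ha')
  have hb0 : b ≠ 0 := fun h => G.hB0 (h ▸ hb)
  have hb'0 : b' ≠ 0 := fun h => G.hB0 (h ▸ hb')
  have key : a / a' = b' / b := by field_simp; linear_combination h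
  have h1 : a / a' ∈ Aset := G.hAdiv ha ha'
  have h2 : a / a' ∈ Bset := key ▸ G.hBdiv hb' hb
  have h3 : a / a' = 1 := G.hint h1 h2
  have haa : a = a' := by field_simp at h3; exact h3
  refine ⟨haa, ?_⟩
  subst haa
  exact mul_left_cancel₀ ha0 h

/-- The key factorisation lemma: if `s ∉ Xs` factors as `u * v` with `u v ∈ Xs`,
and also as `a * b` with `a ∈ Aset`, `b ∈ Bset`, then `u = a` or `u = b`. -/
lemma key {s u v a b : F} (hs : s ∉ Xs) (hu : u ∈ Xs) (hv : v ∈ Xs)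
    (huv : u * v = s) (ha : a ∈ Aset) (hb : b ∈ Bset) (hab : a * b = s) :
    u = a ∨ u = b := by
  rw [G.hXs] at hu hv
  rcases hu with hu | hu <;> rcases hv with hv | hv
  · exact absurd (G.hXs ▸ Or.inl (huv ▸ G.hAmul hu hv)) hs
  · exact Or.inl (G.uniq hu ha hv hb (huv.trans hab.symm)).1
  · refine Or.inr ?_
    rw [mul_comm] at huv
    exact (G.uniq hv ha hu hb (huv.trans hab.symm)).2
  · exact absurd (G.hXs ▸ Or.inr (huv ▸ G.hBmul hu hv)) hs

lemma notX_of_mul {a b : F} (ha : a ∈ Aset) (ha1 : a ≠ 1) (hb : b ∈ Bset) (hb1 : b ≠ 1) :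
    a * b ∉ Xs ∧ a * b ≠ 0 := by
  have ha0 : a ≠ 0 := fun h => G.hA0 (h ▸ ha)
  have hb0 : b ≠ 0 := fun h => G.hB0 (h ▸ hb)
  refine ⟨?_, mul_ne_zero ha0 hb0⟩
  rw [G.hXs]
  rintro (h | h)
  · have : b ∈ Aset := by
      have := G.hAmul (G.hAinv ha) h
      rwa [inv_mul_cancel_left₀ ha0] at this
    exact hb1 (G.hint this hb)
  · have : a ∈ Bset := by
      have : a * b * b⁻¹ ∈ Bset := G.hBmul h (G.hBinv hb)
      rwa [mul_assoc, mul_inv_cancel₀ hb0, mul_one] at this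
    exact ha1 (G.hint ha this)

lemma a_ne_one {s a b : F} (hs : s ∉ Xs) (ha : a ∈ Aset) (hb : b ∈ Bset) (hab : a * b = s) :
    a ≠ 1 ∧ b ≠ 1 := by
  constructor
  · rintro rfl
    rw [one_mul] at hab
    exact hs (G.hXs ▸ Or.inr (hab ▸ hb))
  · rintro rfl
    rw [mul_one] at hab
    exact hs (G.hXs ▸ Or.inl (hab ▸ ha))

/-- A second element of the complement, different from `s`. -/
lemma second {s : F} (hs : s ∉ Xs) (hs0 : s ≠ 0) :
    ∃ s' : F, s' ∉ Xs ∧ s' ≠ 0 ∧ s' ≠ s := by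
  obtain ⟨a, ha, b, hb, hab⟩ := G.hex s hs0
  obtain ⟨ha1, hb1⟩ := G.a_ne_one hs ha hb hab
  have ha0 : a ≠ 0 := fun h => G.hA0 (h ▸ ha)
  have hb0 : b ≠ 0 := fun h => G.hB0 (h ▸ hb)
  have hai1 : a⁻¹ ≠ 1 := fun h => ha1 (by rw [← inv_inv a, h, inv_one])
  have hbi1 : b⁻¹ ≠ 1 := fun h => hb1 (by rw [← inv_inv b, h, inv_one])
  obtain ⟨h1, h2⟩ := G.notX_of_mul (G.hAinv ha) hai1 hb hb1
  obtain ⟨h3, h4⟩ := G.notX_of_mul ha ha1 (G.hBinv hb) hbi1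
  by_cases hcase : a⁻¹ * b = s
  · refine ⟨a * b⁻¹, h3, h4, ?_⟩
    intro hEq
    -- a⁻¹ * b = s = a * b and a * b⁻¹ = s would force a² = 1, b² = 1
    have hA2 : a⁻¹ = a := by
      have := hcase.trans hab.symm
      exact mul_right_cancel₀ hb0 this
    have hB2 : b⁻¹ = b := by
      have := hEq.trans hab.symm
      exact mul_left_cancel₀ ha0 this
    have haa : a * a = 1 := by nth_rewrite 1 [← hA2]; exact inv_mul_cancel₀ ha0
    have hbb : b * b = 1 := by nth_rewrite 1 [← hB2]; exact inv_mul_cancel₀ hb0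
    rcases mul_self_eq_one_iff.1 haa with h | h
    · exact ha1 h
    rcases mul_self_eq_one_iff.1 hbb with h' | h'
    · exact hb1 h'
    have : a = b := h.trans h'.symm
    exact ha1 (G.hint ha (this ▸ hb))
  · exact ⟨a⁻¹ * b, h1, h2, hcase⟩

end Good
end SemiarcAux
namespace SemiarcAux

variable {F : Type*} [Field F]

section Tangents

variable {Aset Bset Xs : Set F} {S : Set (PG F)}

/-- Characterization of membership in `S`. -/
def SMem (Xs : Set F) (S : Set (PG F)) : Prop :=
  ∀ p : PG F, p ∈ S ↔ ∃ s : F, (s ∉ Xs ∧ s ≠ 0) ∧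
    (p = Projectivization.mk F ![0, s, 1] (vec_ne_zero _ 2 (by simp)) ∨
     p = Projectivization.mk F ![s, 0, 1] (vec_ne_zero _ 2 (by simp)) ∨
     p = Projectivization.mk F ![1, -s, 0] (vec_ne_zero _ 0 (by simp)))

lemma is_tangent1 (hSmem : SMem Xs S) {s : F} (hs : s ∉ Xs) (hs0 : s ≠ 0) (c : F)
    (h1 : ∀ s', s' ∉ Xs → s' ≠ 0 → c * s' ≠ s) (h2 : c ∈ Xs ∨ c = 0) :
    {x : PG F | x ∈ Projectivization.mk F ![c, 1, -s] (vec_ne_zero _ 1 (by simp))} ∩ S =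
      {Projectivization.mk F ![0, s, 1] (vec_ne_zero _ 2 (by simp))} := by
  ext x
  simp only [Set.mem_inter_iff, Set.mem_setOf_eq, Set.mem_singleton_iff]
  constructor
  · rintro ⟨hxl, hxS⟩
    obtain ⟨s', ⟨hs'X, hs'0⟩, rfl | rfl | rfl⟩ := (hSmem x).1 hxS
    · rw [mem_mk_iff, dot33] at hxl
      rw [p1_eq_p1]
      linear_combination hxl
    · rw [mem_mk_iff, dot33] at hxl
      exact absurd (by linear_combination hxl) (h1 s' hs'X hs'0)
    · rw [mem_mk_iff, dot33] at hxl
      have hc : s' = c := by linear_combination -hxl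
      subst hc
      rcases h2 with h | h
      exacts [absurd h hs'X, absurd h hs'0]
  · rintro rfl
    refine ⟨?_, ?_⟩
    · rw [mem_mk_iff, dot33]; ring
    · exact (hSmem _).2 ⟨s, ⟨hs, hs0⟩, Or.inl rfl⟩

end Tangents
end SemiarcAux
namespace SemiarcAux

variable {F : Type*} [Field F]
variable {Aset Bset Xs : Set F} {S : Set (PG F)}

lemma tangents1 (G : Good Aset Bset Xs) (hSmem : SMem Xs S)
    {s a b : F} (hs : s ∉ Xs) (hs0 : s ≠ 0) (ha : a ∈ Aset) (hb : b ∈ Bset) (hab : a * b = s) :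
    {l : PG F | {x : PG F | x ∈ l} ∩ S =
        {Projectivization.mk F ![0, s, 1] (vec_ne_zero _ 2 (by simp))}} =
      {Projectivization.mk F ![(0:F), 1, -s] (vec_ne_zero _ 1 (by simp)),
       Projectivization.mk F ![a, 1, -s] (vec_ne_zero _ 1 (by simp)),
       Projectivization.mk F ![b, 1, -s] (vec_ne_zero _ 1 (by simp))} := by
  have ha0 : a ≠ 0 := fun h => G.hA0 (h ▸ ha)
  have hb0 : b ≠ 0 := fun h => G.hB0 (h ▸ hb)
  have haX : a ∈ Xs := G.hXs ▸ Or.inl ha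
  have hbX : b ∈ Xs := G.hXs ▸ Or.inr hb
  obtain ⟨ha1, hb1⟩ := G.a_ne_one hs ha hb hab
  ext l
  simp only [Set.mem_setOf_eq, Set.mem_insert_iff, Set.mem_singleton_iff]
  constructor
  · intro hl
    induction l using Projectivization.ind with
    | h v hv =>
    have hP : Projectivization.mk F ![0, s, 1] (vec_ne_zero _ 2 (by simp)) ∈
        {x : PG F | x ∈ Projectivization.mk F v hv} ∩ S := by
      rw [hl]; rfl
    have h_on : s * v 1 + v 2 = 0 := by
      have := hP.1
      rw [Set.mem_setOf_eq, mem_mk_iff, dot3] at this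
      linear_combination this
    by_cases hv1 : v 1 = 0
    · -- the line is x = 0, which contains a second point of S
      exfalso
      have hv2 : v 2 = 0 := by rw [hv1] at h_on; linear_combination h_on
      obtain ⟨s', hs'X, hs'0, hs's⟩ := G.second hs hs0
      have hmem : Projectivization.mk F ![0, s', 1] (vec_ne_zero _ 2 (by simp)) ∈
          {x : PG F | x ∈ Projectivization.mk F v hv} ∩ S := by
        refine ⟨?_, (hSmem _).2 ⟨s', ⟨hs'X, hs'0⟩, Or.inl rfl⟩⟩
        rw [Set.mem_setOf_eq, mem_mk_iff, dot3, hv1, hv2]; ring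
      rw [hl, Set.mem_singleton_iff, p1_eq_p1] at hmem
      exact hs's hmem
    · -- normalize the line to ![α, 1, -s]
      set α := v 0 * (v 1)⁻¹ with hα_def
      have hlrw : Projectivization.mk F v hv =
          Projectivization.mk F ![α, 1, -s] (vec_ne_zero _ 1 (by simp)) := by
        rw [eq3_iff]
        refine ⟨v 1, ?_, ?_, ?_⟩
        · simp only [Matrix.cons_val_zero, hα_def]
          field_simp
        · simp
        · simp only [Matrix.cons_val_two, Matrix.tail_cons, Matrix.head_cons]
          linear_combination -h_on
      have hαT : α ∈ Xs ∨ α = 0 := by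
        by_contra hcon
        push_neg at hcon
        obtain ⟨hαX, hα0⟩ := hcon
        have hmem : Projectivization.mk F ![1, -α, 0] (vec_ne_zero _ 0 (by simp)) ∈
            {x : PG F | x ∈ Projectivization.mk F v hv} ∩ S := by
          refine ⟨?_, (hSmem _).2 ⟨α, ⟨hαX, hα0⟩, Or.inr (Or.inr rfl)⟩⟩
          rw [Set.mem_setOf_eq, hlrw, mem_mk_iff, dot33]; ring
        rw [hl, Set.mem_singleton_iff] at hmem
        exact p1_ne_p3 _ _ hmem.symm
      rcases hαT with hαX | hα0
      swap
      · left; rw [hlrw, hα0]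
      · have hα0 : α ≠ 0 := fun h => (G.hXs ▸ hαX).elim (fun h' => G.hA0 (h ▸ h'))
          (fun h' => G.hB0 (h ▸ h'))
        have hsαX : s * α⁻¹ ∈ Xs := by
          by_contra hcon
          have hsα0 : s * α⁻¹ ≠ 0 := mul_ne_zero hs0 (inv_ne_zero hα0)
          have hmem : Projectivization.mk F ![s * α⁻¹, 0, 1] (vec_ne_zero _ 2 (by simp)) ∈
              {x : PG F | x ∈ Projectivization.mk F v hv} ∩ S := by
            refine ⟨?_, (hSmem _).2 ⟨s * α⁻¹, ⟨hcon, hsα0⟩, Or.inr (Or.inl rfl)⟩⟩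
            rw [Set.mem_setOf_eq, hlrw, mem_mk_iff, dot33]
            field_simp; ring
          rw [hl, Set.mem_singleton_iff] at hmem
          exact p1_ne_p2 hsα0 _ _ hmem.symm
        have hprod : α * (s * α⁻¹) = s := by field_simp
        rcases G.key hs hαX hsαX hprod ha hb hab with h | h
        · right; left; rw [hlrw, line1_eq]; exact ⟨h, rfl⟩
        · right; right; rw [hlrw, line1_eq]; exact ⟨h, rfl⟩
  · rintro (rfl | rfl | rfl)
    · refine is_tangent1 hSmem hs hs0 0 (fun s' _ _ h => hs0 ?_) (Or.inr rfl)
      rw [← h]; ring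
    · refine is_tangent1 hSmem hs hs0 a (fun s' hs' _ h => ?_) (Or.inl haX)
      have : s' = b := by
        have := h.trans hab.symm
        exact mul_left_cancel₀ ha0 this
      exact hs' (this ▸ hbX)
    · refine is_tangent1 hSmem hs hs0 b (fun s' hs' _ h => ?_) (Or.inl hbX)
      have : s' = a := by
        have : b * s' = b * a := by rw [h, ← hab]; ring
        exact mul_left_cancel₀ hb0 this
      exact hs' (this ▸ haX)

end SemiarcAux
namespace SemiarcAux

variable {F : Type*} [Field F]
variable {Aset Bset Xs : Set F} {S : Set (PG F)}

lemma Good.hXinv (G : Good Aset Bset Xs) {x : F} (hx : x ∈ Xs) : x⁻¹ ∈ Xs := by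
  rw [G.hXs] at hx ⊢
  exact hx.imp (fun h => G.hAinv h) (fun h => G.hBinv h)

lemma is_tangent2 (hSmem : SMem Xs S) {s : F} (hs : s ∉ Xs) (hs0 : s ≠ 0) (c : F)
    (h1 : ∀ s', s' ∉ Xs → s' ≠ 0 → c * s' ≠ s)
    (h2 : ∀ s', s' ∉ Xs → s' ≠ 0 → c * s' ≠ 1) :
    {x : PG F | x ∈ Projectivization.mk F ![1, c, -s] (vec_ne_zero _ 0 (by simp))} ∩ S =
      {Projectivization.mk F ![s, 0, 1] (vec_ne_zero _ 2 (by simp))} := by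
  ext x
  simp only [Set.mem_inter_iff, Set.mem_setOf_eq, Set.mem_singleton_iff]
  constructor
  · rintro ⟨hxl, hxS⟩
    obtain ⟨s', ⟨hs'X, hs'0⟩, rfl | rfl | rfl⟩ := (hSmem x).1 hxS
    · rw [mem_mk_iff, dot33] at hxl
      exact absurd (by linear_combination hxl) (h1 s' hs'X hs'0)
    · rw [mem_mk_iff, dot33] at hxl
      rw [p2_eq_p2]
      linear_combination hxl
    · rw [mem_mk_iff, dot33] at hxl
      exact absurd (by linear_combination -hxl) (h2 s' hs'X hs'0)
  · rintro rfl
    refine ⟨?_, ?_⟩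
    · rw [mem_mk_iff, dot33]; ring
    · exact (hSmem _).2 ⟨s, ⟨hs, hs0⟩, Or.inr (Or.inl rfl)⟩

lemma tangents2 (G : Good Aset Bset Xs) (hSmem : SMem Xs S)
    {s a b : F} (hs : s ∉ Xs) (hs0 : s ≠ 0) (ha : a ∈ Aset) (hb : b ∈ Bset) (hab : a * b = s) :
    {l : PG F | {x : PG F | x ∈ l} ∩ S =
        {Projectivization.mk F ![s, 0, 1] (vec_ne_zero _ 2 (by simp))}} =
      {Projectivization.mk F ![(1:F), 0, -s] (vec_ne_zero _ 0 (by simp)),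
       Projectivization.mk F ![1, a, -s] (vec_ne_zero _ 0 (by simp)),
       Projectivization.mk F ![1, b, -s] (vec_ne_zero _ 0 (by simp))} := by
  have ha0 : a ≠ 0 := fun h => G.hA0 (h ▸ ha)
  have hb0 : b ≠ 0 := fun h => G.hB0 (h ▸ hb)
  have haX : a ∈ Xs := G.hXs ▸ Or.inl ha
  have hbX : b ∈ Xs := G.hXs ▸ Or.inr hb
  ext l
  simp only [Set.mem_setOf_eq, Set.mem_insert_iff, Set.mem_singleton_iff]
  constructor
  · intro hl
    induction l using Projectivization.ind with
    | h v hv =>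
    have hP : Projectivization.mk F ![s, 0, 1] (vec_ne_zero _ 2 (by simp)) ∈
        {x : PG F | x ∈ Projectivization.mk F v hv} ∩ S := by
      rw [hl]; rfl
    have h_on : s * v 0 + v 2 = 0 := by
      have := hP.1
      rw [Set.mem_setOf_eq, mem_mk_iff, dot3] at this
      linear_combination this
    by_cases hv0 : v 0 = 0
    · exfalso
      have hv2 : v 2 = 0 := by rw [hv0] at h_on; linear_combination h_on
      obtain ⟨s', hs'X, hs'0, hs's⟩ := G.second hs hs0
      have hmem : Projectivization.mk F ![s', 0, 1] (vec_ne_zero _ 2 (by simp)) ∈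
          {x : PG F | x ∈ Projectivization.mk F v hv} ∩ S := by
        refine ⟨?_, (hSmem _).2 ⟨s', ⟨hs'X, hs'0⟩, Or.inr (Or.inl rfl)⟩⟩
        rw [Set.mem_setOf_eq, mem_mk_iff, dot3, hv0, hv2]; ring
      rw [hl, Set.mem_singleton_iff, p2_eq_p2] at hmem
      exact hs's hmem
    · set c := v 1 * (v 0)⁻¹ with hc_def
      have hlrw : Projectivization.mk F v hv =
          Projectivization.mk F ![1, c, -s] (vec_ne_zero _ 0 (by simp)) := by
        rw [eq3_iff]
        refine ⟨v 0, ?_, ?_, ?_⟩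
        · simp
        · simp only [Matrix.cons_val_one, Matrix.head_cons, Matrix.cons_val_zero, hc_def]
          field_simp
        · simp only [Matrix.cons_val_two, Matrix.tail_cons, Matrix.head_cons]
          linear_combination -h_on
      by_cases hc0 : c = 0
      · left; rw [hlrw, hc0]
      · have hciX : c⁻¹ ∈ Xs := by
          by_contra hcon
          have hci0 : c⁻¹ ≠ 0 := inv_ne_zero hc0
          have hmem : Projectivization.mk F ![1, -(c⁻¹), 0] (vec_ne_zero _ 0 (by simp)) ∈
              {x : PG F | x ∈ Projectivization.mk F v hv} ∩ S := by
            refine ⟨?_, (hSmem _).2 ⟨c⁻¹, ⟨hcon, hci0⟩, Or.inr (Or.inr rfl)⟩⟩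
            rw [Set.mem_setOf_eq, hlrw, mem_mk_iff, dot33]
            field_simp; ring
          rw [hl, Set.mem_singleton_iff] at hmem
          exact p2_ne_p3 _ _ hmem.symm
        have hcX : c ∈ Xs := by
          have := G.hXinv hciX; rwa [inv_inv] at this
        have hscX : s * c⁻¹ ∈ Xs := by
          by_contra hcon
          have hsc0 : s * c⁻¹ ≠ 0 := mul_ne_zero hs0 (inv_ne_zero hc0)
          have hmem : Projectivization.mk F ![0, s * c⁻¹, 1] (vec_ne_zero _ 2 (by simp)) ∈
              {x : PG F | x ∈ Projectivization.mk F v hv} ∩ S := by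
            refine ⟨?_, (hSmem _).2 ⟨s * c⁻¹, ⟨hcon, hsc0⟩, Or.inl rfl⟩⟩
            rw [Set.mem_setOf_eq, hlrw, mem_mk_iff, dot33]
            field_simp; ring
          rw [hl, Set.mem_singleton_iff] at hmem
          exact p1_ne_p2 hs0 _ _ hmem
        have hprod : (s * c⁻¹) * c = s := by field_simp
        rcases G.key hs hscX hcX hprod ha hb hab with h | h
        · -- s * c⁻¹ = a, so c = b
          right; right; rw [hlrw, line2_eq]
          have h' : s = a * c := by rw [← h]; field_simp
          exact ⟨mul_left_cancel₀ ha0 (h'.symm.trans hab.symm), rfl⟩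
        · -- s * c⁻¹ = b, so c = a
          right; left; rw [hlrw, line2_eq]
          have h' : s = b * c := by rw [← h]; field_simp
          exact ⟨mul_left_cancel₀ hb0 (h'.symm.trans (hab.symm.trans (mul_comm a b))), rfl⟩
  · rintro (rfl | rfl | rfl)
    · refine is_tangent2 hSmem hs hs0 0 (fun s' _ _ h => hs0 ?_) (fun s' _ _ h => ?_)
      · rw [← h]; ring
      · exact one_ne_zero (by linear_combination -h)
    · refine is_tangent2 hSmem hs hs0 a (fun s' hs' _ h => ?_) (fun s' hs' _ h => ?_)
      · exact hs' ((mul_left_cancel₀ ha0 (h.trans hab.symm)) ▸ hbX)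
      · exact hs' ((eq_inv_of_mul_eq_one_right h) ▸ G.hXinv haX)
    · refine is_tangent2 hSmem hs hs0 b (fun s' hs' _ h => ?_) (fun s' hs' _ h => ?_)
      · exact hs' ((mul_left_cancel₀ hb0 (h.trans (hab.symm.trans (mul_comm a b)))) ▸ haX)
      · exact hs' ((eq_inv_of_mul_eq_one_right h) ▸ G.hXinv hbX)

end SemiarcAux
namespace SemiarcAux

variable {F : Type*} [Field F]
variable {Aset Bset Xs : Set F} {S : Set (PG F)}

lemma Good.ne_zeroX (G : Good Aset Bset Xs) {x : F} (hx : x ∈ Xs) : x ≠ 0 := by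
  rintro rfl
  rw [G.hXs] at hx
  exact hx.elim G.hA0 G.hB0

lemma is_tangent3 (G : Good Aset Bset Xs) (hSmem : SMem Xs S) {s : F} (hs : s ∉ Xs)
    (hs0 : s ≠ 0) (c : F)
    (h1 : -c ∈ Xs ∨ c = 0)
    (h2 : ∀ s', s' ∉ Xs → s' ≠ 0 → s' * s + c ≠ 0) :
    {x : PG F | x ∈ Projectivization.mk F ![s, 1, c] (vec_ne_zero _ 1 (by simp))} ∩ S =
      {Projectivization.mk F ![1, -s, 0] (vec_ne_zero _ 0 (by simp))} := by
  ext x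
  simp only [Set.mem_inter_iff, Set.mem_setOf_eq, Set.mem_singleton_iff]
  constructor
  · rintro ⟨hxl, hxS⟩
    obtain ⟨s', ⟨hs'X, hs'0⟩, rfl | rfl | rfl⟩ := (hSmem x).1 hxS
    · rw [mem_mk_iff, dot33] at hxl
      have hsc : s' = -c := by linear_combination hxl
      subst hsc
      rcases h1 with h | h
      · exact absurd h hs'X
      · exact absurd (by rw [h]; ring) hs'0
    · rw [mem_mk_iff, dot33] at hxl
      exact absurd (by linear_combination hxl) (h2 s' hs'X hs'0)
    · rw [mem_mk_iff, dot33] at hxl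
      rw [p3_eq_p3]
      linear_combination -hxl
  · rintro rfl
    refine ⟨?_, ?_⟩
    · rw [mem_mk_iff, dot33]; ring
    · exact (hSmem _).2 ⟨s, ⟨hs, hs0⟩, Or.inr (Or.inr rfl)⟩

lemma tangents3 (G : Good Aset Bset Xs) (hSmem : SMem Xs S)
    {s a b : F} (hs : s ∉ Xs) (hs0 : s ≠ 0) (ha : a ∈ Aset) (hb : b ∈ Bset) (hab : a * b = s) :
    {l : PG F | {x : PG F | x ∈ l} ∩ S =
        {Projectivization.mk F ![1, -s, 0] (vec_ne_zero _ 0 (by simp))}} =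
      {Projectivization.mk F ![s, 1, (0:F)] (vec_ne_zero _ 1 (by simp)),
       Projectivization.mk F ![s, 1, -a] (vec_ne_zero _ 1 (by simp)),
       Projectivization.mk F ![s, 1, -b] (vec_ne_zero _ 1 (by simp))} := by
  have ha0 : a ≠ 0 := fun h => G.hA0 (h ▸ ha)
  have hb0 : b ≠ 0 := fun h => G.hB0 (h ▸ hb)
  have haX : a ∈ Xs := G.hXs ▸ Or.inl ha
  have hbX : b ∈ Xs := G.hXs ▸ Or.inr hb
  ext l
  simp only [Set.mem_setOf_eq, Set.mem_insert_iff, Set.mem_singleton_iff]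
  constructor
  · intro hl
    induction l using Projectivization.ind with
    | h v hv =>
    have hP : Projectivization.mk F ![1, -s, 0] (vec_ne_zero _ 0 (by simp)) ∈
        {x : PG F | x ∈ Projectivization.mk F v hv} ∩ S := by
      rw [hl]; rfl
    have h_on : v 0 - s * v 1 = 0 := by
      have := hP.1
      rw [Set.mem_setOf_eq, mem_mk_iff, dot3] at this
      linear_combination this
    by_cases hv1 : v 1 = 0
    · exfalso
      have hv0 : v 0 = 0 := by rw [hv1] at h_on; linear_combination h_on
      obtain ⟨s', hs'X, hs'0, hs's⟩ := G.second hs hs0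
      have hmem : Projectivization.mk F ![1, -s', 0] (vec_ne_zero _ 0 (by simp)) ∈
          {x : PG F | x ∈ Projectivization.mk F v hv} ∩ S := by
        refine ⟨?_, (hSmem _).2 ⟨s', ⟨hs'X, hs'0⟩, Or.inr (Or.inr rfl)⟩⟩
        rw [Set.mem_setOf_eq, mem_mk_iff, dot3, hv0, hv1]; ring
      rw [hl, Set.mem_singleton_iff, p3_eq_p3] at hmem
      exact hs's hmem
    · set c := v 2 * (v 1)⁻¹ with hc_def
      have hlrw : Projectivization.mk F v hv =
          Projectivization.mk F ![s, 1, c] (vec_ne_zero _ 1 (by simp)) := by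
        rw [eq3_iff]
        refine ⟨v 1, ?_, ?_, ?_⟩
        · simp only [Matrix.cons_val_zero]
          linear_combination -h_on
        · simp
        · simp only [Matrix.cons_val_two, Matrix.tail_cons, Matrix.head_cons, hc_def]
          field_simp
      have hwT : -c ∈ Xs ∨ -c = 0 := by
        by_contra hcon
        push_neg at hcon
        obtain ⟨hwX, hw0⟩ := hcon
        have hmem : Projectivization.mk F ![0, -c, 1] (vec_ne_zero _ 2 (by simp)) ∈
            {x : PG F | x ∈ Projectivization.mk F v hv} ∩ S := by
          refine ⟨?_, (hSmem _).2 ⟨-c, ⟨hwX, hw0⟩, Or.inl rfl⟩⟩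
          rw [Set.mem_setOf_eq, hlrw, mem_mk_iff, dot33]; ring
        rw [hl, Set.mem_singleton_iff] at hmem
        exact p1_ne_p3 _ _ hmem
      rcases hwT with hwX | hw0
      swap
      · left
        have : c = 0 := by linear_combination -hw0
        rw [hlrw, this]
      · have hw0 : -c ≠ 0 := G.ne_zeroX hwX
        have hwsX : -c * s⁻¹ ∈ Xs := by
          by_contra hcon
          have hws0 : -c * s⁻¹ ≠ 0 := mul_ne_zero hw0 (inv_ne_zero hs0)
          have hmem : Projectivization.mk F ![-c * s⁻¹, 0, 1] (vec_ne_zero _ 2 (by simp)) ∈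
              {x : PG F | x ∈ Projectivization.mk F v hv} ∩ S := by
            refine ⟨?_, (hSmem _).2 ⟨-c * s⁻¹, ⟨hcon, hws0⟩, Or.inr (Or.inl rfl)⟩⟩
            rw [Set.mem_setOf_eq, hlrw, mem_mk_iff, dot33]
            field_simp; ring
          rw [hl, Set.mem_singleton_iff] at hmem
          exact p2_ne_p3 _ _ hmem
        have hswX : s * (-c)⁻¹ ∈ Xs := by
          have h' : (-c * s⁻¹)⁻¹ ∈ Xs := G.hXinv hwsX
          have he : (-c * s⁻¹)⁻¹ = s * (-c)⁻¹ := by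
            rw [mul_inv, inv_inv]; ring
          rwa [he] at h'
        have hc0 : c ≠ 0 := fun h => hw0 (by rw [h, neg_zero])
        have hprod : -c * (s * (-c)⁻¹) = s := by
          field_simp
        rcases G.key hs hwX hswX hprod ha hb hab with h | h
        · right; left; rw [hlrw, line1_eq]
          exact ⟨rfl, by linear_combination -h⟩
        · right; right; rw [hlrw, line1_eq]
          exact ⟨rfl, by linear_combination -h⟩
  · rintro (rfl | rfl | rfl)
    · refine is_tangent3 G hSmem hs hs0 0 (Or.inr rfl) (fun s' _ hs'0 h => ?_)
      exact (mul_ne_zero hs'0 hs0) (by linear_combination h)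
    · refine is_tangent3 G hSmem hs hs0 (-a) (Or.inl (by rw [neg_neg]; exact haX))
        (fun s' hs' _ h => ?_)
      have hs'b : s' * b = 1 := mul_right_cancel₀ ha0 (show s' * b * a = 1 * a by
        linear_combination h + s' * hab)
      exact hs' ((eq_inv_of_mul_eq_one_left hs'b) ▸ G.hXinv hbX)
    · refine is_tangent3 G hSmem hs hs0 (-b) (Or.inl (by rw [neg_neg]; exact hbX))
        (fun s' hs' _ h => ?_)
      have hs'a : s' * a = 1 := mul_right_cancel₀ hb0 (show s' * a * b = 1 * b by
        linear_combination h + s' * hab)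
      exact hs' ((eq_inv_of_mul_eq_one_left hs'a) ▸ G.hXinv haX)

end SemiarcAux
namespace SemiarcAux

variable {F : Type*} [Field F]
variable {Aset Bset Xs : Set F} {S : Set (PG F)}

lemma secant1 (hSmem : SMem Xs S) :
    {x : PG F | x ∈ Projectivization.mk F ![(1:F), 0, 0] (vec_ne_zero _ 0 (by simp))} ∩ S =
      (fun s : F => Projectivization.mk F ![0, s, 1] (vec_ne_zero _ 2 (by simp))) ''
        {s : F | s ∉ Xs ∧ s ≠ 0} := by
  ext x
  simp only [Set.mem_inter_iff, Set.mem_setOf_eq, Set.mem_image]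
  constructor
  · rintro ⟨hxl, hxS⟩
    obtain ⟨s', ⟨hs'X, hs'0⟩, rfl | rfl | rfl⟩ := (hSmem x).1 hxS
    · exact ⟨s', ⟨hs'X, hs'0⟩, rfl⟩
    · rw [mem_mk_iff, dot33] at hxl
      exact absurd (by linear_combination hxl) hs'0
    · rw [mem_mk_iff, dot33] at hxl
      exact absurd (by linear_combination hxl) (one_ne_zero (α := F))
  · rintro ⟨s', hs', rfl⟩
    exact ⟨by rw [mem_mk_iff, dot33]; ring, (hSmem _).2 ⟨s', hs', Or.inl rfl⟩⟩

lemma secant2 (hSmem : SMem Xs S) :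
    {x : PG F | x ∈ Projectivization.mk F ![(0:F), 1, 0] (vec_ne_zero _ 1 (by simp))} ∩ S =
      (fun s : F => Projectivization.mk F ![s, 0, 1] (vec_ne_zero _ 2 (by simp))) ''
        {s : F | s ∉ Xs ∧ s ≠ 0} := by
  ext x
  simp only [Set.mem_inter_iff, Set.mem_setOf_eq, Set.mem_image]
  constructor
  · rintro ⟨hxl, hxS⟩
    obtain ⟨s', ⟨hs'X, hs'0⟩, rfl | rfl | rfl⟩ := (hSmem x).1 hxS
    · rw [mem_mk_iff, dot33] at hxl
      exact absurd (by linear_combination hxl) hs'0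
    · exact ⟨s', ⟨hs'X, hs'0⟩, rfl⟩
    · rw [mem_mk_iff, dot33] at hxl
      exact absurd (by linear_combination -hxl) hs'0
  · rintro ⟨s', hs', rfl⟩
    exact ⟨by rw [mem_mk_iff, dot33]; ring, (hSmem _).2 ⟨s', hs', Or.inr (Or.inl rfl)⟩⟩

lemma secant3 (hSmem : SMem Xs S) :
    {x : PG F | x ∈ Projectivization.mk F ![(0:F), 0, 1] (vec_ne_zero _ 2 (by simp))} ∩ S =
      (fun s : F => Projectivization.mk F ![1, -s, 0] (vec_ne_zero _ 0 (by simp))) ''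
        {s : F | s ∉ Xs ∧ s ≠ 0} := by
  ext x
  simp only [Set.mem_inter_iff, Set.mem_setOf_eq, Set.mem_image]
  constructor
  · rintro ⟨hxl, hxS⟩
    obtain ⟨s', ⟨hs'X, hs'0⟩, rfl | rfl | rfl⟩ := (hSmem x).1 hxS
    · rw [mem_mk_iff, dot33] at hxl
      exact absurd (by linear_combination hxl) (one_ne_zero (α := F))
    · rw [mem_mk_iff, dot33] at hxl
      exact absurd (by linear_combination hxl) (one_ne_zero (α := F))
    · exact ⟨s', ⟨hs'X, hs'0⟩, rfl⟩
  · rintro ⟨s', hs', rfl⟩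
    exact ⟨by rw [mem_mk_iff, dot33]; ring, (hSmem _).2 ⟨s', hs', Or.inr (Or.inr rfl)⟩⟩

end SemiarcAux
namespace SemiarcAux

variable {F : Type*} [Field F]

lemma ncard_triple {α : Type*} (x y z : α) (hxy : x ≠ y) (hxz : x ≠ z) (hyz : y ≠ z) :
    Nat.card ({x, y, z} : Set α) = 3 := by
  rw [Nat.card_coe_set_eq,
    Set.ncard_insert_of_notMem (by simp [hxy, hxz]) ((Set.finite_singleton z).insert y),
    Set.ncard_pair hyz]

lemma count_T [Fintype F] {Aset Bset Xs : Set F} (G : Good Aset Bset Xs) :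
    {s : F | s ∉ Xs ∧ s ≠ 0}.ncard = Fintype.card F - Aset.ncard - Bset.ncard := by
  have hcompl : {s : F | s ∉ Xs ∧ s ≠ 0} = (Xs ∪ {0})ᶜ := by
    ext x; simp [not_or, and_comm]
  have h1 : (Xs ∪ {0}).ncard + (Xs ∪ {0})ᶜ.ncard = Nat.card F :=
    Set.ncard_add_ncard_compl _
  have h2 : (Xs ∪ {0}).ncard = Xs.ncard + 1 := by
    rw [Set.union_singleton, Set.ncard_insert_of_notMem (fun h => G.ne_zeroX h rfl)]
  have h3 : Xs.ncard + (Aset ∩ Bset).ncard = Aset.ncard + Bset.ncard := by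
    rw [G.hXs]; exact Set.ncard_union_add_ncard_inter _ _
  have h4 : Aset ∩ Bset = {1} := by
    ext x
    simp only [Set.mem_inter_iff, Set.mem_singleton_iff]
    exact ⟨fun ⟨h, h'⟩ => G.hint h h', fun h => h ▸ ⟨G.hA1, G.hB1⟩⟩
  rw [h4, Set.ncard_singleton] at h3
  rw [Nat.card_eq_fintype_card] at h1
  rw [hcompl]
  omega

end SemiarcAux

open SemiarcAux

theorem multiplicative_subgroups_three_semiarc
    {F : Type*} [Field F] [Fintype F] [DecidableEq F]
    (q : ℕ) (hq : Fintype.card F = q)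
    (A B : Subgroup Fˣ) (hA : A ≠ ⊤) (hB : B ≠ ⊤)
    (hmeet : A ⊓ B = ⊥) (hjoin : A ⊔ B = ⊤)
    -- `X ⊆ F` is the union of (the images in `F` of) `A` and `B`
    (X : Set F) (hX : X = (fun u : Fˣ => (u : F)) '' ((A : Set Fˣ) ∪ (B : Set Fˣ)))
    (S : Set (PG F))
    (hS : S = {p : PG F | ∃ s : F, s ∉ X ∪ {0} ∧
      (p = Projectivization.mk F ![0, s, 1] (vec_ne_zero _ 2 (by simp)) ∨
       p = Projectivization.mk F ![s, 0, 1] (vec_ne_zero _ 2 (by simp)) ∨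
       p = Projectivization.mk F ![1, -s, 0] (vec_ne_zero _ 0 (by simp)))}) :
    IsSemiarcPG 3 S ∧
      ∃ l₁ l₂ l₃ : PG F, l₁ ≠ l₂ ∧ l₁ ≠ l₃ ∧ l₂ ≠ l₃ ∧
        ({x : PG F | x ∈ l₁} ∩ S).ncard = q - Nat.card A - Nat.card B ∧
        ({x : PG F | x ∈ l₂} ∩ S).ncard = q - Nat.card A - Nat.card B ∧
        ({x : PG F | x ∈ l₃} ∩ S).ncard = q - Nat.card A - Nat.card B := by
  subst hq
  set Aset : Set F := (fun u : Fˣ => (u : F)) '' (A : Set Fˣ) with hAset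
  set Bset : Set F := (fun u : Fˣ => (u : F)) '' (B : Set Fˣ) with hBset
  have G : Good Aset Bset X :=
    { hXs := by rw [hX, Set.image_union]
      hA0 := by rintro ⟨u, _, hu⟩; exact u.ne_zero hu
      hB0 := by rintro ⟨u, _, hu⟩; exact u.ne_zero hu
      hA1 := ⟨1, A.one_mem, Units.val_one⟩
      hB1 := ⟨1, B.one_mem, Units.val_one⟩
      hAmul := by
        rintro x y ⟨u, hu, rfl⟩ ⟨w, hw, rfl⟩
        exact ⟨u * w, A.mul_mem hu hw, Units.val_mul u w⟩
      hBmul := by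
        rintro x y ⟨u, hu, rfl⟩ ⟨w, hw, rfl⟩
        exact ⟨u * w, B.mul_mem hu hw, Units.val_mul u w⟩
      hAinv := by
        rintro x ⟨u, hu, rfl⟩
        exact ⟨u⁻¹, A.inv_mem hu, by simp⟩
      hBinv := by
        rintro x ⟨u, hu, rfl⟩
        exact ⟨u⁻¹, B.inv_mem hu, by simp⟩
      hint := by
        rintro x ⟨u, hu, rfl⟩ ⟨w, hw, hwu⟩
        have hw' : w = u := Units.ext hwu
        subst hw'
        have : w ∈ A ⊓ B := ⟨hu, hw⟩
        rw [hmeet, Subgroup.mem_bot] at this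
        rw [this]; exact Units.val_one
      hex := by
        intro s h
        have hmem : Units.mk0 s h ∈ A ⊔ B := by rw [hjoin]; trivial
        obtain ⟨y, hy, z, hz, hyz⟩ := Subgroup.mem_sup.1 hmem
        exact ⟨(y : F), ⟨y, hy, rfl⟩, (z : F), ⟨z, hz, rfl⟩,
          by rw [← Units.val_mul, hyz, Units.val_mk0]⟩ }
  have hSmem : SMem X S := fun p => by
    rw [hS]
    simp only [Set.mem_setOf_eq, Set.mem_union, Set.mem_singleton_iff, not_or]
  -- nontrivial elements of A and B
  have hAne : ∃ u : Fˣ, u ∈ A ∧ u ≠ 1 := by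
    by_contra h
    push_neg at h
    have hbot : A = ⊥ := (Subgroup.eq_bot_iff_forall A).2 h
    rw [hbot, bot_sup_eq] at hjoin
    exact hB hjoin
  have hBne : ∃ u : Fˣ, u ∈ B ∧ u ≠ 1 := by
    by_contra h
    push_neg at h
    have hbot : B = ⊥ := (Subgroup.eq_bot_iff_forall B).2 h
    rw [hbot, sup_bot_eq] at hjoin
    exact hA hjoin
  obtain ⟨a₀, ha₀, ha₀ne⟩ := hAne
  obtain ⟨b₀, hb₀, hb₀ne⟩ := hBne
  have ha₀A : (a₀ : F) ∈ Aset := ⟨a₀, ha₀, rfl⟩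
  have hb₀B : (b₀ : F) ∈ Bset := ⟨b₀, hb₀, rfl⟩
  have ha₀1 : (a₀ : F) ≠ 1 := fun h => ha₀ne (Units.ext (h.trans Units.val_one.symm))
  have hb₀1 : (b₀ : F) ≠ 1 := fun h => hb₀ne (Units.ext (h.trans Units.val_one.symm))
  obtain ⟨hs₀X, hs₀0⟩ := G.notX_of_mul ha₀A ha₀1 hb₀B hb₀1
  -- cardinality facts
  have hAc : Aset.ncard = Nat.card A := by
    rw [hAset, Set.ncard_image_of_injective _ Units.val_injective, ← Nat.card_coe_set_eq]
    rfl
  have hBc : Bset.ncard = Nat.card B := by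
    rw [hBset, Set.ncard_image_of_injective _ Units.val_injective, ← Nat.card_coe_set_eq]
    rfl
  constructor
  · constructor
    · exact ⟨Projectivization.mk F ![0, (a₀ : F) * (b₀ : F), 1] (vec_ne_zero _ 2 (by simp)),
        (hSmem _).2 ⟨_, ⟨hs₀X, hs₀0⟩, Or.inl rfl⟩⟩
    · intro p hp
      obtain ⟨s, ⟨hsX, hs0⟩, hcase⟩ := (hSmem p).1 hp
      obtain ⟨a, haA, b, hbB, hab⟩ := G.hex s hs0
      have ha0 : a ≠ 0 := fun h => G.hA0 (h ▸ haA)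
      have hb0 : b ≠ 0 := fun h => G.hB0 (h ▸ hbB)
      obtain ⟨ha1, hb1⟩ := G.a_ne_one hsX haA hbB hab
      have hane : a ≠ b := fun h => ha1 (G.hint haA (h ▸ hbB))
      rcases hcase with rfl | rfl | rfl
      · rw [tangents1 G hSmem hsX hs0 haA hbB hab]
        exact ncard_triple _ _ _
          (fun h => ha0 (((line1_eq _ _).1 h).1.symm))
          (fun h => hb0 (((line1_eq _ _).1 h).1.symm))
          (fun h => hane (((line1_eq _ _).1 h).1))
      · rw [tangents2 G hSmem hsX hs0 haA hbB hab]
        exact ncard_triple _ _ _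
          (fun h => ha0 (((line2_eq _ _).1 h).1.symm))
          (fun h => hb0 (((line2_eq _ _).1 h).1.symm))
          (fun h => hane (((line2_eq _ _).1 h).1))
      · rw [tangents3 G hSmem hsX hs0 haA hbB hab]
        refine ncard_triple _ _ _
          (fun h => ha0 ?_) (fun h => hb0 ?_) (fun h => hane ?_)
        · have := ((line1_eq _ _).1 h).2
          linear_combination this
        · have := ((line1_eq _ _).1 h).2
          linear_combination this
        · have := ((line1_eq _ _).1 h).2
          linear_combination -this
  · refine ⟨Projectivization.mk F ![(1:F), 0, 0] (vec_ne_zero _ 0 (by simp)),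
      Projectivization.mk F ![(0:F), 1, 0] (vec_ne_zero _ 1 (by simp)),
      Projectivization.mk F ![(0:F), 0, 1] (vec_ne_zero _ 2 (by simp)),
      ?_, ?_, ?_, ?_, ?_, ?_⟩
    · rw [Ne, eq3_iff]
      rintro ⟨c, h0, h1, h2⟩
      simp at h0
    · rw [Ne, eq3_iff]
      rintro ⟨c, h0, h1, h2⟩
      simp at h0
    · rw [Ne, eq3_iff]
      rintro ⟨c, h0, h1, h2⟩
      simp at h1
    · rw [secant1 hSmem,
        Set.ncard_image_of_injOn (fun x _ y _ h => (p1_eq_p1 _ _).1 h),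
        count_T G, hAc, hBc]
    · rw [secant2 hSmem,
        Set.ncard_image_of_injOn (fun x _ y _ h => (p2_eq_p2 _ _).1 h),
        count_T G, hAc, hBc]
    · rw [secant3 hSmem,
        Set.ncard_image_of_injOn (fun x _ y _ h => (p3_eq_p3 _ _).1 h),
        count_T G, hAc, hBc]
end
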